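/- arXiv:0912.1280 — 9 statements merged into one kernel-verified Lean document; each statement's English description precedes it below -/
import Mathlib

section
/- For any odd prime p and any k with 0 ≤ k ≤ p^a - 1 (a a positive integer), the binomial coefficient C((p^a-1)/2, k) is congruent to C(2k,k)/(-4)^k modulo p; equivalently, (-4)^k * C((p^a-1)/2, k) ≡ C(2k,k) (mod p). -/
open Nat

-- single digit case: r ≤ (p-1)/2
theorem aux_single (p : ℕ) [Fact p.Prime] (hodd : p ≠ 2) :
    ∀ r, r ≤ (p - 1) / 2 →
    ((-4 : ZMod p)) ^ r * (Nat.choose ((p - 1) / 2) r : ZMod p)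
      = (Nat.choose (2 * r) r : ZMod p) := by
  have hp := (Fact.out : p.Prime)
  have hp2 : 2 < p := lt_of_le_of_ne hp.two_le (Ne.symm hodd)
  obtain ⟨e, hpe⟩ := hp.odd_of_ne_two hodd
  have hme : (p - 1) / 2 = e := by omega
  rw [hme]
  intro r hr
  induction r with
  | zero => simp
  | succ r ih =>
    have hr' : r ≤ e := by omega
    have ihr := ih hr'
    have hrp : ((r : ZMod p) + 1) ≠ 0 := by
      have h1 : ((r + 1 : ℕ) : ZMod p) ≠ 0 := by
        rw [Ne, ZMod.natCast_eq_zero_iff]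
        intro hdvd
        have := Nat.le_of_dvd (Nat.succ_pos r) hdvd
        omega
      push_cast at h1
      exact h1
    apply mul_left_cancel₀ hrp
    -- h1 : choose e (r+1) * (r+1) = choose e r * (e - r)
    have h1 : ((Nat.choose e (r+1) * (r+1) : ℕ) : ZMod p)
        = ((Nat.choose e r * (e - r) : ℕ) : ZMod p) := by
      rw [Nat.choose_succ_right_eq]
    rw [Nat.cast_mul, Nat.cast_mul, Nat.cast_sub hr'] at h1
    push_cast at h1
    -- h2 : (r+1) * C(2(r+1), r+1) = 2*(2r+1)*C(2r,r)
    have h2n := Nat.succ_mul_centralBinom_succ r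
    rw [Nat.centralBinom_eq_two_mul_choose, Nat.centralBinom_eq_two_mul_choose] at h2n
    have h2 : (((r+1) * Nat.choose (2*(r+1)) (r+1) : ℕ) : ZMod p)
        = ((2 * (2*r+1) * Nat.choose (2*r) r : ℕ) : ZMod p) := by rw [h2n]
    push_cast at h2
    -- hm : 2*e = -1 in ZMod p
    have hmn : ((2*e+1 : ℕ) : ZMod p) = 0 := by rw [← hpe]; exact ZMod.natCast_self p
    push_cast at hmn
    push_cast
    linear_combination (-4 : ZMod p)^(r+1) * h1 - h2
      + (-4 : ZMod p) * ((e : ZMod p) - r) * ihr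
      - 2 * (Nat.choose (2*r) r : ZMod p) * hmn

theorem aux_main (p : ℕ) [Fact p.Prime] (hodd : p ≠ 2) :
    ∀ a : ℕ, ∀ k < p ^ a,
    ((-4 : ZMod p)) ^ k * (Nat.choose ((p ^ a - 1) / 2) k : ZMod p)
      = (Nat.choose (2 * k) k : ZMod p) := by
  have hp := (Fact.out : p.Prime)
  have hp2 : 2 < p := lt_of_le_of_ne hp.two_le (Ne.symm hodd)
  obtain ⟨e, hpe⟩ := hp.odd_of_ne_two hodd
  intro a
  induction a with
  | zero =>
    intro k hk
    have hk0 : k = 0 := by simpa using hk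
    subst hk0
    simp
  | succ a IH =>
    intro k hk
    obtain ⟨c, hpa⟩ := (hp.odd_of_ne_two hodd).pow (n := a)
    have hc : (p ^ a - 1) / 2 = c := by omega
    have hsucc : p ^ (a+1) = 2 * (p * c + e) + 1 := by rw [pow_succ, hpa, hpe]; ring
    have hn : (p ^ (a+1) - 1) / 2 = p * c + e := by omega
    set q := k / p with hq
    set r := k % p with hrdef
    have hqr : p * q + r = k := Nat.div_add_mod k p
    have hrp : r < p := Nat.mod_lt _ hp.pos
    have hqa : q < p ^ a := by
      rw [hq, Nat.div_lt_iff_lt_mul hp.pos]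
      rw [pow_succ] at hk
      exact hk
    -- Lucas for (n, k)
    have L1 := (ZMod.intCast_eq_intCast_iff' _ _ p).mpr
      (Choose.choose_modEq_choose_mod_mul_choose_div (p := p)
        (n := (p ^ (a+1) - 1) / 2) (k := k))
    have hnm : (p ^ (a+1) - 1) / 2 % p = e := by
      rw [hn, Nat.mul_add_mod, Nat.mod_eq_of_lt (by omega)]
    have hnd : (p ^ (a+1) - 1) / 2 / p = c := by
      rw [hn, Nat.mul_add_div hp.pos, Nat.div_eq_of_lt (by omega), Nat.add_zero]
    rw [hnm, hnd, ← hq, ← hrdef] at L1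
    push_cast at L1
    -- Fermat: (-4)^k = (-4)^q * (-4)^r
    have hF : (-4 : ZMod p) ^ k = (-4 : ZMod p) ^ q * (-4 : ZMod p) ^ r := by
      rw [← hqr, pow_add, pow_mul, ZMod.pow_card]
    by_cases hre : r ≤ e
    · -- both digits small
      have h2k : 2 * k = p * (2 * q) + 2 * r := by rw [← hqr]; ring
      have L2 := (ZMod.intCast_eq_intCast_iff' _ _ p).mpr
        (Choose.choose_modEq_choose_mod_mul_choose_div (p := p) (n := 2 * k) (k := k))
      have h2km : (2 * k) % p = 2 * r := by
        rw [h2k, Nat.mul_add_mod, Nat.mod_eq_of_lt (by omega)]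
      have h2kd : (2 * k) / p = 2 * q := by
        rw [h2k, Nat.mul_add_div hp.pos, Nat.div_eq_of_lt (by omega), Nat.add_zero]
      rw [h2km, h2kd, ← hq, ← hrdef] at L2
      push_cast at L2
      have hsing := aux_single p hodd r (by omega)
      have hme : (p - 1) / 2 = e := by omega
      rw [hme] at hsing
      have hIH := IH q hqa
      rw [hc] at hIH
      rw [L1, L2, hF]
      linear_combination ((-4 : ZMod p)^q * (Nat.choose c q : ZMod p)) * hsing
        + (Nat.choose (2*r) r : ZMod p) * hIH
    · -- r > e : both sides are zero
      push_neg at hre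
      have hcz : Nat.choose e r = 0 := Nat.choose_eq_zero_of_lt hre
      have hple : p ≤ 2 * r := by omega
      have haux : p * (2*q+1) = 2 * (p*q) + p := by ring
      have h2k : 2 * k = p * (2*q+1) + (2*r - p) := by omega
      have L2 := (ZMod.intCast_eq_intCast_iff' _ _ p).mpr
        (Choose.choose_modEq_choose_mod_mul_choose_div (p := p) (n := 2 * k) (k := k))
      have h2km : (2 * k) % p = 2*r - p := by
        rw [h2k, Nat.mul_add_mod, Nat.mod_eq_of_lt (by omega)]
      rw [h2km, ← hrdef] at L2
      have hcz2 : Nat.choose (2*r - p) r = 0 := Nat.choose_eq_zero_of_lt (by omega)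
      rw [hcz2] at L2
      push_cast at L2
      rw [L1, L2, hcz]
      push_cast
      ring

theorem stmt0 (p : ℕ) (hp : p.Prime) (hodd : p ≠ 2) (a : ℕ) (ha : 1 ≤ a)
    (k : ℕ) (hk : k ≤ p ^ a - 1) :
    ((-4 : ℤ) ^ k * (Nat.choose ((p ^ a - 1) / 2) k) : ℤ) ≡
      (Nat.choose (2 * k) k : ℤ) [ZMOD (p : ℤ)] := by
  haveI := Fact.mk hp
  have hk' : k < p ^ a := by
    have : 1 ≤ p ^ a := Nat.one_le_pow _ _ hp.pos
    omega
  have key := aux_main p hodd a k hk'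
  have := (ZMod.intCast_eq_intCast_iff'
    ((-4 : ℤ) ^ k * (Nat.choose ((p ^ a - 1) / 2) k)) (Nat.choose (2 * k) k) p).mp
  apply this
  push_cast
  exact key
end

section
/- Let p ≡ 1 (mod 3) be a prime and a ≥ 1. Then the sum over k from 0 to p^a - 1 of (k/3) · C(2k,k) / (-4)^k is congruent to 0 modulo p, where (k/3) is the Legendre symbol of k modulo 3 (interpreting division by (-4)^k via its inverse mod p). -/
open Finset

section aux

variable (p : ℕ) [hpf : Fact p.Prime] (hp3 : p % 3 = 1)

lemma lucas' (n k : ℕ) :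
    ((n.choose k : ZMod p)) = ((n % p).choose (k % p) : ZMod p) * ((n / p).choose (k / p)) := by
  have := @Choose.choose_modEq_choose_mod_mul_choose_div n k p _
  have h := (ZMod.intCast_eq_intCast_iff _ _ _).mpr this
  push_cast at h
  exact_mod_cast h

include hp3

lemma podd : p % 2 = 1 := by
  rcases hpf.out.eq_two_or_odd with h | h
  · omega
  · exact h

lemma base_le (k : ℕ) (hk : k ≤ p / 2) :
    ((2 * k).choose k : ZMod p) = (-4) ^ k * ((p / 2).choose k : ZMod p) := by
  induction k with
  | zero => simp
  | succ k ih =>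
    have hk' : k ≤ p / 2 := by omega
    have hodd := podd p hp3
    have hkp : (k : ZMod p) + 1 ≠ 0 := by
      have : ((k + 1 : ℕ) : ZMod p) ≠ 0 := by
        rw [Ne, ZMod.natCast_eq_zero_iff]
        intro h
        have := Nat.le_of_dvd (by omega) h
        omega
      push_cast at this; exact this
    have h1 : ((k + 1) * (2 * (k + 1)).choose (k + 1) : ℕ) = 2 * (2 * k + 1) * ((2 * k).choose k) := by
      have := Nat.succ_mul_centralBinom_succ k
      simpa [Nat.centralBinom] using this
    have h2 : ((p / 2).choose (k + 1) * (k + 1) : ℕ) = (p / 2).choose k * (p / 2 - k) :=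
      Nat.choose_succ_right_eq _ _
    have hc1 : ((k : ZMod p) + 1) * ((2 * (k + 1)).choose (k + 1) : ZMod p)
        = 2 * (2 * k + 1) * ((2 * k).choose k : ZMod p) := by
      exact_mod_cast congrArg (Nat.cast : ℕ → ZMod p) h1
    have hc2 : ((p / 2).choose (k + 1) : ZMod p) * ((k : ZMod p) + 1)
        = ((p / 2).choose k : ZMod p) * (((p / 2 : ℕ) : ZMod p) - (k : ℕ)) := by
      have := congrArg (Nat.cast : ℕ → ZMod p) h2
      push_cast [Nat.cast_sub hk'] at this
      push_cast
      linear_combination this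
    have hm : (2 : ZMod p) * ((p / 2 : ℕ) : ZMod p) = -1 := by
      have : ((2 * (p / 2) + 1 : ℕ) : ZMod p) = ((p : ℕ) : ZMod p) := by
        congr 1; omega
      rw [ZMod.natCast_self] at this
      push_cast at this
      linear_combination this
    apply mul_left_cancel₀ hkp
    rw [hc1, ih hk']
    have : ((k:ZMod p)+1) * ((-4)^(k+1) * ((p/2).choose (k+1) : ZMod p))
        = (-4)^k * (((p/2).choose (k+1) : ZMod p) * ((k:ZMod p)+1)) * (-4) := by ring
    rw [this, hc2]
    linear_combination (2 : ZMod p) * (-4)^k * ((p/2).choose k : ZMod p) * hm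

lemma base (k : ℕ) (hk : k < p) :
    ((2 * k).choose k : ZMod p) = (-4) ^ k * ((p / 2).choose k : ZMod p) := by
  rcases le_or_gt k (p / 2) with h | h
  · exact base_le p hp3 k h
  · have hodd := podd p hp3
    have h0 : (p / 2).choose k = 0 := Nat.choose_eq_zero_of_lt h
    have hdvd : p ∣ (2 * k).choose k := by
      have := Nat.Prime.dvd_choose_add hpf.out (a := k) (b := k) hk hk (by omega)
      simpa [two_mul] using this
    rw [h0, (ZMod.natCast_eq_zero_iff _ _).mpr hdvd]
    simp

end aux

def Mm (p a : ℕ) : ℕ := ∑ i ∈ Finset.range a, (p / 2) * p ^ i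

lemma Mm_succ (p a : ℕ) : Mm p (a + 1) = p / 2 + p * Mm p a := by
  unfold Mm
  rw [Finset.sum_range_succ']
  have h : ∀ i, (p/2) * p ^ (i+1) = p * ((p/2) * p ^ i) := by intro i; ring
  simp [h, ← Finset.mul_sum, Nat.add_comm]

section aux2

variable (p : ℕ) [hpf : Fact p.Prime] (hp3 : p % 3 = 1)

include hp3

lemma two_Mm (a : ℕ) : 2 * Mm p a + 1 = p ^ a := by
  induction a with
  | zero => simp [Mm]
  | succ a ih =>
    have hodd := podd p hp3
    have h : 2 * (p / 2) + 1 = p := by omega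
    calc 2 * Mm p (a+1) + 1 = (2 * (p/2) + 1) + (2 * Mm p a) * p := by
          rw [Mm_succ]; ring
      _ = p + (2 * Mm p a) * p := by rw [h]
      _ = (2 * Mm p a + 1) * p := by ring
      _ = p ^ a * p := by rw [ih]
      _ = p ^ (a+1) := by ring

lemma key (a : ℕ) : ∀ k < p ^ a,
    ((2 * k).choose k : ZMod p) = (-4) ^ k * ((Mm p a).choose k : ZMod p) := by
  induction a with
  | zero => intro k hk; simp at hk; subst hk; simp [Mm]
  | succ a ih =>
    intro k hk
    have hodd := podd p hp3
    have hp1 : 1 < p := hpf.out.one_lt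
    set r := k % p with hr
    set q := k / p with hq
    have hk_eq : p * q + r = k := Nat.div_add_mod k p
    have hrp : r < p := Nat.mod_lt _ (by omega)
    have hqa : q < p ^ a := by
      rw [hq, Nat.div_lt_iff_lt_mul (by omega)]
      exact lt_of_lt_of_le hk (le_of_eq (pow_succ p a))
    have hMmod : Mm p (a + 1) % p = p / 2 := by
      rw [Mm_succ, Nat.add_mul_mod_self_left]
      exact Nat.mod_eq_of_lt (by omega)
    have hMdiv : Mm p (a + 1) / p = Mm p a := by
      rw [Mm_succ, Nat.add_mul_div_left _ _ (by omega : 0 < p),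
        Nat.div_eq_of_lt (by omega), Nat.zero_add]
    have hRHSlucas : ((Mm p (a+1)).choose k : ZMod p)
        = ((p / 2).choose r : ZMod p) * ((Mm p a).choose q : ZMod p) := by
      rw [lucas' p (Mm p (a+1)) k, hMmod, hMdiv]
    have hfermat : ((-4 : ZMod p)) ^ k = (-4) ^ r * (-4) ^ q := by
      conv_lhs => rw [← hk_eq]
      rw [pow_add, pow_mul, ZMod.pow_card]
      ring
    rcases le_or_gt (2 * r) (p - 1) with h2r | h2r
    · have h2k : 2 * k = p * (2 * q) + 2 * r := by
        have ha1 : p * (2 * q) = 2 * (p * q) := by ring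
        omega
      have hmod : (2 * k) % p = 2 * r := by
        rw [h2k, Nat.mul_add_mod]
        exact Nat.mod_eq_of_lt (by omega)
      have hdiv : (2 * k) / p = 2 * q := by
        rw [h2k, Nat.mul_add_div (by omega)]
        rw [Nat.div_eq_of_lt (by omega), Nat.add_zero]
      rw [lucas' p (2 * k) k, hmod, hdiv, ← hr, ← hq, base p hp3 r hrp, ih q hqa,
        hRHSlucas, hfermat]
      ring
    · have hrm : p / 2 < r := by omega
      have h2k : 2 * k = p * (2 * q + 1) + (2 * r - p) := by
        have ha1 : p * (2 * q + 1) = 2 * (p * q) + p := by ring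
        omega
      have hmod : (2 * k) % p = 2 * r - p := by
        rw [h2k, Nat.mul_add_mod]
        exact Nat.mod_eq_of_lt (by omega)
      have hdiv : (2 * k) / p = 2 * q + 1 := by
        rw [h2k, Nat.mul_add_div (by omega)]
        rw [Nat.div_eq_of_lt (by omega), Nat.add_zero]
      have h0 : (2 * r - p).choose r = 0 := Nat.choose_eq_zero_of_lt (by omega)
      have h0' : (p / 2).choose r = 0 := Nat.choose_eq_zero_of_lt hrm
      rw [lucas' p (2 * k) k, hmod, hdiv, ← hr, h0, hRHSlucas, h0']
      simp

end aux2

theorem stmt2 (p : ℕ) (hp : p.Prime) (hp3 : p % 3 = 1) (a : ℕ) (ha : 1 ≤ a) :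
    (∑ k ∈ Finset.range (p ^ a),
      (if k % 3 = 1 then (1 : ZMod p) else if k % 3 = 2 then -1 else 0) *
        (Nat.choose (2 * k) k : ZMod p) * (((-4 : ZMod p)) ^ k)⁻¹) = 0 := by
  haveI : Fact p.Prime := ⟨hp⟩
  have hodd := podd p hp3
  have hp1 : 1 < p := hp.one_lt
  have h4 : (-4 : ZMod p) ≠ 0 := by
    intro h
    have h' : ((4:ℕ) : ZMod p) = 0 := by push_cast; linear_combination -h
    rw [ZMod.natCast_eq_zero_iff] at h'
    have := Nat.le_of_dvd (by norm_num) h'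
    interval_cases p <;> omega
  haveI : Fact (Nat.Prime 3) := ⟨by norm_num⟩
  obtain ⟨u, hu⟩ : ∃ u : (ZMod p)ˣ, orderOf u = 3 := by
    apply exists_prime_orderOf_dvd_card 3
    rw [ZMod.card_units]
    omega
  set ω : ZMod p := (u : ZMod p) with hω
  have hω3 : ω ^ 3 = 1 := by
    have h : u ^ 3 = 1 := by rw [← hu]; exact pow_orderOf_eq_one u
    rw [hω, ← Units.val_pow_eq_pow_val, h, Units.val_one]
  have hω1 : ω ≠ 1 := by
    intro h
    have : u = 1 := Units.ext (by simpa [hω] using h)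
    rw [this] at hu; simp at hu
  have hωk : ∀ k : ℕ, ω ^ k = ω ^ (k % 3) := by
    intro k
    conv_lhs => rw [show k = 3 * (k / 3) + k % 3 by omega]
    rw [pow_add, pow_mul, hω3, one_pow, one_mul]
  have hne : ω - ω^2 ≠ 0 := by
    intro h
    have hω0 : ω ≠ 0 := by intro h0; rw [h0] at hω3; simp at hω3
    have h' : ω * (1 - ω) = 0 := by linear_combination h
    rcases mul_eq_zero.mp h' with h'' | h''
    · exact hω0 h''
    · exact hω1 (by linear_combination -h'')
  set c := (ω - ω^2)⁻¹ with hcdef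
  have hc : c * (ω - ω^2) = 1 := inv_mul_cancel₀ hne
  have hchi : ∀ k : ℕ, (if k % 3 = 1 then (1 : ZMod p) else if k % 3 = 2 then -1 else 0)
      = c * (ω ^ k - (ω^2) ^ k) := by
    intro k
    rw [show (ω^2)^k = ω^(2*k) by rw [← pow_mul, mul_comm], hωk k, hωk (2*k)]
    have h3 : k % 3 = 0 ∨ k % 3 = 1 ∨ k % 3 = 2 := by omega
    rcases h3 with h | h | h
    · rw [h, show (2*k) % 3 = 0 by omega]; norm_num
    · rw [h, show (2*k) % 3 = 2 by omega]; norm_num; linear_combination -hc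
    · rw [h, show (2*k) % 3 = 1 by omega]; norm_num; linear_combination hc
  set M := Mm p a with hMdef
  have h2M : 2 * M + 1 = p ^ a := two_Mm p hp3 a
  have hsum : ∀ x : ZMod p,
      ∑ k ∈ Finset.range (p^a), (x ^ k * ((M).choose k : ZMod p)) = (x + 1) ^ M := by
    intro x
    rw [add_pow]
    simp only [one_pow, mul_one]
    symm
    apply Finset.sum_subset
    · apply Finset.range_subset_range.mpr; omega
    · intro k _ hk
      simp only [Finset.mem_range, not_lt] at hk
      rw [Nat.choose_eq_zero_of_lt (by omega)]
      simp
  have hM3 : M % 3 = 0 := by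
    have hpa : p ^ a % 3 = 1 := by
      rw [Nat.pow_mod, hp3]; simp
    omega
  have hωM : ω ^ M = 1 := by rw [hωk, hM3, pow_zero]
  have hω2M : (ω^2) ^ M = 1 := by
    rw [show (ω^2)^M = ω^(2*M) by rw [← pow_mul, mul_comm], hωk,
      show (2*M) % 3 = 0 by omega, pow_zero]
  have hquad : ω^2 + ω + 1 = 0 := by
    have h' : (ω - 1) * (ω^2 + ω + 1) = 0 := by linear_combination hω3
    rcases mul_eq_zero.mp h' with h'' | h''
    · exact absurd (by linear_combination h'') hω1
    · exact h''
  have hpow1 : (ω + 1) ^ M = (-1) ^ M := by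
    rw [show ω + 1 = -(ω^2) by linear_combination hquad, neg_pow, hω2M, mul_one]
  have hpow2 : (ω^2 + 1) ^ M = (-1) ^ M := by
    rw [show ω^2 + 1 = -ω by linear_combination hquad, neg_pow, hωM, mul_one]
  calc (∑ k ∈ Finset.range (p ^ a),
      (if k % 3 = 1 then (1 : ZMod p) else if k % 3 = 2 then -1 else 0) *
        (Nat.choose (2 * k) k : ZMod p) * (((-4 : ZMod p)) ^ k)⁻¹)
      = ∑ k ∈ Finset.range (p ^ a),
        c * (ω ^ k * ((M).choose k : ZMod p) - (ω^2) ^ k * ((M).choose k : ZMod p)) := by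
        apply Finset.sum_congr rfl
        intro k hk
        rw [hchi k, key p hp3 a k (Finset.mem_range.mp hk)]
        have hp4 : ((-4 : ZMod p)) ^ k ≠ 0 := pow_ne_zero k h4
        field_simp
        ring
    _ = c * ((∑ k ∈ Finset.range (p^a), ω ^ k * ((M).choose k : ZMod p))
        - ∑ k ∈ Finset.range (p^a), (ω^2) ^ k * ((M).choose k : ZMod p)) := by
        rw [← Finset.mul_sum, Finset.sum_sub_distrib]
    _ = c * ((ω + 1) ^ M - (ω^2 + 1) ^ M) := by rw [hsum ω, hsum (ω^2)]
    _ = 0 := by rw [hpow1, hpow2]; ring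
end

section
/- Let p ≡ 1 (mod 3) be a prime and a ≥ 1. Then Σ_{k=0}^{p^a-1} (k/3) · C(2k,k)² / 16^k ≡ 0 (mod p) and Σ_{k=0}^{p^a-1} (k/3) · C(2k,k)³ / (-64)^k ≡ 0 (mod p). -/
open Finset

/-- the character -/
def chi3 (p : ℕ) (k : ℕ) : ZMod p := if k % 3 = 1 then 1 else if k % 3 = 2 then -1 else 0

lemma fac_even_odd (r : ℕ) :
    (2 * r).factorial = 2 ^ r * r.factorial * ∏ j ∈ range r, (2 * j + 1) := by
  induction r with
  | zero => simp
  | succ n ih =>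
    have h : 2 * (n + 1) = (2 * n + 1) + 1 := by ring
    rw [h, Nat.factorial_succ (2 * n + 1), Nat.factorial_succ (2 * n), prod_range_succ,
      Nat.factorial_succ n, ih]
    ring

section base
variable (p : ℕ) [hFp : Fact p.Prime]

lemma base_digit (hodd : p % 2 = 1) {r : ℕ} (hr : r < p) :
    ((Nat.choose (2 * r) r : ℕ) : ZMod p) = (-4) ^ r * ((Nat.choose ((p - 1) / 2) r : ℕ) : ZMod p) := by
  have hp := hFp.out
  set m := (p - 1) / 2 with hm
  have hm2 : 2 * m + 1 = p := by omega
  by_cases hrm : r ≤ m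
  · have hfacne : ((r.factorial : ℕ) : ZMod p) ≠ 0 := by
      rw [Ne, ZMod.natCast_eq_zero_iff]
      exact fun hdvd => absurd (hp.dvd_factorial.mp hdvd) (by omega)
    set P : ZMod p := ∏ j ∈ range r, (2 * (j : ZMod p) + 1) with hP
    have hA : (2 : ZMod p) ^ r * ((Nat.descFactorial m r : ℕ) : ZMod p) = (-1) ^ r * P := by
      rw [Nat.descFactorial_eq_prod_range, Nat.cast_prod]
      have step : ∀ i ∈ range r, ((m - i : ℕ) : ZMod p) = (-1) * (2 * (i : ZMod p) + 1) * 2⁻¹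
         ∨ True := fun _ _ => Or.inr trivial
      have : (2 : ZMod p) ^ r * ∏ i ∈ range r, ((m - i : ℕ) : ZMod p)
          = ∏ i ∈ range r, (2 * ((m - i : ℕ) : ZMod p)) := by
        rw [Finset.prod_mul_distrib, Finset.prod_const, Finset.card_range]
      rw [this]
      have : ∏ i ∈ range r, (2 * ((m - i : ℕ) : ZMod p))
          = ∏ i ∈ range r, ((-1) * (2 * (i : ZMod p) + 1)) := by
        refine prod_congr rfl ?_
        intro i hi
        rw [mem_range] at hi
        have him : i ≤ m := by omega
        have hip : 2 * (m - i) + (2 * i + 1) = p := by omega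
        have hcast : ((2 * (m - i) + (2 * i + 1) : ℕ) : ZMod p) = 0 := by
          rw [hip]; exact ZMod.natCast_self p
        push_cast [Nat.cast_sub him] at hcast ⊢
        linear_combination hcast
      rw [this, Finset.prod_mul_distrib, Finset.prod_const, Finset.card_range, hP]
    have hB : (((2 * r).factorial : ℕ) : ZMod p) = 2 ^ r * ((r.factorial : ℕ) : ZMod p) * P := by
      rw [fac_even_odd r]
      push_cast
      rfl
    have hdF : ((Nat.descFactorial m r : ℕ) : ZMod p)
        = ((r.factorial : ℕ) : ZMod p) * ((Nat.choose m r : ℕ) : ZMod p) := by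
      rw [Nat.descFactorial_eq_factorial_mul_choose]; push_cast; ring
    have hfac2 : (((2 * r).factorial : ℕ) : ZMod p) =
        ((r.factorial : ℕ) : ZMod p) * ((r.factorial : ℕ) : ZMod p)
          * ((Nat.choose (2 * r) r : ℕ) : ZMod p) := by
      have := Nat.choose_mul_factorial_mul_factorial (show r ≤ 2 * r by omega)
      rw [show 2 * r - r = r by omega] at this
      rw [← this]; push_cast; ring
    have e1 : ((-4 : ZMod p)) ^ r = (-1) ^ r * 2 ^ r * 2 ^ r := by
      rw [show (-4 : ZMod p) = (-1) * 2 * 2 by norm_num, mul_pow, mul_pow]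
    have hsq : ((-1 : ZMod p)) ^ r * (-1) ^ r = 1 := by
      rw [← pow_add, ← two_mul, pow_mul]; norm_num
    have main : (((r.factorial : ℕ) : ZMod p) * ((r.factorial : ℕ) : ZMod p)) *
        ((-4 : ZMod p) ^ r * ((Nat.choose m r : ℕ) : ZMod p)) =
        (((r.factorial : ℕ) : ZMod p) * ((r.factorial : ℕ) : ZMod p)) *
        ((Nat.choose (2 * r) r : ℕ) : ZMod p) := by
      calc (((r.factorial : ℕ) : ZMod p) * ((r.factorial : ℕ) : ZMod p)) *
            ((-4 : ZMod p) ^ r * ((Nat.choose m r : ℕ) : ZMod p))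
          = (-1) ^ r * 2 ^ r * ((r.factorial : ℕ) : ZMod p) *
              (2 ^ r * ((Nat.descFactorial m r : ℕ) : ZMod p)) := by rw [e1, hdF]; ring
        _ = (-1) ^ r * 2 ^ r * ((r.factorial : ℕ) : ZMod p) * ((-1) ^ r * P) := by rw [hA]
        _ = ((-1 : ZMod p) ^ r * (-1) ^ r) * (2 ^ r * ((r.factorial : ℕ) : ZMod p) * P) := by
            ring
        _ = 2 ^ r * ((r.factorial : ℕ) : ZMod p) * P := by rw [hsq, one_mul]
        _ = (((2 * r).factorial : ℕ) : ZMod p) := hB.symm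
        _ = (((r.factorial : ℕ) : ZMod p) * ((r.factorial : ℕ) : ZMod p)) *
              ((Nat.choose (2 * r) r : ℕ) : ZMod p) := by rw [hfac2]
    exact (mul_left_cancel₀ (mul_ne_zero hfacne hfacne) main).symm
  · -- r > m : both sides 0
    have h1 : Nat.choose m r = 0 := Nat.choose_eq_zero_of_lt (by omega)
    have h2 : p ∣ Nat.choose (2 * r) r := by
      refine hp.dvd_choose hr ?_ ?_ <;> omega
    rw [h1, (ZMod.natCast_eq_zero_iff _ _).mpr h2]
    simp

lemma lucas_step {n k : ℕ} :
    ((Nat.choose n k : ℕ) : ZMod p) =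
      ((Nat.choose (n % p) (k % p) : ℕ) : ZMod p) * ((Nat.choose (n / p) (k / p) : ℕ) : ZMod p) := by
  have h := Choose.choose_modEq_choose_mod_mul_choose_div (n := n) (k := k) (p := p)
  have := (ZMod.intCast_eq_intCast_iff _ _ _).mpr h
  push_cast at this
  exact_mod_cast this

/-- main lemma: C(2k,k) ≡ (-4)^k C(M,k) mod p for k < 2M+1 = p^a -/
lemma key_lemma (hodd : p % 2 = 1) :
    ∀ a M k : ℕ, 2 * M + 1 = p ^ a → k < p ^ a →
    ((Nat.choose (2 * k) k : ℕ) : ZMod p) = (-4) ^ k * ((Nat.choose M k : ℕ) : ZMod p) := by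
  have hp := hFp.out
  intro a
  induction a with
  | zero =>
    intro M k hM hk
    rw [pow_zero] at hk
    have hk0 : k = 0 := by omega
    subst hk0; simp
  | succ a ih =>
    intro M k hM hk
    have hppos : 0 < p := hp.pos
    set m := (p - 1) / 2 with hm
    have hm2 : 2 * m + 1 = p := by omega
    -- p^a is odd
    obtain ⟨M', hM'⟩ : ∃ M', 2 * M' + 1 = p ^ a := by
      have : p ^ a % 2 = 1 := by
        rw [Nat.pow_mod, hodd, one_pow]
        omega

      exact ⟨p ^ a / 2, by omega⟩
    -- M = m + p * M'
    have hMeq : M = m + p * M' := by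
      have : 2 * M + 1 = (2 * m + 1) * (2 * M' + 1) := by
        rw [hm2, hM', hM, pow_succ, mul_comm]
      nlinarith
    have hMmod : M % p = m := by
      rw [hMeq, Nat.add_mul_mod_self_left, Nat.mod_eq_of_lt (by omega)]
    have hMdiv : M / p = M' := by
      rw [hMeq, Nat.add_mul_div_left _ _ hppos, Nat.div_eq_of_lt (by omega), zero_add]
    set q := k / p with hq
    set r := k % p with hr
    have hkqr : p * q + r = k := Nat.div_add_mod k p
    have hrp : r < p := Nat.mod_lt _ hppos
    have hqbound : q < p ^ a := by
      rw [hq, Nat.div_lt_iff_lt_mul hppos, ← pow_succ]; exact hk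
    have hMchoose : ((Nat.choose M k : ℕ) : ZMod p) =
        ((Nat.choose m r : ℕ) : ZMod p) * ((Nat.choose M' q : ℕ) : ZMod p) := by
      rw [lucas_step p, hMmod, hMdiv]
    by_cases hrm : r ≤ m
    · have h2r : 2 * r < p := by omega
      have hmod2 : (2 * k) % p = 2 * r := by
        rw [← hkqr]; rw [show 2 * (p * q + r) = 2 * r + 2 * q * p by ring,
          Nat.add_mul_mod_self_right, Nat.mod_eq_of_lt h2r]
      have hdiv2 : (2 * k) / p = 2 * q := by
        rw [← hkqr]; rw [show 2 * (p * q + r) = 2 * r + 2 * q * p by ring,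
          Nat.add_mul_div_right _ _ hppos, Nat.div_eq_of_lt h2r, zero_add]
      have hkmod : k % p = r := hr.symm
      have hkdiv : k / p = q := hq.symm
      rw [lucas_step p (n := 2 * k) (k := k), hmod2, hdiv2, hkmod, hkdiv]
      rw [base_digit p hodd hrp, ih M' q hM' hqbound, hMchoose]
      have hpow : (-4 : ZMod p) ^ k = (-4) ^ r * (-4) ^ q := by
        rw [← hkqr, pow_add, pow_mul, ZMod.pow_card]; ring
      rw [hpow]; ring
    · -- r > m: both sides 0
      have hmod2 : (2 * k) % p = 2 * r - p := by
        rw [← hkqr]; rw [show 2 * (p * q + r) = (2 * r - p) + (2 * q + 1) * p by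
          have : p ≤ 2 * r := by omega
          zify [this]; ring,
          Nat.add_mul_mod_self_right, Nat.mod_eq_of_lt (by omega)]
      have hkmod : k % p = r := hr.symm
      have hz1 : Nat.choose ((2*k) % p) (k % p) = 0 := by
        rw [hmod2, hkmod]; exact Nat.choose_eq_zero_of_lt (by omega)
      have hz2 : Nat.choose m r = 0 := Nat.choose_eq_zero_of_lt (by omega)
      rw [lucas_step p (n := 2 * k) (k := k), hz1, hMchoose, hz2]
      simp

/-- reflection kills the sum -/
lemma sum_chi_zero (h2 : (2 : ZMod p) ≠ 0) (M : ℕ) (hM3 : M % 3 = 0) (g : ℕ → ZMod p)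
    (hg : ∀ j, j ≤ M → g (M - j) = g j) :
    ∑ k ∈ range (M + 1), chi3 p k * g k = 0 := by
  set S := ∑ k ∈ range (M + 1), chi3 p k * g k with hS
  have hrefl := Finset.sum_range_reflect (fun k => chi3 p k * g k) (M + 1)
  have hneg : ∑ j ∈ range (M + 1), chi3 p (M + 1 - 1 - j) * g (M + 1 - 1 - j) = -S := by
    rw [hS, ← Finset.sum_neg_distrib]
    refine sum_congr rfl ?_
    intro j hj
    rw [mem_range] at hj
    have hjM : j ≤ M := by omega
    have h1 : M + 1 - 1 - j = M - j := by omega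
    rw [h1, hg j hjM]
    have hchi : chi3 p (M - j) = - chi3 p j := by
      unfold chi3
      have hj3 : j % 3 = 0 ∨ j % 3 = 1 ∨ j % 3 = 2 := by omega
      rcases hj3 with h | h | h
      · have : (M - j) % 3 = 0 := by omega
        simp [h, this]
      · have : (M - j) % 3 = 2 := by omega
        simp [h, this]
      · have : (M - j) % 3 = 1 := by omega
        simp [h, this]
    rw [hchi]; ring
  rw [hneg] at hrefl
  have h2S : (2 : ZMod p) * S = 0 := by linear_combination -hrefl
  rcases mul_eq_zero.mp h2S with h | h
  · exact absurd h h2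
  · exact h

end base

theorem stmt3 (p : ℕ) (hp : p.Prime) (hp3 : p % 3 = 1) (a : ℕ) (ha : 1 ≤ a) :
    (∑ k ∈ Finset.range (p ^ a),
      (if k % 3 = 1 then (1 : ZMod p) else if k % 3 = 2 then -1 else 0) *
        (Nat.choose (2 * k) k : ZMod p) ^ 2 * ((16 : ZMod p) ^ k)⁻¹) = 0 ∧
    (∑ k ∈ Finset.range (p ^ a),
      (if k % 3 = 1 then (1 : ZMod p) else if k % 3 = 2 then -1 else 0) *
        (Nat.choose (2 * k) k : ZMod p) ^ 3 * (((-64 : ZMod p)) ^ k)⁻¹) = 0 := by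
  haveI : Fact p.Prime := ⟨hp⟩
  have hp2 : p ≠ 2 := by intro h; rw [h] at hp3; omega
  have hodd : p % 2 = 1 := Nat.odd_iff.mp (hp.odd_of_ne_two hp2)
  have hppow_odd : p ^ a % 2 = 1 := by rw [Nat.pow_mod, hodd, one_pow]; omega

  obtain ⟨M, hM⟩ : ∃ M, 2 * M + 1 = p ^ a := ⟨p ^ a / 2, by omega⟩
  have hM3 : M % 3 = 0 := by
    have : p ^ a % 3 = 1 := by rw [Nat.pow_mod, hp3, one_pow]; omega
    omega
  have h2 : (2 : ZMod p) ≠ 0 := by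
    intro h
    have : ((2 : ℕ) : ZMod p) = 0 := by exact_mod_cast h
    have hdvd := (ZMod.natCast_eq_zero_iff 2 p).mp this
    have := Nat.le_of_dvd (by norm_num) hdvd
    have := hp.two_le
    omega
  have h4 : (-4 : ZMod p) ≠ 0 := by
    have : (4 : ZMod p) ≠ 0 := by
      rw [show (4 : ZMod p) = 2 ^ 2 by norm_num]
      exact pow_ne_zero _ h2
    simpa using this
  have key : ∀ k, k < p ^ a → ((Nat.choose (2 * k) k : ℕ) : ZMod p)
      = (-4) ^ k * ((Nat.choose M k : ℕ) : ZMod p) :=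
    fun k hk => key_lemma p hodd a M k hM hk
  have hchi : ∀ k, (if k % 3 = 1 then (1 : ZMod p) else if k % 3 = 2 then -1 else 0)
      = chi3 p k := fun k => rfl
  have hsub : range (M + 1) ⊆ range (p ^ a) := by
    apply Finset.range_subset_range.mpr; omega
  have main : ∀ (e : ℕ) (c : ZMod p), e ≠ 0 → ((-4 : ZMod p)) ^ e = c →
      (∑ k ∈ Finset.range (p ^ a),
        chi3 p k * (Nat.choose (2 * k) k : ZMod p) ^ e * (c ^ k)⁻¹) = 0 := by
    intro e c he hc
    have hcne : c ≠ 0 := hc ▸ pow_ne_zero _ h4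
    have step1 : (∑ k ∈ Finset.range (p ^ a),
        chi3 p k * (Nat.choose (2 * k) k : ZMod p) ^ e * (c ^ k)⁻¹) =
        ∑ k ∈ Finset.range (p ^ a), chi3 p k * ((Nat.choose M k : ℕ) : ZMod p) ^ e := by
      refine Finset.sum_congr rfl ?_
      intro k hk
      rw [mem_range] at hk
      rw [key k hk, mul_pow]
      have epow : ((-4 : ZMod p) ^ k) ^ e = c ^ k := by
        rw [← pow_mul, mul_comm, pow_mul, hc]
      rw [epow]
      have hck : (c : ZMod p) ^ k ≠ 0 := pow_ne_zero _ hcne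
      calc chi3 p k * (c ^ k * ((Nat.choose M k : ℕ) : ZMod p) ^ e) * (c ^ k)⁻¹
          = (c ^ k * (c ^ k)⁻¹) * (chi3 p k * ((Nat.choose M k : ℕ) : ZMod p) ^ e) := by ring
        _ = chi3 p k * ((Nat.choose M k : ℕ) : ZMod p) ^ e := by
            rw [mul_inv_cancel₀ hck, one_mul]
    rw [step1]
    rw [← Finset.sum_subset hsub (by
      intro k hk hk2
      rw [mem_range] at hk
      rw [mem_range, not_lt] at hk2
      have : Nat.choose M k = 0 := Nat.choose_eq_zero_of_lt (by omega)
      rw [this]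
      push_cast
      rw [zero_pow he]
      simp)]
    refine sum_chi_zero p h2 M hM3 (fun k => ((Nat.choose M k : ℕ) : ZMod p) ^ e) ?_
    intro j hj
    simp only [Nat.choose_symm hj]
  constructor
  · simp only [hchi]
    exact main 2 16 (by norm_num) (by norm_num)
  · simp only [hchi]
    exact main 3 (-64) (by norm_num) (by norm_num)
end

section
/- Let p be an odd prime with p^a ≡ 7 (mod 12) for some positive integer a. Then Σ_{k=0}^{(p^a-1)/3} C(6k,3k) / 64^k ≡ 0 (mod p). -/
open Finset

lemma fac_two_mul (d : ℕ) :
    Nat.factorial (2 * d) = 2 ^ d * Nat.factorial d * ∏ i ∈ range d, (2 * i + 1) := by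
  induction d with
  | zero => simp
  | succ n ih =>
    have h : 2 * (n + 1) = (2 * n + 1) + 1 := by ring
    rw [h, Nat.factorial_succ, Nat.factorial_succ, prod_range_succ, Nat.factorial_succ, ih]
    ring

lemma lemA (p : ℕ) [Fact p.Prime] (hodd : p ≠ 2) (d : ℕ) (hd : d < p) :
    ((2 * d).choose d : ZMod p) = (-4) ^ d * (((p - 1) / 2).choose d : ℕ) := by
  have hp : p.Prime := Fact.out
  obtain ⟨c, hc⟩ := hp.odd_of_ne_two hodd
  set m := (p - 1) / 2 with hmdef
  have hm : 2 * m + 1 = p := by omega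
  by_cases hdm : d ≤ m
  · have hfacne : (Nat.factorial d : ZMod p) ≠ 0 := by
      rw [Ne, ZMod.natCast_eq_zero_iff]
      intro h
      exact absurd ((Nat.Prime.dvd_factorial hp).mp h) (by omega)
    have hstep : ∏ i ∈ range d, ((2:ZMod p) * ((m - i : ℕ) : ZMod p)) =
        ∏ i ∈ range d, ((-1:ZMod p) * (2*(i:ZMod p)+1)) := by
      apply prod_congr rfl
      intro i hi
      rw [mem_range] at hi
      have h1 : (2*(m-i) : ℕ) = p - (2*i+1) := by omega
      calc (2:ZMod p) * ((m - i : ℕ) : ZMod p) = ((2*(m-i) : ℕ) : ZMod p) := by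
            push_cast; ring
        _ = ((p - (2*i+1) : ℕ) : ZMod p) := by rw [h1]
        _ = (p : ZMod p) - ((2*i+1 : ℕ) : ZMod p) := Nat.cast_sub (by omega)
        _ = (-1:ZMod p) * (2*(i:ZMod p)+1) := by rw [ZMod.natCast_self]; push_cast; ring
    have hprod : (2:ZMod p)^d * (m.descFactorial d : ZMod p) =
        (-1)^d * ∏ i ∈ range d, (2*(i:ZMod p)+1) := by
      rw [prod_mul_distrib, prod_mul_distrib, prod_const, prod_const, card_range] at hstep
      rw [Nat.descFactorial_eq_prod_range, Nat.cast_prod]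
      exact hstep
    have efac : ((2*d).factorial : ZMod p) =
        2^d * (d.factorial : ZMod p) * ∏ i ∈ range d, (2*(i:ZMod p)+1) := by
      rw [fac_two_mul]
      push_cast
      ring
    have e1 : ((2 * d).choose d : ZMod p) * ((d.factorial : ZMod p) * (d.factorial : ZMod p))
        = ((2 * d).factorial : ℕ) := by
      have hfac : ((2 * d).choose d : ℕ) * Nat.factorial d * Nat.factorial d
          = Nat.factorial (2 * d) := by
        have := Nat.choose_mul_factorial_mul_factorial (show d ≤ 2 * d by omega)
        simpa [show 2 * d - d = d by omega] using this
      rw [← hfac]; push_cast; ring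
    have hs : ((-1 : ZMod p))^d * (-1)^d = 1 := by
      rw [← pow_add, show d + d = 2 * d by ring, pow_mul]
      norm_num
    have hP : ((-1 : ZMod p))^d * ((2:ZMod p)^d * (m.descFactorial d : ZMod p)) =
        ∏ i ∈ range d, (2*(i:ZMod p)+1) := by
      rw [hprod, ← mul_assoc, hs, one_mul]
    have hdesc : (m.descFactorial d : ZMod p) = (d.factorial : ZMod p) * (m.choose d : ℕ) := by
      rw [Nat.descFactorial_eq_factorial_mul_choose]; push_cast; ring
    have h4 : ((-4 : ZMod p))^d = (-1)^d * ((2:ZMod p)^d * 2^d) := by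
      have h' : (-4 : ZMod p) = -1 * (2 * 2) := by norm_num
      rw [h', mul_pow, mul_pow]
    have hkey : ((2 * d).choose d : ZMod p) * ((d.factorial : ZMod p) * (d.factorial : ZMod p)) =
        ((-4) ^ d * (m.choose d : ℕ)) * ((d.factorial : ZMod p) * (d.factorial : ZMod p)) := by
      rw [e1, efac, ← hP, hdesc, h4]
      ring
    exact mul_right_cancel₀ (mul_ne_zero hfacne hfacne) hkey
  · push_neg at hdm
    rw [Nat.choose_eq_zero_of_lt hdm]
    have hdvd : p ∣ (2 * d).choose d := by
      have := Nat.Prime.dvd_choose_add hp hd hd (by omega)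
      simpa [two_mul] using this
    rw [(ZMod.natCast_eq_zero_iff _ _).mpr hdvd]
    simp


lemma lucas_cast (p : ℕ) [Fact p.Prime] (n k : ℕ) :
    ((n.choose k : ℕ) : ZMod p) =
      ((n % p).choose (k % p) : ℕ) * (((n / p).choose (k / p) : ℕ) : ZMod p) := by
  have h := Choose.choose_modEq_choose_mod_mul_choose_div_nat (p := p) (n := n) (k := k)
  have h2 := (ZMod.natCast_eq_natCast_iff _ _ _).mpr h
  push_cast at h2
  exact_mod_cast h2

lemma lemB (p : ℕ) [Fact p.Prime] (hodd : p ≠ 2) :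
    ∀ a n : ℕ, n < p ^ a →
      ((2 * n).choose n : ZMod p) = (-4) ^ n * (((p ^ a - 1) / 2).choose n : ℕ) := by
  have hp : p.Prime := Fact.out
  have hppos : 0 < p := hp.pos
  obtain ⟨c, hc⟩ := hp.odd_of_ne_two hodd
  intro a
  induction a with
  | zero =>
    intro n hn
    rw [pow_zero] at hn
    interval_cases n
    simp
  | succ a ih =>
    intro n hn
    set q := n / p with hqdef
    set r := n % p with hrdef
    have hr : r < p := Nat.mod_lt _ hppos
    have hsplit : p * q + r = n := Nat.div_add_mod n p
    have hq : q < p ^ a := by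
      rw [hqdef]
      apply Nat.div_lt_of_lt_mul
      rw [mul_comm, ← pow_succ]
      exact hn
    set m := (p - 1) / 2 with hmdef
    have hm : 2 * m + 1 = p := by omega
    obtain ⟨ca, hca⟩ := ((hp.odd_of_ne_two hodd).pow (n := a))
    obtain ⟨ca1, hca1⟩ := ((hp.odd_of_ne_two hodd).pow (n := a + 1))
    set Ma := (p ^ a - 1) / 2 with hMadef
    set Ma1 := (p ^ (a+1) - 1) / 2 with hMa1def
    have hMa : 2 * Ma + 1 = p ^ a := by omega
    have hMa1 : 2 * Ma1 + 1 = p ^ (a+1) := by omega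
    have heq : Ma1 = Ma * p + m := by
      have h1 : 2 * (Ma * p + m) + 1 = p ^ (a+1) := by
        rw [pow_succ, ← hMa, ← hm]; ring
      omega
    have hMa1mod : Ma1 % p = m := by
      rw [heq, mul_comm, Nat.mul_add_mod, Nat.mod_eq_of_lt (by omega)]
    have hMa1div : Ma1 / p = Ma := by
      rw [heq, mul_comm, Nat.mul_add_div hppos, Nat.div_eq_of_lt (by omega), add_zero]
    -- RHS via Lucas
    have hR : ((Ma1.choose n : ℕ) : ZMod p) =
        (m.choose r : ℕ) * ((Ma.choose q : ℕ) : ZMod p) := by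
      rw [lucas_cast, hMa1mod, hMa1div, ← hrdef, ← hqdef]
    by_cases h2r : 2 * r < p
    · have h2nmod : (2 * n) % p = 2 * r := by
        rw [← hsplit]
        rw [show 2 * (p * q + r) = p * (2 * q) + 2 * r by ring, Nat.mul_add_mod,
          Nat.mod_eq_of_lt h2r]
      have h2ndiv : (2 * n) / p = 2 * q := by
        rw [← hsplit]
        rw [show 2 * (p * q + r) = p * (2 * q) + 2 * r by ring, Nat.mul_add_div hppos,
          Nat.div_eq_of_lt h2r, add_zero]
      have hL := lucas_cast p (2 * n) n
      rw [h2nmod, h2ndiv, ← hrdef, ← hqdef] at hL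
      rw [hL, lemA p hodd r hr, ih q hq, hR]
      have hpow : ((-4 : ZMod p)) ^ n = (-4) ^ r * (-4) ^ q := by
        conv_lhs => rw [← hsplit]
        rw [pow_add, mul_comm p q, pow_mul, ZMod.pow_card, mul_comm]
      rw [hpow]
      ring
    · push_neg at h2r
      have h2n : 2 * n = p * (2 * q + 1) + (2 * r - p) := by
        have h1 : p * (2 * q + 1) + (2 * r - p) = p * (2 * q) + (p + (2 * r - p)) := by ring
        rw [h1, Nat.add_sub_cancel' h2r, ← hsplit]
        ring
      have h2nmod : (2 * n) % p = 2 * r - p := by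
        rw [h2n, Nat.mul_add_mod, Nat.mod_eq_of_lt (by omega)]
      have hL := lucas_cast p (2 * n) n
      rw [h2nmod, ← hrdef, Nat.choose_eq_zero_of_lt (show 2 * r - p < r by omega)] at hL
      rw [hL, hR, Nat.choose_eq_zero_of_lt (show m < r by omega)]
      push_cast
      ring


lemma sum_range_three_mul {β : Type*} [AddCommMonoid β] (f : ℕ → β) (m : ℕ) :
    ∑ n ∈ range (3 * m), f n = ∑ k ∈ range m, (f (3*k) + f (3*k+1) + f (3*k+2)) := by
  induction m with
  | zero => simp
  | succ n ih =>
    rw [sum_range_succ, ← ih, show 3 * (n+1) = (3*n + 1) + 1 + 1 by ring,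
      sum_range_succ, sum_range_succ, sum_range_succ]
    abel

theorem stmt4 (p : ℕ) (hp : p.Prime) (hodd : p ≠ 2) (a : ℕ) (ha : 1 ≤ a)
    (hpa : p ^ a % 12 = 7) :
    (∑ k ∈ Finset.range ((p ^ a - 1) / 3 + 1),
      (Nat.choose (6 * k) (3 * k) : ZMod p) * ((64 : ZMod p) ^ k)⁻¹) = 0 := by
  haveI : Fact p.Prime := ⟨hp⟩
  obtain ⟨t, ht⟩ : ∃ t, p ^ a = 12 * t + 7 := ⟨p ^ a / 12, by omega⟩
  set M := (p ^ a - 1) / 2 with hMdef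
  set N := (p ^ a - 1) / 3 with hNdef
  have hM : M = 6 * t + 3 := by omega
  have hN : N = 4 * t + 2 := by omega
  -- p ≠ 3
  have hpa3 : p ^ a % 3 = 1 := by omega
  have hp3 : p ≠ 3 := by
    intro h
    subst h
    have : (3:ℕ) ∣ 3 ^ a := dvd_pow_self 3 (by omega)
    omega
  -- a is odd
  have haodd : a % 2 = 1 := by
    by_contra hcon
    obtain ⟨b, hb⟩ : ∃ b, a = 2 * b := ⟨a / 2, by omega⟩
    have hsq : ∀ x : ℕ, x ^ 2 % 4 = 0 ∨ x ^ 2 % 4 = 1 := by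
      intro x
      rcases Nat.even_or_odd x with ⟨y, hy⟩ | ⟨y, hy⟩
      · left; have : x ^ 2 = 4 * y ^ 2 := by rw [hy]; ring
        omega
      · right; have : x ^ 2 = 4 * (y ^ 2 + y) + 1 := by rw [hy]; ring
        omega
    have h4 := hsq (p ^ b)
    rw [← pow_mul, show b * 2 = a by omega] at h4
    omega
  -- p % 3 = 1
  have hpmod3 : p % 3 = 1 := by
    have hpowmod := Nat.pow_mod p a 3
    rcases (show p % 3 = 0 ∨ p % 3 = 1 ∨ p % 3 = 2 by omega) with h | h | h
    · rw [h, Nat.zero_pow (by omega)] at hpowmod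
      omega
    · exact h
    · exfalso
      obtain ⟨e, he⟩ : ∃ e, a = 2 * e + 1 := ⟨a / 2, by omega⟩
      have h2 : 2 ^ a % 3 = 2 := by
        have h4e : 4 ^ e % 3 = 1 := by
          have := Nat.pow_mod 4 e 3
          simp at this
          omega
        have : 2 ^ a = 4 ^ e * 2 := by
          rw [he, pow_succ, pow_mul]
          norm_num
        rw [this, Nat.mul_mod, h4e]
      rw [h, h2] at hpowmod
      omega
  -- cube root of unity
  haveI : Fact (Nat.Prime 3) := ⟨by norm_num⟩
  have hdvd3 : 3 ∣ Fintype.card (ZMod p)ˣ := by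
    rw [ZMod.card_units]
    omega
  obtain ⟨u, hu⟩ := exists_prime_orderOf_dvd_card 3 hdvd3
  set ζ : ZMod p := (u : ZMod p) with hζdef
  have hζ3 : ζ ^ 3 = 1 := by
    have h1 : u ^ 3 = 1 := by rw [← hu]; exact pow_orderOf_eq_one u
    rw [hζdef, ← Units.val_pow_eq_pow_val, h1, Units.val_one]
  have hζ1 : ζ ≠ 1 := by
    intro h
    have : u = 1 := Units.ext h
    rw [this, orderOf_one] at hu
    omega
  have hquad : ζ ^ 2 + ζ + 1 = 0 := by
    have h0 : (ζ - 1) * (ζ ^ 2 + ζ + 1) = 0 := by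
      have h1 : (ζ - 1) * (ζ ^ 2 + ζ + 1) = ζ ^ 3 - 1 := by ring
      rw [h1, hζ3, sub_self]
    rcases mul_eq_zero.mp h0 with h | h
    · exact absurd (by rwa [sub_eq_zero] at h) hζ1
    · exact h
  -- rewrite each term
  have h64ne : (64 : ZMod p) ≠ 0 := by
    have h1 : ((64 : ℕ) : ZMod p) ≠ 0 := by
      rw [Ne, ZMod.natCast_eq_zero_iff]
      intro hdvd
      have h2 : p ∣ 2 := hp.dvd_of_dvd_pow (n := 6) (by norm_num; exact hdvd)
      have := (Nat.prime_dvd_prime_iff_eq hp Nat.prime_two).mp h2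
      exact hodd this
    exact_mod_cast h1
  have hterm : ∀ k ∈ range (N + 1),
      (Nat.choose (6 * k) (3 * k) : ZMod p) * ((64 : ZMod p) ^ k)⁻¹
        = (-1) ^ k * (M.choose (3 * k) : ℕ) := by
    intro k hk
    rw [mem_range] at hk
    have h3k : 3 * k < p ^ a := by omega
    have hB := lemB p hodd a (3 * k) h3k
    rw [show 2 * (3 * k) = 6 * k by ring] at hB
    have hneg : ((-4 : ZMod p)) ^ (3 * k) = (-1) ^ k * 64 ^ k := by
      rw [pow_mul, show ((-4 : ZMod p)) ^ 3 = -1 * 64 by norm_num, mul_pow]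
    rw [hB, ← hMdef, hneg]
    have h64k : (64 : ZMod p) ^ k * ((64 : ZMod p) ^ k)⁻¹ = 1 :=
      mul_inv_cancel₀ (pow_ne_zero k h64ne)
    calc (-1 : ZMod p) ^ k * 64 ^ k * (M.choose (3*k) : ℕ) * (64 ^ k)⁻¹
        = (-1) ^ k * (M.choose (3*k) : ℕ) * (64 ^ k * (64 ^ k)⁻¹) := by ring
      _ = (-1) ^ k * (M.choose (3*k) : ℕ) := by rw [h64k, mul_one]
  rw [sum_congr rfl hterm]
  -- now prove T = 0
  set g : ℕ → ZMod p := fun n =>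
    (M.choose n : ℕ) * ((-1) ^ n + (-ζ) ^ n + (-(ζ^2)) ^ n) with hgdef
  have hS : ∀ x : ZMod p,
      ∑ n ∈ range (M + 1), (M.choose n : ℕ) * x ^ n = (x + 1) ^ M := by
    intro x
    rw [add_pow]
    apply sum_congr rfl
    intro i hi
    rw [one_pow]
    ring
  have hsum1 : ∑ n ∈ range (M + 1), g n = 0 := by
    have hexp : ∑ n ∈ range (M + 1), g n =
        ((-1 : ZMod p) + 1) ^ M + ((-ζ) + 1) ^ M + ((-(ζ^2)) + 1) ^ M := by
      rw [← hS (-1 : ZMod p), ← hS (-ζ), ← hS (-(ζ^2)), ← sum_add_distrib, ← sum_add_distrib]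
      apply sum_congr rfl
      intro i _
      rw [hgdef]
      ring
    rw [hexp]
    have hz : ((-1 : ZMod p) + 1) ^ M = 0 := by
      rw [show (-1 : ZMod p) + 1 = 0 by ring, zero_pow (by omega)]
    have hModd : Odd M := ⟨3 * t + 1, by omega⟩
    have hfac2 : (-(ζ^2) + 1 : ZMod p) = (-ζ + 1) * (-(ζ^2)) := by
      linear_combination -hζ3
    have hζ2M : ((-(ζ^2)) : ZMod p) ^ M = -1 := by
      rw [show (-(ζ^2) : ZMod p) = -1 * ζ^2 by ring, mul_pow, hModd.neg_one_pow,
        ← pow_mul, show 2 * M = 3 * (4 * t + 2) by omega, pow_mul, hζ3, one_pow, mul_one]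
    rw [hz, hfac2, mul_pow, hζ2M]
    ring
  have hsum2 : ∑ n ∈ range (M + 1), g n = ∑ n ∈ range (3 * (N + 1)), g n := by
    apply sum_subset (range_subset_range.mpr (by omega))
    intro x _ hx
    rw [mem_range, not_lt] at hx
    rw [hgdef]
    simp only
    rw [Nat.choose_eq_zero_of_lt (by omega), Nat.cast_zero, zero_mul]
  have hsum3 : ∑ n ∈ range (3 * (N + 1)), g n =
      3 * ∑ k ∈ range (N + 1), (-1 : ZMod p) ^ k * (M.choose (3 * k) : ℕ) := by
    rw [sum_range_three_mul, mul_sum]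
    apply sum_congr rfl
    intro k _
    have e1 : ((-1 : ZMod p)) ^ (3 * k) = (-1) ^ k := by
      rw [pow_mul, show ((-1 : ZMod p)) ^ 3 = -1 by norm_num]
    have e2 : ((-ζ : ZMod p)) ^ (3 * k) = (-1) ^ k := by
      rw [pow_mul, show (-ζ : ZMod p) ^ 3 = -(ζ^3) by ring, hζ3]
    have e3 : ((-(ζ^2) : ZMod p)) ^ (3 * k) = (-1) ^ k := by
      rw [pow_mul, show (-(ζ^2) : ZMod p) ^ 3 = -((ζ^3)^2) by ring, hζ3]
      norm_num
    have hg0 : g (3 * k) = (M.choose (3 * k) : ℕ) * ((-1) ^ k * 3) := by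
      rw [hgdef]; simp only
      rw [e1, e2, e3]; ring
    have hg1 : g (3 * k + 1) = 0 := by
      rw [hgdef]; simp only
      rw [pow_succ, pow_succ, pow_succ, e1, e2, e3]
      linear_combination (-(((M.choose (3*k+1) : ℕ) : ZMod p)) * (-1 : ZMod p) ^ k) * hquad
    have hg2 : g (3 * k + 2) = 0 := by
      rw [hgdef]; simp only
      rw [show 3 * k + 2 = (3 * k + 1) + 1 by ring, pow_succ, pow_succ, pow_succ,
        pow_succ, pow_succ, pow_succ, e1, e2, e3]
      linear_combination (((M.choose (3*k+2) : ℕ) : ZMod p) * (-1 : ZMod p) ^ k) * hquad +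
        (((M.choose (3*k+2) : ℕ) : ZMod p) * (-1 : ZMod p) ^ k * ζ) * hζ3
    rw [hg0, hg1, hg2]
    ring
  have h3ne : (3 : ZMod p) ≠ 0 := by
    have h1 : ((3 : ℕ) : ZMod p) ≠ 0 := by
      rw [Ne, ZMod.natCast_eq_zero_iff]
      intro hdvd
      exact hp3 ((Nat.prime_dvd_prime_iff_eq hp (by norm_num)).mp hdvd)
    exact_mod_cast h1
  have := hsum1
  rw [hsum2, hsum3] at this
  exact (mul_eq_zero.mp this).resolve_left h3ne
end

section
/- Let p ≡ ±1 (mod 5) be a prime and a ≥ 1. Then Σ_{k=0}^{p^a-1} F_{2k} · C(2k,k) / (-4)^k ≡ 0 (mod p), where F_n denotes the n-th Fibonacci number. -/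
open Finset

private lemma sum_range_mul_eq {M : Type*} [AddCommMonoid M] (f : ℕ → M) (m n : ℕ) :
    ∑ k ∈ range (m * n), f k = ∑ j ∈ range m, ∑ r ∈ range n, f (j * n + r) := by
  induction m with
  | zero => simp
  | succ m ih =>
      rw [Nat.succ_mul, Finset.sum_range_add, ih, Finset.sum_range_succ]

private lemma fib_cast_lemma {R : Type*} [CommRing R] (x y : R) (h1 : x + y = 1)
    (h2 : x * y = -1) : ∀ n : ℕ, (Nat.fib n : R) * (x - y) = x ^ n - y ^ n := by
  have hx : x ^ 2 = x + 1 := by linear_combination x * h1 - h2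
  have hy : y ^ 2 = y + 1 := by linear_combination y * h1 - h2
  intro n
  induction n using Nat.twoStepInduction with
  | zero => simp
  | one => simp
  | more n ih1 ih2 =>
      rw [Nat.fib_add_two]
      push_cast
      have e1 : x ^ (n + 2) = x ^ n * x ^ 2 := by ring
      have e2 : y ^ (n + 2) = y ^ n * y ^ 2 := by ring
      rw [e1, e2, hx, hy]
      linear_combination ih1 + ih2

private lemma two_mul_factorial (k : ℕ) :
    (2 * k).factorial = 2 ^ k * k.factorial * ∏ i ∈ range k, (2 * i + 1) := by
  induction k with
  | zero => simp
  | succ k ih =>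
      have h : 2 * (k + 1) = (2 * k + 1) + 1 := by ring
      rw [h, Nat.factorial_succ, Nat.factorial_succ, ih, prod_range_succ, Nat.factorial_succ]
      ring

private lemma lucasZ {p : ℕ} [Fact p.Prime] (n k : ℕ) :
    (Nat.choose n k : ZMod p) =
      (Nat.choose (n % p) (k % p) : ZMod p) * (Nat.choose (n / p) (k / p) : ZMod p) := by
  have h := Choose.choose_modEq_choose_mod_mul_choose_div_nat (n := n) (k := k) (p := p)
  have h2 := (ZMod.natCast_eq_natCast_iff _ _ _).mpr h
  push_cast at h2
  exact h2

private lemma central_eq_zero {p : ℕ} [Fact p.Prime] {k : ℕ} (h1 : p ≤ 2 * k) (h2 : k < p) :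
    (Nat.choose (2 * k) k : ZMod p) = 0 := by
  rw [lucasZ]
  have hk : k % p = k := Nat.mod_eq_of_lt h2
  have hmod : 2 * k % p = 2 * k - p := by
    rw [Nat.mod_eq_sub_mod h1, Nat.mod_eq_of_lt (by omega)]
  rw [hmod, hk, Nat.choose_eq_zero_of_lt (by omega)]
  simp

private lemma central_eq {p : ℕ} [Fact p.Prime] (hp2 : p % 2 = 1) {k : ℕ}
    (hk : k ≤ (p - 1) / 2) :
    (Nat.choose (2 * k) k : ZMod p) = (Nat.choose ((p - 1) / 2) k : ZMod p) * (-4) ^ k := by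
  have hp := Fact.out (p := p.Prime)
  have hp1 : 2 ≤ p := hp.two_le
  set m := (p - 1) / 2 with hm
  have hmm : 2 * m + 1 = p := by omega
  have hkp : k < p := by omega
  have h2ne : (2 : ZMod p) ≠ 0 := by
    intro h
    have : ((2 : ℕ) : ZMod p) = 0 := by exact_mod_cast h
    rw [ZMod.natCast_eq_zero_iff] at this
    have := (Nat.prime_dvd_prime_iff_eq hp (by norm_num)).mp this
    omega
  have hfne : ((k.factorial : ℕ) : ZMod p) ≠ 0 := by
    rw [Ne, ZMod.natCast_eq_zero_iff]
    intro h
    have := (Nat.Prime.dvd_factorial hp).mp h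
    omega
  -- abbreviations
  set A : ZMod p := (Nat.choose (2 * k) k : ZMod p) with hA
  set B : ZMod p := (Nat.choose m k : ZMod p) with hB
  set F : ZMod p := (k.factorial : ZMod p) with hF
  set P : ZMod p := ∏ i ∈ range k, (2 * (i : ZMod p) + 1) with hP
  set Q : ZMod p := ∏ i ∈ range k, ((m : ZMod p) - (i : ZMod p)) with hQ
  have e1 : A * (F * F) = ((2 * k).factorial : ZMod p) := by
    have h := Nat.choose_mul_factorial_mul_factorial (show k ≤ 2 * k by omega)
    rw [show 2 * k - k = k by omega] at h
    have := congrArg (Nat.cast : ℕ → ZMod p) h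
    push_cast at this
    rw [hA, hF]
    linear_combination this
  have c1 : ((2 * k).factorial : ZMod p) = 2 ^ k * F * P := by
    have := congrArg (Nat.cast : ℕ → ZMod p) (two_mul_factorial k)
    push_cast at this
    rw [hF, hP]
    exact this
  have e2 : ((m.descFactorial k : ℕ) : ZMod p) = F * B := by
    have := congrArg (Nat.cast : ℕ → ZMod p) (Nat.descFactorial_eq_factorial_mul_choose m k)
    push_cast at this
    rw [hF, hB]
    exact this
  have e3 : ((m.descFactorial k : ℕ) : ZMod p) = Q := by
    rw [Nat.descFactorial_eq_prod_range, Nat.cast_prod, hQ]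
    refine Finset.prod_congr rfl fun i hi => ?_
    have : i < k := Finset.mem_range.mp hi
    rw [Nat.cast_sub (by omega)]
  have hm2 : (2 : ZMod p) * (m : ZMod p) = -1 := by
    have h1 : ((2 * m : ℕ) : ZMod p) = ((p - 1 : ℕ) : ZMod p) := by rw [show 2 * m = p - 1 by omega]
    rw [Nat.cast_sub (by omega), ZMod.natCast_self] at h1
    push_cast at h1
    linear_combination h1
  have e4 : (-2 : ZMod p) ^ k * Q = P := by
    have hcong : ∀ i ∈ range k, (2 * (i : ZMod p) + 1) = (-2) * ((m : ZMod p) - i) :=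
      fun i hi => by linear_combination hm2
    rw [hP, Finset.prod_congr rfl hcong, Finset.prod_mul_distrib, Finset.prod_const,
      Finset.card_range, hQ]
  have h4 : (-4 : ZMod p) ^ k = (-2 : ZMod p) ^ k * 2 ^ k := by
    rw [← mul_pow]; norm_num
  have hne : F * F * 2 ^ k ≠ 0 :=
    mul_ne_zero (mul_ne_zero hfne hfne) (pow_ne_zero _ h2ne)
  refine mul_right_cancel₀ hne ?_
  calc A * (F * F * 2 ^ k) = A * (F * F) * 2 ^ k := by ring
    _ = (2 ^ k * F * P) * 2 ^ k := by rw [e1, c1]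
    _ = (2 ^ k * F * ((-2) ^ k * Q)) * 2 ^ k := by rw [e4]
    _ = ((m.descFactorial k : ℕ) : ZMod p) * ((-2) ^ k * 2 ^ k * 2 ^ k * F) := by
        rw [e3]; ring
    _ = (F * B) * ((-2) ^ k * 2 ^ k * 2 ^ k * F) := by rw [e2]
    _ = B * ((-2) ^ k * 2 ^ k) * (F * F * 2 ^ k) := by ring
    _ = B * (-4) ^ k * (F * F * 2 ^ k) := by rw [← h4]

theorem stmt5 (p : ℕ) (hp : p.Prime) (h5 : p % 5 = 1 ∨ p % 5 = 4) (a : ℕ) (ha : 1 ≤ a) :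
    (∑ k ∈ Finset.range (p ^ a),
      (Nat.fib (2 * k) : ZMod p) * (Nat.choose (2 * k) k : ZMod p) *
        (((-4 : ZMod p)) ^ k)⁻¹) = 0 := by
  haveI : Fact p.Prime := ⟨hp⟩
  have hp2' : p ≠ 2 := by rintro rfl; omega
  have hp5 : p ≠ 5 := by rintro rfl; omega
  have hp2 : p % 2 = 1 := Nat.odd_iff.mp (hp.odd_of_ne_two hp2')
  have hp1 : 2 ≤ p := hp.two_le
  set m := (p - 1) / 2 with hm
  have hmm : 2 * m + 1 = p := by omega
  have h2ne : (2 : ZMod p) ≠ 0 := by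
    intro h
    have : ((2 : ℕ) : ZMod p) = 0 := by exact_mod_cast h
    rw [ZMod.natCast_eq_zero_iff] at this
    have := (Nat.prime_dvd_prime_iff_eq hp (by norm_num)).mp this
    omega
  -- existence of sqrt 5
  haveI : Fact (Nat.Prime 5) := ⟨by norm_num⟩
  have hsq : IsSquare ((5 : ℕ) : ZMod p) := by
    have hiff := ZMod.exists_sq_eq_prime_iff_of_mod_four_eq_one (p := 5) (q := p)
      (by norm_num) hp2'
    rw [← hiff, ← ZMod.natCast_mod p 5]
    rcases h5 with h | h <;> rw [h]
    · exact ⟨1, by norm_num⟩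
    · exact ⟨2, by norm_num⟩
  obtain ⟨t, ht⟩ := hsq
  have ht5 : (5 : ZMod p) = t * t := by exact_mod_cast ht
  have ht0 : t ≠ 0 := by
    intro h
    rw [h, mul_zero] at ht5
    have : ((5 : ℕ) : ZMod p) = 0 := by exact_mod_cast ht5
    rw [ZMod.natCast_eq_zero_iff] at this
    have := (Nat.prime_dvd_prime_iff_eq hp (by norm_num)).mp this
    omega
  obtain ⟨α, hα⟩ : ∃ x : ZMod p, x = (1 + t) / 2 := ⟨_, rfl⟩
  obtain ⟨β, hβ⟩ : ∃ x : ZMod p, x = (1 - t) / 2 := ⟨_, rfl⟩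
  have h4z : (2 : ZMod p) * 2 ≠ 0 := mul_ne_zero h2ne h2ne
  have h2α : 2 * α = 1 + t := by rw [hα]; field_simp
  have h2β : 2 * β = 1 - t := by rw [hβ]; field_simp
  have hab_sum : α + β = 1 := mul_left_cancel₀ h2ne (by linear_combination h2α + h2β)
  have hab_mul : α * β = -1 := mul_left_cancel₀ h4z
    (by linear_combination (2 * β) * h2α + (1 + t) * h2β + ht5)
  have hts : α - β = t := mul_left_cancel₀ h2ne (by linear_combination h2α - h2β)
  have hfib : ∀ n : ℕ, (Nat.fib n : ZMod p) * t = α ^ n - β ^ n := fun n => by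
    rw [← hts]; exact fib_cast_lemma α β hab_sum hab_mul n
  set G : ℕ → ZMod p := fun k => (Nat.choose (2 * k) k : ZMod p) * (((-4 : ZMod p)) ^ k)⁻¹
    with hG
  have h4ne : (-4 : ZMod p) ≠ 0 := by
    intro h
    have : (-2 : ZMod p) * 2 = 0 := by linear_combination h
    rcases mul_eq_zero.mp this with h' | h'
    · exact h2ne (by linear_combination -h')
    · exact h2ne h'
  -- G r = C(m, r) for r < p
  have hGm : ∀ r < p, G r = (Nat.choose m r : ZMod p) := by
    intro r hr
    by_cases h : r ≤ m
    · simp only [hG]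
      rw [central_eq hp2 h]
      exact mul_inv_cancel_right₀ (pow_ne_zero _ h4ne) _
    · simp only [hG]
      rw [central_eq_zero (by omega) hr, Nat.choose_eq_zero_of_lt (by omega)]
      simp
  -- G is multiplicative over base-p digits
  have hGmul : ∀ j r, r < p → G (j * p + r) = G j * G r := by
    intro j r hr
    have hc : ((-4 : ZMod p)) ^ (j * p + r) = (-4) ^ j * (-4) ^ r := by
      rw [pow_add, pow_mul, ZMod.pow_card]
    have hmodr : (j * p + r) % p = r := by
      rw [mul_comm, Nat.mul_add_mod, Nat.mod_eq_of_lt hr]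
    have hdivr : (j * p + r) / p = j := by
      rw [mul_comm, Nat.mul_add_div (by omega), Nat.div_eq_of_lt hr, add_zero]
    have key : (Nat.choose (2 * (j * p + r)) (j * p + r) : ZMod p) =
        (Nat.choose (2 * r) r : ZMod p) * (Nat.choose (2 * j) j : ZMod p) := by
      rw [lucasZ, hmodr, hdivr]
      have hrw : 2 * (j * p + r) = 2 * r + p * (2 * j) := by ring
      by_cases h2r : 2 * r < p
      · rw [hrw, Nat.add_mul_mod_self_left, Nat.add_mul_div_left _ _ (by omega : 0 < p),
          Nat.mod_eq_of_lt h2r, Nat.div_eq_of_lt h2r, zero_add]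
      · have hmod2 : (2 * r + p * (2 * j)) % p = 2 * r - p := by
          rw [Nat.add_mul_mod_self_left, Nat.mod_eq_sub_mod (by omega), Nat.mod_eq_of_lt (by omega)]
        have hdiv2 : (2 * r + p * (2 * j)) / p = 2 * j + 1 := by
          rw [Nat.add_mul_div_left _ _ (by omega : 0 < p)]
          have : 2 * r / p = 1 := by
            rw [Nat.div_eq_sub_div (by omega) (by omega), Nat.div_eq_of_lt (by omega)]
          omega
        rw [hrw, hmod2, hdiv2, Nat.choose_eq_zero_of_lt (by omega), Nat.cast_zero, zero_mul]
        rw [central_eq_zero (by omega) hr, zero_mul]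
    simp only [hG]
    rw [key, hc, mul_inv]
    ring
  -- geometric collapse
  have hmain : ∀ x : ZMod p, ∀ b : ℕ,
      ∑ k ∈ range (p ^ b), G k * x ^ (2 * k) = (∑ r ∈ range p, G r * x ^ (2 * r)) ^ b := by
    intro x b
    induction b with
    | zero => simp [hG]
    | succ b ih =>
        rw [pow_succ, sum_range_mul_eq]
        have hinner : ∀ j, ∑ r ∈ range p, G (j * p + r) * x ^ (2 * (j * p + r))
            = G j * x ^ (2 * j) * ∑ r ∈ range p, G r * x ^ (2 * r) := by
          intro j
          rw [Finset.mul_sum]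
          refine Finset.sum_congr rfl fun r hrr => ?_
          have hr : r < p := Finset.mem_range.mp hrr
          have hx : x ^ (2 * (j * p + r)) = x ^ (2 * j) * x ^ (2 * r) := by
            rw [show 2 * (j * p + r) = 2 * j * p + 2 * r by ring, pow_add, pow_mul, ZMod.pow_card]
          rw [hGmul j r hr, hx]
          ring
        rw [Finset.sum_congr rfl fun j _ => hinner j, ← Finset.sum_mul, ih, pow_succ]
  have hval : ∀ x : ZMod p, ∑ r ∈ range p, G r * x ^ (2 * r) = (1 + x ^ 2) ^ m := by
    intro x
    have h1 : ∑ r ∈ range p, G r * x ^ (2 * r) =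
        ∑ r ∈ range p, (Nat.choose m r : ZMod p) * (x ^ 2) ^ r :=
      Finset.sum_congr rfl fun r hr => by
        rw [hGm r (Finset.mem_range.mp hr), pow_mul]
    rw [h1]
    rw [← Finset.sum_subset (Finset.range_subset_range.mpr (by omega : m + 1 ≤ p))
      (fun r _ hr => by
        have hr' : ¬ r < m + 1 := fun hc => hr (Finset.mem_range.mpr hc)
        rw [Nat.choose_eq_zero_of_lt (by omega), Nat.cast_zero, zero_mul])]
    rw [add_comm (1 : ZMod p) (x ^ 2), add_pow]
    refine Finset.sum_congr rfl fun r hr => ?_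
    rw [one_pow]
    ring
  -- special values
  have hαval : 1 + α ^ 2 = t * α := mul_left_cancel₀ h4z
    (by linear_combination (2 * α + 1 - t) * h2α + ht5)
  have hβval : 1 + β ^ 2 = -(t * β) := mul_left_cancel₀ h4z
    (by linear_combination (2 * β + 1 + t) * h2β + ht5)
  have hα0 : α ≠ 0 := by
    intro h
    rw [h, zero_mul] at hab_mul
    exact one_ne_zero (by linear_combination hab_mul)
  have hpow : (t * α) ^ m = (-(t * β)) ^ m := by
    have hβα : t * α = (-(t * β)) * α ^ 2 := by linear_combination t * α * hab_mul
    rw [hβα, mul_pow, ← pow_mul, show 2 * m = p - 1 by omega,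
      ZMod.pow_card_sub_one_eq_one hα0, mul_one]
  -- final assembly
  have hS : t * (∑ k ∈ Finset.range (p ^ a),
      (Nat.fib (2 * k) : ZMod p) * (Nat.choose (2 * k) k : ZMod p) *
        (((-4 : ZMod p)) ^ k)⁻¹) = 0 := by
    rw [Finset.mul_sum]
    have hterm : ∀ k : ℕ, t * ((Nat.fib (2 * k) : ZMod p) * (Nat.choose (2 * k) k : ZMod p) *
        (((-4 : ZMod p)) ^ k)⁻¹) = G k * α ^ (2 * k) - G k * β ^ (2 * k) := by
      intro k
      have h := hfib (2 * k)
      simp only [hG]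
      calc t * ((Nat.fib (2 * k) : ZMod p) * (Nat.choose (2 * k) k : ZMod p) *
            (((-4 : ZMod p)) ^ k)⁻¹)
          = ((Nat.fib (2 * k) : ZMod p) * t) *
            ((Nat.choose (2 * k) k : ZMod p) * (((-4 : ZMod p)) ^ k)⁻¹) := by ring
        _ = (α ^ (2 * k) - β ^ (2 * k)) *
            ((Nat.choose (2 * k) k : ZMod p) * (((-4 : ZMod p)) ^ k)⁻¹) := by rw [h]
        _ = _ := by ring
    rw [Finset.sum_congr rfl fun k _ => hterm k, Finset.sum_sub_distrib,
      hmain α a, hmain β a, hval α, hval β, hαval, hβval, hpow, sub_self]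
  rcases mul_eq_zero.mp hS with h | h
  · exact absurd h ht0
  · exact h
end

section
/- Let p ≡ ±1 (mod 5) be a prime and a ≥ 1. Then Σ_{k=0}^{p^a-1} F_{2k} · C(2k,k)² / 16^k ≡ 0 (mod p). -/
open Finset

section Aux
variable {p : ℕ} [hp : Fact p.Prime]

private lemma my_sum_range_mul {M : Type*} [AddCommMonoid M] (f : ℕ → M) (N n : ℕ) :
    ∑ k ∈ Finset.range (N * n), f k
      = ∑ q ∈ Finset.range N, ∑ r ∈ Finset.range n, f (q * n + r) := by
  induction N with
  | zero => simp
  | succ N ih =>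
      rw [Nat.succ_mul, Finset.sum_range_add, ih, Finset.sum_range_succ]

private lemma my_central_zero {r : ℕ} (hr : r < p) (h2 : p ≤ 2 * r) :
    (((2 * r).choose r : ℕ) : ZMod p) = 0 := by
  rw [ZMod.natCast_eq_zero_iff]
  have := Nat.Prime.dvd_choose_add hp.out hr hr (by omega)
  rwa [← two_mul] at this

private lemma my_lucas_step (q r : ℕ) (hr : r < p) :
    ((Nat.choose (2 * (q * p + r)) (q * p + r) : ℕ) : ZMod p)
      = (((2 * q).choose q : ℕ) : ZMod p) * (((2 * r).choose r : ℕ) : ZMod p) := by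
  have hp0 : 0 < p := hp.out.pos
  have lucas := (Choose.choose_modEq_choose_mod_mul_choose_div
    (n := 2 * (q * p + r)) (k := q * p + r) (p := p))
  have heq : ((Nat.choose (2 * (q * p + r)) (q * p + r) : ℕ) : ZMod p)
      = ((Nat.choose ((2 * (q * p + r)) % p) ((q * p + r) % p) *
          Nat.choose ((2 * (q * p + r)) / p) ((q * p + r) / p) : ℕ) : ZMod p) := by
    have := (ZMod.intCast_eq_intCast_iff _ _ _).mpr lucas
    push_cast at this ⊢
    exact_mod_cast this
  have hkmod : (q * p + r) % p = r := by
    simp [Nat.add_mod, Nat.mul_mod_left, Nat.mod_eq_of_lt hr]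
  have hkdiv : (q * p + r) / p = q := by
    rw [add_comm, Nat.add_mul_div_right _ _ hp0, Nat.div_eq_of_lt hr, zero_add]
  by_cases h2r : 2 * r < p
  · have hnmod : (2 * (q * p + r)) % p = 2 * r := by
      have : 2 * (q * p + r) = (2 * q) * p + 2 * r := by ring
      rw [this]
      simp [Nat.add_mod, Nat.mul_mod_left, Nat.mod_eq_of_lt h2r]
    have hndiv : (2 * (q * p + r)) / p = 2 * q := by
      have : 2 * (q * p + r) = 2 * r + (2 * q) * p := by ring
      rw [this, Nat.add_mul_div_right _ _ hp0, Nat.div_eq_of_lt h2r, zero_add]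
    rw [heq, hnmod, hndiv, hkmod, hkdiv]
    push_cast
    ring
  · have hnmod : (2 * (q * p + r)) % p = 2 * r - p := by
      have h1 : 2 * (q * p + r) = (2 * r - p) + (2 * q + 1) * p := by
        have e : (2 * q + 1) * p = 2 * (q * p) + p := by ring
        have e2 : 2 * (q * p + r) = 2 * (q * p) + 2 * r := by ring
        omega
      rw [h1, Nat.add_mul_mod_self_right, Nat.mod_eq_of_lt (by omega)]
    have hz : Nat.choose ((2 * (q * p + r)) % p) ((q * p + r) % p) = 0 := by
      rw [hnmod, hkmod]
      exact Nat.choose_eq_zero_of_lt (by omega)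
    rw [heq, hz, zero_mul, Nat.cast_zero, my_central_zero hr (by omega), mul_zero]

private lemma my_binet (α β : ZMod p) (hα : α ^ 2 = α + 1) (hβ : β ^ 2 = β + 1) :
    ∀ n : ℕ, (Nat.fib n : ZMod p) * (α - β) = α ^ n - β ^ n := by
  intro n
  induction n using Nat.twoStepInduction with
  | zero => simp
  | one => simp
  | more n ih1 ih2 =>
      rw [Nat.fib_add_two]
      push_cast
      have e1 : α ^ (n + 2) = α ^ n * α + α ^ n := by
        rw [pow_add, hα]; ring
      have e2 : β ^ (n + 2) = β ^ n * β + β ^ n := by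
        rw [pow_add, hβ]; ring
      have e3 : α ^ (n + 1) = α ^ n * α := by rw [pow_succ]
      have e4 : β ^ (n + 1) = β ^ n * β := by rw [pow_succ]
      rw [add_mul, ih1, ih2, e1, e2, e3, e4]
      ring

end Aux
open Finset
section Aux2
variable {p : ℕ} [hp : Fact p.Prime]

private lemma my_cast_ne_zero {n : ℕ} (h0 : 0 < n) (hn : n < p) : ((n : ℕ) : ZMod p) ≠ 0 := by
  intro h
  rw [ZMod.natCast_eq_zero_iff] at h
  exact absurd (Nat.le_of_dvd h0 h) (by omega)

private lemma my_choose_half {m : ℕ} (hm : p = 2 * m + 1) :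
    ∀ r ≤ m, (((2 * r).choose r : ℕ) : ZMod p) = (-4) ^ r * ((m.choose r : ℕ) : ZMod p) := by
  intro r
  induction r with
  | zero => simp
  | succ r ih =>
      intro hr1
      have ihr := ih (by omega)
      -- nat identities
      have A1 : (2 * r + 1) * (2 * r).choose r = (2 * r + 1).choose (r + 1) * (r + 1) := by
        have := Nat.add_one_mul_choose_eq (2 * r) r
        simpa [Nat.succ_eq_add_one] using this
      have A2 : (2 * r + 2) * (2 * r + 1).choose r = (2 * r + 2).choose (r + 1) * (r + 1) := by
        have := Nat.add_one_mul_choose_eq (2 * r + 1) r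
        simpa [Nat.succ_eq_add_one] using this
      have A3 : (2 * r + 1).choose r = (2 * r + 1).choose (r + 1) := by
        have := Nat.choose_symm (n := 2 * r + 1) (k := r + 1) (by omega)
        simpa [show 2 * r + 1 - (r + 1) = r by omega] using this
      have A4 : (m.choose (r + 1)) * (r + 1) = m.choose r * (m - r) :=
        Nat.choose_succ_right_eq m r
      -- combined nat identity
      have key : (r + 1) * ((r + 1) * (2 * (r + 1)).choose (r + 1))
          = (2 * r + 2) * ((2 * r + 1) * (2 * r).choose r) := by
        calc (r + 1) * ((r + 1) * (2 * (r + 1)).choose (r + 1))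
            = (r + 1) * ((2 * r + 2).choose (r + 1) * (r + 1)) := by ring_nf
          _ = (r + 1) * ((2 * r + 2) * (2 * r + 1).choose r) := by rw [A2]
          _ = (2 * r + 2) * ((2 * r + 1).choose (r + 1) * (r + 1)) := by rw [A3]; ring
          _ = (2 * r + 2) * ((2 * r + 1) * (2 * r).choose r) := by rw [← A1]
      have hr1p : ((r : ZMod p) + 1) ≠ 0 := by
        have := my_cast_ne_zero (p := p) (n := r + 1) (by omega) (by omega)
        push_cast at this; exact this
      apply mul_left_cancel₀ (mul_ne_zero hr1p hr1p)
      rw [mul_assoc, mul_assoc]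
      have keyc : (((r : ZMod p) + 1) * (((r : ZMod p) + 1) *
          (((2 * (r + 1)).choose (r + 1) : ℕ) : ZMod p)))
          = (2 * (r : ZMod p) + 2) * ((2 * (r : ZMod p) + 1) * (((2 * r).choose r : ℕ) : ZMod p)) := by
        exact_mod_cast congrArg (Nat.cast : ℕ → ZMod p) key
      have A4c : ((m.choose (r + 1) : ℕ) : ZMod p) * ((r : ZMod p) + 1)
          = ((m.choose r : ℕ) : ZMod p) * ((m : ZMod p) - (r : ZMod p)) := by
        have := congrArg (Nat.cast : ℕ → ZMod p) A4
        push_cast [Nat.cast_sub (by omega : r ≤ m)] at this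
        exact_mod_cast this
      have hpz : (2 * (m : ZMod p) + 1) = 0 := by
        have h0 : ((2 * m + 1 : ℕ) : ZMod p) = 0 := by
          rw [← hm]; exact ZMod.natCast_self p
        push_cast at h0
        exact h0
      -- goal: (r+1)*(r+1) * cast = (r+1)*(r+1) * ((-4)^(r+1) * choose m (r+1))
      have expand : ((r : ZMod p) + 1) * (((r : ZMod p) + 1) *
            ((-4) ^ (r + 1) * ((m.choose (r + 1) : ℕ) : ZMod p)))
          = (-4) ^ (r + 1) * ((r : ZMod p) + 1) *
            (((m.choose (r + 1) : ℕ) : ZMod p) * ((r : ZMod p) + 1)) := by ring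
      calc ((r : ZMod p) + 1) * (((r : ZMod p) + 1) * (((2 * (r + 1)).choose (r + 1) : ℕ) : ZMod p))
          = (2 * (r : ZMod p) + 2) * ((2 * (r : ZMod p) + 1) * (((2 * r).choose r : ℕ) : ZMod p)) := keyc
        _ = (2 * (r : ZMod p) + 2) * ((2 * (r : ZMod p) + 1) * ((-4) ^ r * ((m.choose r : ℕ) : ZMod p))) := by
            rw [ihr]
        _ = (-4) ^ (r + 1) * ((r : ZMod p) + 1) * (((m.choose r : ℕ) : ZMod p) * ((m : ZMod p) - (r : ZMod p))) := by
            have hlin : (2 * (r : ZMod p) + 2) * (2 * (r : ZMod p) + 1)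
                = (-4) * ((r : ZMod p) + 1) * ((m : ZMod p) - (r : ZMod p)) := by
              have : (2 * (r : ZMod p) + 2) * (2 * (r : ZMod p) + 1)
                  - (-4) * ((r : ZMod p) + 1) * ((m : ZMod p) - (r : ZMod p))
                  = 2 * ((r : ZMod p) + 1) * (2 * (m : ZMod p) + 1) := by ring
              have h2 := hpz
              linear_combination this + 2 * ((r : ZMod p) + 1) * h2
            calc (2 * (r : ZMod p) + 2) * ((2 * (r : ZMod p) + 1) * ((-4) ^ r * ((m.choose r : ℕ) : ZMod p)))
                = ((2 * (r : ZMod p) + 2) * (2 * (r : ZMod p) + 1)) * ((-4) ^ r * ((m.choose r : ℕ) : ZMod p)) := by ring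
              _ = ((-4) * ((r : ZMod p) + 1) * ((m : ZMod p) - (r : ZMod p))) * ((-4) ^ r * ((m.choose r : ℕ) : ZMod p)) := by rw [hlin]
              _ = (-4) ^ (r + 1) * ((r : ZMod p) + 1) * (((m.choose r : ℕ) : ZMod p) * ((m : ZMod p) - (r : ZMod p))) := by ring
        _ = (-4) ^ (r + 1) * ((r : ZMod p) + 1) * (((m.choose (r + 1) : ℕ) : ZMod p) * ((r : ZMod p) + 1)) := by
            rw [A4c]
        _ = ((r : ZMod p) + 1) * (((r : ZMod p) + 1) * ((-4) ^ (r + 1) * ((m.choose (r + 1) : ℕ) : ZMod p))) := by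
            ring
end Aux2

set_option linter.unusedVariables false in
theorem stmt6 (p : ℕ) (hp : p.Prime) (h5 : p % 5 = 1 ∨ p % 5 = 4) (a : ℕ) (ha : 1 ≤ a) :
    (∑ k ∈ Finset.range (p ^ a),
      (Nat.fib (2 * k) : ZMod p) * (Nat.choose (2 * k) k : ZMod p) ^ 2 *
        ((16 : ZMod p) ^ k)⁻¹) = 0 := by
  haveI hfp : Fact p.Prime := ⟨hp⟩
  have hp2 : p ≠ 2 := by rintro rfl; omega
  have hp5 : p ≠ 5 := by rintro rfl; omega
  have hple : 2 ≤ p := hp.two_le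
  have hodd : p % 2 = 1 := hp.eq_two_or_odd.resolve_left hp2
  obtain ⟨m, hm⟩ : ∃ m, p = 2 * m + 1 := ⟨p / 2, by omega⟩
  haveI : Fact (Nat.Prime 5) := ⟨by norm_num⟩
  have hsq : IsSquare ((5 : ℕ) : ZMod p) := by
    rw [← ZMod.exists_sq_eq_prime_iff_of_mod_four_eq_one (by norm_num) hp2]
    have hcast : ((p : ℕ) : ZMod 5) = ((p % 5 : ℕ) : ZMod 5) := (ZMod.natCast_mod p 5).symm
    rw [hcast]
    rcases h5 with h | h
    · rw [h]; exact ⟨1, by norm_num⟩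
    · rw [h]; exact ⟨2, by norm_num⟩
  obtain ⟨s, hs⟩ := hsq
  have hs5 : s * s = 5 := by rw [← hs]; push_cast; ring
  have h2ne : (2 : ZMod p) ≠ 0 := by
    have h3 : 3 ≤ p := by omega
    have := my_cast_ne_zero (p := p) (n := 2) (by norm_num) (by omega)
    push_cast at this; exact this
  set α : ZMod p := (1 + s) * (2 : ZMod p)⁻¹ with hαdef
  set β : ZMod p := (1 - s) * (2 : ZMod p)⁻¹ with hβdef
  have hα : α ^ 2 = α + 1 := by
    rw [hαdef]; field_simp; linear_combination hs5
  have hβ : β ^ 2 = β + 1 := by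
    rw [hβdef]; field_simp; linear_combination hs5
  have hαβ : α * β = -1 := by
    rw [hαdef, hβdef]; field_simp; linear_combination -hs5
  have hsub : α - β = s := by
    rw [hαdef, hβdef]; field_simp; ring
  have hs0 : s ≠ 0 := by
    intro h
    have h5z : ((5 : ℕ) : ZMod p) = 0 := by rw [hs, h, mul_zero]
    rw [ZMod.natCast_eq_zero_iff] at h5z
    have := (Nat.prime_dvd_prime_iff_eq hp (by norm_num)).mp h5z
    exact hp5 this
  have hα0 : α ≠ 0 := by
    intro h
    have h1 : (-1 : ZMod p) = 0 := by rw [← hαβ, h, zero_mul]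
    exact one_ne_zero (neg_eq_zero.mp h1)
  have h16 : (16 : ZMod p) ≠ 0 := by
    have : ((2 : ZMod p)) ^ 4 = 16 := by norm_num
    rw [← this]
    exact pow_ne_zero _ h2ne
  set t : ZMod p → ℕ → ZMod p :=
    fun x k => (((2 * k).choose k : ℕ) : ZMod p) ^ 2 * x ^ (2 * k) * ((16 : ZMod p) ^ k)⁻¹
    with ht
  have hfact : ∀ (x : ZMod p) (q r : ℕ), r < p → t x (q * p + r) = t x q * t x r := by
    intro x q r hr
    simp only [ht]
    rw [my_lucas_step q r hr]
    have e1 : x ^ (2 * (q * p + r)) = x ^ (2 * q) * x ^ (2 * r) := by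
      have h' : 2 * (q * p + r) = (2 * q) * p + 2 * r := by ring
      rw [h', pow_add, pow_mul, ZMod.pow_card]
    have e2 : ((16 : ZMod p) ^ (q * p + r))⁻¹ = ((16 : ZMod p) ^ q)⁻¹ * ((16 : ZMod p) ^ r)⁻¹ := by
      rw [pow_add, pow_mul, ZMod.pow_card, mul_inv]
    rw [e1, e2]; ring
  have hGpow : ∀ (x : ZMod p) (b : ℕ),
      (∑ k ∈ Finset.range (p ^ b), t x k) = (∑ k ∈ Finset.range p, t x k) ^ b := by
    intro x b
    induction b with
    | zero => simp [ht]
    | succ b ih =>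
        rw [pow_succ, pow_succ, ← ih, my_sum_range_mul (fun k => t x k) (p ^ b) p]
        rw [Finset.sum_mul_sum]
        refine Finset.sum_congr rfl fun q _ => ?_
        refine Finset.sum_congr rfl fun r hr => ?_
        exact hfact x q r (Finset.mem_range.mp hr)
  have hsplit : ∀ x : ZMod p, (∑ k ∈ Finset.range p, t x k)
      = ∑ k ∈ Finset.range (m + 1), ((m.choose k : ℕ) : ZMod p) ^ 2 * x ^ (2 * k) := by
    intro x
    have hx : Finset.range p = Finset.range ((m + 1) + m) := by
      congr 1; omega
    rw [hx, Finset.sum_range_add]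
    have hz : ∀ i ∈ Finset.range m, t x ((m + 1) + i) = 0 := by
      intro i hi
      have him : i < m := Finset.mem_range.mp hi
      simp only [ht]
      rw [my_central_zero (p := p) (by omega) (by omega)]
      simp
    rw [Finset.sum_eq_zero hz, add_zero]
    refine Finset.sum_congr rfl fun r hr => ?_
    have hrm : r ≤ m := by have := Finset.mem_range.mp hr; omega
    simp only [ht]
    rw [my_choose_half hm r hrm]
    have hsq4 : ((-4 : ZMod p) ^ r * ((m.choose r : ℕ) : ZMod p)) ^ 2
        = (16 : ZMod p) ^ r * ((m.choose r : ℕ) : ZMod p) ^ 2 := by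
      rw [mul_pow, ← pow_mul, mul_comm r 2, pow_mul]
      norm_num
    rw [hsq4]
    have h16r : (16 : ZMod p) ^ r ≠ 0 := pow_ne_zero _ h16
    field_simp
  have hAB : (∑ k ∈ Finset.range p, t α k) = (∑ k ∈ Finset.range p, t β k) := by
    rw [hsplit α, hsplit β]
    rw [← Finset.sum_range_reflect]
    refine Finset.sum_congr rfl fun j hj => ?_
    have hjm : j ≤ m := by have := Finset.mem_range.mp hj; omega
    have hidx : m + 1 - 1 - j = m - j := by omega
    rw [hidx, Nat.choose_symm hjm]
    congr 1
    have hα2m : α ^ (2 * m) = 1 := by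
      have hpm : p - 1 = 2 * m := by omega
      rw [← hpm]; exact ZMod.pow_card_sub_one_eq_one hα0
    have hcancel : α ^ (2 * (m - j)) * α ^ (2 * j) = β ^ (2 * j) * α ^ (2 * j) := by
      rw [← pow_add]
      have harith : 2 * (m - j) + 2 * j = 2 * m := by omega
      rw [harith, hα2m]
      symm
      rw [← mul_pow, mul_comm β α, hαβ, pow_mul]
      norm_num
    exact mul_right_cancel₀ (pow_ne_zero _ hα0) hcancel
  have hmain : (∑ k ∈ Finset.range (p ^ a),
      (Nat.fib (2 * k) : ZMod p) * (Nat.choose (2 * k) k : ZMod p) ^ 2 *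
        ((16 : ZMod p) ^ k)⁻¹) * s
      = (∑ k ∈ Finset.range (p ^ a), t α k) - (∑ k ∈ Finset.range (p ^ a), t β k) := by
    rw [Finset.sum_mul, ← Finset.sum_sub_distrib]
    refine Finset.sum_congr rfl fun k _ => ?_
    simp only [ht]
    have hb := my_binet α β hα hβ (2 * k)
    rw [hsub] at hb
    calc (Nat.fib (2 * k) : ZMod p) * (Nat.choose (2 * k) k : ZMod p) ^ 2 *
          ((16 : ZMod p) ^ k)⁻¹ * s
        = ((Nat.fib (2 * k) : ZMod p) * s) *
            ((Nat.choose (2 * k) k : ZMod p) ^ 2 * ((16 : ZMod p) ^ k)⁻¹) := by ring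
      _ = (α ^ (2 * k) - β ^ (2 * k)) *
            ((Nat.choose (2 * k) k : ZMod p) ^ 2 * ((16 : ZMod p) ^ k)⁻¹) := by rw [hb]
      _ = (Nat.choose (2 * k) k : ZMod p) ^ 2 * α ^ (2 * k) * ((16 : ZMod p) ^ k)⁻¹
          - (Nat.choose (2 * k) k : ZMod p) ^ 2 * β ^ (2 * k) * ((16 : ZMod p) ^ k)⁻¹ := by ring
  rw [hGpow α a, hGpow β a, hAB, sub_self] at hmain
  rcases mul_eq_zero.mp hmain with h | h
  · exact h
  · exact absurd h hs0
end

section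
/- Let p > 5 be a prime with p ≡ 1 or 4 (mod 5). Then Σ_{k=0}^{p-1} F_k · C(2k,k)² / (-16)^k ≡ 0 (mod p), where F_k is the k-th Fibonacci number. -/
open Finset

lemma stmt8_sqrt5 (p : ℕ) [Fact p.Prime] (hp5 : 5 < p) (h5 : p % 5 = 1 ∨ p % 5 = 4) :
    ∃ s : ZMod p, s ^ 2 = 5 := by
  have hp2 : p ≠ 2 := by omega
  have h5p : ((5 : ℕ) : ZMod p) ≠ 0 := by
    rw [Ne, ZMod.natCast_eq_zero_iff]
    intro h
    have := Nat.le_of_dvd (by norm_num) h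
    omega
  haveI : Fact (Nat.Prime 5) := ⟨by norm_num⟩
  have hrec : legendreSym p 5 = legendreSym 5 p :=
    legendreSym.quadratic_reciprocity_one_mod_four (p := 5) (q := p) (by norm_num) hp2
  have hmod : legendreSym 5 (p : ℤ) = legendreSym 5 ((p : ℤ) % 5) := legendreSym.mod 5 p
  have hpm : ((p : ℤ) % 5) = ((p % 5 : ℕ) : ℤ) := by omega
  have hone : legendreSym 5 (p : ℤ) = 1 := by
    rw [hmod, hpm]
    rcases h5 with h | h <;> rw [h] <;> norm_num
  have h1 : legendreSym p 5 = 1 := by rw [hrec]; exact hone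
  have h2 : IsSquare ((5 : ℤ) : ZMod p) :=
    (legendreSym.eq_one_iff p (by push_cast; exact h5p)).mp h1
  obtain ⟨r, hr⟩ := h2
  exact ⟨r, by rw [sq, ← hr]; push_cast; ring⟩

lemma stmt8_powsum (p : ℕ) [Fact p.Prime] (n : ℕ) (hn : 0 < n) (hn2 : n < 2 * (p - 1)) :
    (∑ x : ZMod p, x ^ n) = if n = p - 1 then -1 else 0 := by
  classical
  let φ : (ZMod p)ˣ ↪ ZMod p := ⟨fun x ↦ x, Units.val_injective⟩
  have hmap : univ.map φ = univ \ {0} := by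
    ext x
    simpa only [mem_map, mem_univ, Function.Embedding.coeFn_mk, true_and, mem_sdiff,
      mem_singleton, φ] using (show (∃ a : (ZMod p)ˣ, (a : ZMod p) = x) ↔ x ≠ 0 from isUnit_iff_ne_zero)
  have h1 : (∑ x : ZMod p, x ^ n) = ∑ x : (ZMod p)ˣ, ((x : ZMod p)) ^ n := by
    calc
      ∑ x : ZMod p, x ^ n = ∑ x ∈ univ \ {(0 : ZMod p)}, x ^ n := by
        rw [← sum_sdiff ({0} : Finset (ZMod p)).subset_univ, sum_singleton, zero_pow hn.ne',
          add_zero]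
      _ = ∑ x : (ZMod p)ˣ, ((x : ZMod p)) ^ n := by simp [φ, ← hmap, univ.sum_map φ]
  have h2 := FiniteField.sum_pow_units (ZMod p) n
  rw [ZMod.card] at h2
  rw [h1, h2]
  congr 1
  simp only [eq_iff_iff]
  constructor
  · rintro ⟨c, rfl⟩
    have hp1 : 0 < p - 1 := by
      have := (Fact.out : p.Prime).two_le; omega
    rw [mul_comm 2 (p - 1)] at hn2
    have hc2 : c < 2 := Nat.lt_of_mul_lt_mul_left hn2
    have hc0 : c ≠ 0 := by rintro rfl; simp at hn
    have hc : c = 1 := by omega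
    rw [hc, mul_one]
  · rintro rfl; exact ⟨1, (mul_one _).symm⟩

lemma stmt8_choose_eq (p : ℕ) [Fact p.Prime] (hodd : p % 2 = 1) (hp1 : 5 < p) :
    ∀ k, k < p → ((Nat.choose (2*k) k : ZMod p)) = (-4)^k * (Nat.choose ((p-1)/2) k : ZMod p) := by
  intro k
  induction k with
  | zero => simp
  | succ n ih =>
    intro hn1
    have IH := ih (by omega)
    set m := (p-1)/2 with hm
    have h2m : 2 * m = p - 1 := by omega
    have hnz : ((n:ZMod p) + 1) ≠ 0 := by
      have h' : (((n+1 : ℕ)) : ZMod p) ≠ 0 := by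
        rw [Ne, ZMod.natCast_eq_zero_iff]
        intro hdvd
        have := Nat.le_of_dvd (by omega) hdvd
        omega
      push_cast at h'; exact h'
    have e1 := Nat.succ_mul_centralBinom_succ n
    rw [Nat.centralBinom_eq_two_mul_choose, Nat.centralBinom_eq_two_mul_choose] at e1
    have e2 := Nat.choose_succ_right_eq m n
    have hpm1 : ((p - 1 : ℕ) : ZMod p) = -1 := by
      have h' : ((p - 1 : ℕ) : ZMod p) = (p:ZMod p) - 1 := by
        push_cast [Nat.cast_sub (by omega : 1 ≤ p)]; ring
      rw [h', ZMod.natCast_self]; ring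
    have h2m' : (2:ZMod p) * (m:ZMod p) = -1 := by
      rw [show ((2:ZMod p)) = ((2:ℕ):ZMod p) by norm_cast, ← Nat.cast_mul, h2m, hpm1]
    have hlin : (2:ZMod p) * (2*(n:ZMod p)+1) = (-4) * ((m:ZMod p) - n) := by
      linear_combination 2 * h2m'
    have hkey : ((Nat.choose m n : ZMod p)) * ((m:ZMod p) - n)
        = ((Nat.choose m n * (m - n) : ℕ) : ZMod p) := by
      rcases le_or_gt n m with h | h
      · push_cast [Nat.cast_sub h]; ring
      · have h0 : Nat.choose m n = 0 := Nat.choose_eq_zero_of_lt h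
        simp [h0]
    have ce1 : ((n:ZMod p)+1) * (Nat.choose (2*(n+1)) (n+1) : ZMod p)
        = 2*(2*(n:ZMod p)+1) * (Nat.choose (2*n) n : ZMod p) := by
      have := congrArg (Nat.cast : ℕ → ZMod p) e1
      push_cast at this
      linear_combination this
    apply mul_left_cancel₀ hnz
    calc ((n:ZMod p)+1) * (Nat.choose (2*(n+1)) (n+1) : ZMod p)
        = 2*(2*(n:ZMod p)+1) * (Nat.choose (2*n) n : ZMod p) := ce1
      _ = (-4) * ((m:ZMod p) - n) * ((-4)^n * (Nat.choose m n : ZMod p)) := by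
          rw [IH]
          rw [show (2:ZMod p)*(2*(n:ZMod p)+1) * ((-4)^n * (Nat.choose m n : ZMod p))
            = ((2:ZMod p)*(2*(n:ZMod p)+1)) * ((-4)^n * (Nat.choose m n : ZMod p)) by ring, hlin]
      _ = (-4)^(n+1) * ((Nat.choose m n : ZMod p) * ((m:ZMod p) - n)) := by ring
      _ = (-4)^(n+1) * ((Nat.choose m n * (m - n) : ℕ) : ZMod p) := by rw [hkey]
      _ = (-4)^(n+1) * ((Nat.choose m (n+1) * (n+1) : ℕ) : ZMod p) := by rw [← e2]
      _ = ((n:ZMod p)+1) * ((-4)^(n+1) * (Nat.choose m (n+1) : ZMod p)) := by push_cast; ring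

lemma stmt8_G_one_sub (p : ℕ) [Fact p.Prime] (m : ℕ) (t : ZMod p) :
    (∑ x : ZMod p, (x*(x-1)*(x-(1-t)))^m) = (-1)^m * ∑ x : ZMod p, (x*(x-1)*(x-t))^m := by
  rw [Finset.mul_sum]
  apply Fintype.sum_equiv (Equiv.subLeft (1 : ZMod p))
  intro x
  have h1 : (Equiv.subLeft (1 : ZMod p)) x = 1 - x := rfl
  rw [h1]
  have h2 : x*(x-1)*(x-(1-t)) = (-1) * ((1-x)*((1-x)-1)*((1-x)-t)) := by ring
  rw [h2, mul_pow]

lemma stmt8_G_inv (p : ℕ) [Fact p.Prime] (m : ℕ) (hpm : p - 1 = 2*m) (t : ZMod p) (ht : t ≠ 0) :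
    (∑ x : ZMod p, (x*(x-1)*(x-t⁻¹))^m) = t^m * ∑ x : ZMod p, (x*(x-1)*(x-t))^m := by
  have ht2 : t^(2*m) = 1 := by
    rw [← hpm]; exact ZMod.pow_card_sub_one_eq_one ht
  have htm : (t^m)⁻¹ = t^m := by
    apply inv_eq_of_mul_eq_one_right
    rw [← pow_add, ← two_mul, ht2]
  have key : (∑ x : ZMod p, (x*(x-1)*(x-t⁻¹))^m)
      = ∑ y : ZMod p, ((t⁻¹*y)*((t⁻¹*y)-1)*((t⁻¹*y)-t⁻¹))^m := by
    apply Fintype.sum_equiv (Equiv.mulLeft₀ t⁻¹ (inv_ne_zero ht)).symm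
    intro x
    have h0 : ((Equiv.mulLeft₀ t⁻¹ (inv_ne_zero ht)).symm x) = t * x := by
      simp [Equiv.mulLeft₀]
    rw [h0]
    have h3 : (t⁻¹*(t*x))*((t⁻¹*(t*x))-1)*((t⁻¹*(t*x))-t⁻¹) = x*(x-1)*(x-t⁻¹) := by
      field_simp
    rw [h3]
  rw [key]
  have step : ∀ y : ZMod p, ((t⁻¹*y)*((t⁻¹*y)-1)*((t⁻¹*y)-t⁻¹))^m
      = (t⁻¹)^(3*m) * (y*(y-1)*(y-t))^m := by
    intro y
    have h4 : (t⁻¹*y)*((t⁻¹*y)-1)*((t⁻¹*y)-t⁻¹) = (t⁻¹)^3 * (y*(y-1)*(y-t)) := by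
      field_simp
    rw [h4, mul_pow, ← pow_mul]
  simp_rw [step]
  rw [← Finset.mul_sum]
  congr 1
  rw [inv_pow, show 3*m = 2*m + m by ring, pow_add, ht2, one_mul, htm]

lemma stmt8_G_eq_H (p : ℕ) [Fact p.Prime] (m : ℕ) (hm : 0 < m) (hpm : p - 1 = 2*m) (t : ZMod p) :
    (∑ x : ZMod p, (x*(x-1)*(x-t))^m)
      = (-1)^(m+1) * ∑ k ∈ range (m+1), (Nat.choose m k : ZMod p)^2 * t^k := by
  calc (∑ x : ZMod p, (x*(x-1)*(x-t))^m)
      = ∑ x : ZMod p, ∑ i ∈ range (m+1), ∑ j ∈ range (m+1),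
          ((Nat.choose m i : ZMod p) * (Nat.choose m j) * (-1)^(m-i) * (-t)^(m-j)) * x^(m+i+j) := by
        apply sum_congr rfl; intro x _
        rw [show x*(x-1)*(x-t) = x*((x+(-1))*(x+(-t))) by ring, mul_pow, mul_pow,
          add_pow, add_pow, sum_mul_sum, Finset.mul_sum]
        refine sum_congr rfl fun i hi => ?_
        rw [Finset.mul_sum]
        refine sum_congr rfl fun j hj => ?_
        rw [pow_add, pow_add]
        ring
    _ = ∑ i ∈ range (m+1), ∑ j ∈ range (m+1),
          ((Nat.choose m i : ZMod p) * (Nat.choose m j) * (-1)^(m-i) * (-t)^(m-j))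
            * ∑ x : ZMod p, x^(m+i+j) := by
        rw [Finset.sum_comm]
        refine sum_congr rfl fun i _ => ?_
        rw [Finset.sum_comm]
        refine sum_congr rfl fun j _ => ?_
        rw [← Finset.mul_sum]
    _ = ∑ i ∈ range (m+1), ∑ j ∈ range (m+1),
          (if j = m - i then ((Nat.choose m i : ZMod p) * (Nat.choose m j) * (-1)^(m-i) * (-t)^(m-j)) * (-1) else 0) := by
        refine sum_congr rfl fun i hi => sum_congr rfl fun j hj => ?_
        have hi' : i ≤ m := by have := mem_range.mp hi; omega
        have hj' : j ≤ m := by have := mem_range.mp hj; omega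
        rw [stmt8_powsum p _ (by omega) (by omega)]
        by_cases hc : j = m - i
        · rw [if_pos (by omega), if_pos hc]
        · rw [if_neg (by omega), if_neg hc, mul_zero]
    _ = ∑ i ∈ range (m+1),
          ((Nat.choose m i : ZMod p) * (Nat.choose m (m-i)) * (-1)^(m-i) * (-t)^(m-(m-i))) * (-1) := by
        refine sum_congr rfl fun i hi => ?_
        rw [Finset.sum_ite_eq' (range (m+1)) (m-i)]
        have hi' : i ≤ m := by have := mem_range.mp hi; omega
        rw [if_pos (mem_range.mpr (by omega))]
    _ = (-1)^(m+1) * ∑ k ∈ range (m+1), (Nat.choose m k : ZMod p)^2 * t^k := by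
        rw [Finset.mul_sum]
        refine sum_congr rfl fun i hi => ?_
        have hi' : i ≤ m := by have := mem_range.mp hi; omega
        rw [Nat.choose_symm hi', show m - (m - i) = i by omega, neg_pow t i]
        have hsign : (-1:ZMod p)^(m+1) = (-1)^(m-i) * ((-1)^i * (-1)) := by
          rw [show ((-1:ZMod p)^(m-i) * ((-1)^i * (-1))) = (-1)^(m-i) * (-1)^i * (-1) by ring,
            ← pow_add, show m - i + i = m by omega, pow_succ]
        rw [hsign]
        ring

lemma stmt8_fib_formula {R : Type*} [CommRing R] (s α β : R) (hsum : α + β = 1)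
    (hprod : α * β = -1) (hdiff : α - β = s) :
    ∀ k, s * (Nat.fib k : R) = α^k - β^k := by
  have hα2 : α^2 = α + 1 := by linear_combination α * hsum - hprod
  have hβ2 : β^2 = β + 1 := by linear_combination β * hsum - hprod
  have key : ∀ k, s * (Nat.fib k : R) = α^k - β^k ∧
      s * (Nat.fib (k+1) : R) = α^(k+1) - β^(k+1) := by
    intro k
    induction k with
    | zero =>
      constructor
      · simp
      · simpa using hdiff.symm
    | succ n ih =>
      refine ⟨ih.2, ?_⟩
      rw [show n + 1 + 1 = n + 2 by ring, Nat.fib_add_two]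
      push_cast
      rw [mul_add, ih.1, ih.2]
      linear_combination (-(α^n)) * hα2 + (β^n) * hβ2
  exact fun k => (key k).1

theorem stmt8 (p : ℕ) (hp : p.Prime) (hp5 : 5 < p) (h5 : p % 5 = 1 ∨ p % 5 = 4) :
    (∑ k ∈ Finset.range p,
      (Nat.fib k : ZMod p) * (Nat.choose (2 * k) k : ZMod p) ^ 2 *
        (((-16 : ZMod p)) ^ k)⁻¹) = 0 := by
  haveI : Fact p.Prime := ⟨hp⟩
  have hodd : p % 2 = 1 := hp.eq_two_or_odd.resolve_left (by omega)
  set m := (p-1)/2 with hm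
  have hpm : p - 1 = 2*m := by omega
  have hm1 : 0 < m := by omega
  obtain ⟨s, hs⟩ := stmt8_sqrt5 p hp5 h5
  have h2 : (2:ZMod p) ≠ 0 := by
    have h' : ((2:ℕ) : ZMod p) ≠ 0 := by
      rw [Ne, ZMod.natCast_eq_zero_iff]
      intro h
      have := Nat.le_of_dvd (by norm_num) h
      omega
    exact_mod_cast h'
  have hu : (2:ZMod p) * (2:ZMod p)⁻¹ = 1 := mul_inv_cancel₀ h2
  set u := (2:ZMod p)⁻¹ with hudef
  set α := (1+s)*u with hα
  set β := (1-s)*u with hβ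
  have hsum : α + β = 1 := by rw [hα, hβ]; linear_combination hu
  have hprod : α * β = -1 := by rw [hα, hβ]; linear_combination (-(u^2)) * hs - (2*u+1)*hu
  have hdiff : α - β = s := by rw [hα, hβ]; linear_combination s * hu
  have hne1 : (-1 : ZMod p) ≠ 0 := by
    intro h
    have : (1:ZMod p) = 0 := by linear_combination -h
    exact one_ne_zero this
  have hαne : α ≠ 0 := by
    intro h0; rw [h0, zero_mul] at hprod; exact hne1 hprod.symm
  have hβne : β ≠ 0 := by
    intro h0; rw [h0, mul_zero] at hprod; exact hne1 hprod.symm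
  have hs0 : s ≠ 0 := by
    intro h0
    rw [h0] at hs
    have h5p : ((5 : ℕ) : ZMod p) ≠ 0 := by
      rw [Ne, ZMod.natCast_eq_zero_iff]
      intro h
      have := Nat.le_of_dvd (by norm_num) h
      omega
    apply h5p
    push_cast
    rw [← hs]; ring
  -- Step A: termwise rewrite
  have hterm : ∀ k ∈ range p,
      (Nat.fib k : ZMod p) * (Nat.choose (2 * k) k : ZMod p) ^ 2 * (((-16 : ZMod p)) ^ k)⁻¹
      = (-1)^k * (Nat.fib k : ZMod p) * (Nat.choose m k : ZMod p)^2 := by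
    intro k hk
    rw [stmt8_choose_eq p hodd hp5 k (mem_range.mp hk)]
    have h16 : (16:ZMod p)^k ≠ 0 := pow_ne_zero _ (by
      have h' : (16:ZMod p) = 2^4 := by norm_num
      rw [h']; exact pow_ne_zero _ h2)
    have hneg16 : ((-16:ZMod p))^k = (-1)^k * 16^k := by
      rw [show (-16:ZMod p) = (-1) * 16 by ring, mul_pow]
    have hinv1 : ((-1:ZMod p)^k)⁻¹ = (-1)^k := by
      apply inv_eq_of_mul_eq_one_right; rw [← mul_pow]; norm_num
    rw [hneg16, mul_inv, hinv1]
    have hx : ((-4:ZMod p)^k)^2 = 16^k := by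
      rw [← pow_mul, mul_comm k 2, pow_mul]; norm_num
    have hc := mul_inv_cancel₀ h16
    linear_combination (Nat.fib k : ZMod p) * (Nat.choose m k:ZMod p)^2 * (-1:ZMod p)^k
        * ((16:ZMod p)^k)⁻¹ * hx
      + (Nat.fib k : ZMod p) * (Nat.choose m k:ZMod p)^2 * (-1:ZMod p)^k * hc
  rw [Finset.sum_congr rfl hterm]
  -- Step B: truncate the sum to range (m+1)
  have htrunc : ∑ k ∈ range p, (-1:ZMod p)^k * (Nat.fib k : ZMod p) * (Nat.choose m k : ZMod p)^2
      = ∑ k ∈ range (m+1), (-1:ZMod p)^k * (Nat.fib k : ZMod p) * (Nat.choose m k : ZMod p)^2 := by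
    symm
    apply Finset.sum_subset
    · apply range_subset_range.mpr; omega
    · intro k hk hk2
      have hlt : m < k := by
        simp only [mem_range] at hk hk2; omega
      rw [Nat.choose_eq_zero_of_lt hlt]
      push_cast; ring
  rw [htrunc]
  -- Notation
  have hfib := stmt8_fib_formula s α β hsum hprod hdiff
  have hsS : s * (∑ k ∈ range (m+1), (-1:ZMod p)^k * (Nat.fib k : ZMod p) * (Nat.choose m k : ZMod p)^2)
      = (∑ k ∈ range (m+1), (Nat.choose m k : ZMod p)^2 * (-α)^k)
        - (∑ k ∈ range (m+1), (Nat.choose m k : ZMod p)^2 * (-β)^k) := by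
    rw [Finset.mul_sum, ← Finset.sum_sub_distrib]
    apply sum_congr rfl; intro k hk
    rw [neg_pow α, neg_pow β]
    linear_combination (-1:ZMod p)^k * (Nat.choose m k:ZMod p)^2 * (hfib k)
  -- G chain
  have hβinv : β⁻¹ = -α := inv_eq_of_mul_eq_one_right (by linear_combination -hprod)
  have hαinv : α⁻¹ = -β := inv_eq_of_mul_eq_one_right (by linear_combination -hprod)
  have hαm : (α^m) * (α^m) = 1 := by
    have h' := ZMod.pow_card_sub_one_eq_one hαne
    rw [hpm] at h'
    rw [← pow_add, ← two_mul]; exact h'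
  have h1A : (∑ x : ZMod p, (x*(x-1)*(x-(-α)))^m) = β^m * ∑ x : ZMod p, (x*(x-1)*(x-β))^m := by
    rw [← hβinv]; exact stmt8_G_inv p m hpm β hβne
  have h1B : (∑ x : ZMod p, (x*(x-1)*(x-β))^m) = (-1)^m * ∑ x : ZMod p, (x*(x-1)*(x-α))^m := by
    rw [show β = 1 - α by linear_combination hsum]; exact stmt8_G_one_sub p m α
  have h1C : (∑ x : ZMod p, (x*(x-1)*(x-(-β)))^m) = α^m * ∑ x : ZMod p, (x*(x-1)*(x-α))^m := by
    rw [← hαinv]; exact stmt8_G_inv p m hpm α hαne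
  have hGeq : (∑ x : ZMod p, (x*(x-1)*(x-(-α)))^m) = ∑ x : ZMod p, (x*(x-1)*(x-(-β)))^m := by
    rw [h1A, h1B, h1C]
    have hkey : β^m * (-1:ZMod p)^m = α^m := by
      calc β^m * (-1:ZMod p)^m = (-β)^m := by rw [neg_pow β m]; exact mul_comm _ _
        _ = (α⁻¹)^m := by rw [hαinv]
        _ = (α^m)⁻¹ := by rw [inv_pow]
        _ = α^m := inv_eq_of_mul_eq_one_right hαm
    linear_combination (∑ x : ZMod p, (x*(x-1)*(x-α))^m) * hkey
  have hHeq : (∑ k ∈ range (m+1), (Nat.choose m k : ZMod p)^2 * (-α)^k)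
      = ∑ k ∈ range (m+1), (Nat.choose m k : ZMod p)^2 * (-β)^k := by
    have e := hGeq
    rw [stmt8_G_eq_H p m hm1 hpm (-α), stmt8_G_eq_H p m hm1 hpm (-β)] at e
    have hne : ((-1:ZMod p)^(m+1)) ≠ 0 := pow_ne_zero _ hne1
    exact mul_left_cancel₀ hne e
  have hz : s * (∑ k ∈ range (m+1), (-1:ZMod p)^k * (Nat.fib k : ZMod p) * (Nat.choose m k : ZMod p)^2) = 0 := by
    rw [hsS, hHeq, sub_self]
  rcases mul_eq_zero.mp hz with h | h
  · exact absurd h hs0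
  · exact h
end

section
/- Let p > 5 be a prime. If p ≡ 1 (mod 4), then Σ_{k=0}^{p-1} F_{2k} · C(2k,k)² / 48^k ≡ 0 (mod p²); if p ≡ 3 (mod 4), then Σ_{k=0}^{p-1} L_{2k} · C(2k,k)² / 48^k ≡ 0 (mod p²). -/
open Finset

lemma aux_unit (p : ℕ) (hp : p.Prime) (a : ℕ) (h : ¬ p ∣ a) :
    IsUnit ((a : ℕ) : ZMod (p^2)) := by
  haveI : NeZero (p^2) := ⟨pow_ne_zero 2 hp.pos.ne'⟩
  rw [ZMod.isUnit_iff_coprime]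
  exact Nat.Coprime.pow_right _ (Nat.coprime_comm.mp ((Nat.Prime.coprime_iff_not_dvd hp).mpr h))

lemma aux_unit4 (p m : ℕ) (hp : p.Prime) (hm : p = 2 * m + 1) : IsUnit ((4:ℕ) : ZMod (p^2)) := by
  refine aux_unit p hp 4 (fun h => ?_)
  have h2 : p ∣ 2^2 := by norm_num at h ⊢; exact h
  have h3 := Nat.Prime.dvd_of_dvd_pow hp h2
  have h4 := Nat.le_of_dvd (by norm_num) h3
  have := hp.two_le
  omega

lemma lemL1 (p m : ℕ) (hp : p.Prime) (hm : p = 2 * m + 1) :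
    ∀ i, i ≤ m → (Nat.choose m (m - i) : ZMod (p^2)) * (Nat.choose (m + p + i) i : ZMod (p^2))
      = (-1)^i * (Nat.choose (m + i) i : ZMod (p^2))^2 := by
  intro i
  induction i with
  | zero => simp
  | succ i ih =>
    intro hi
    have hi' : i ≤ m := by omega
    have ih' := ih hi'
    have hP2 : ((p:ZMod (p^2)))^2 = 0 := by
      have : ((p^2 : ℕ) : ZMod (p^2)) = 0 := ZMod.natCast_self _
      push_cast at this; exact this
    have hmP : 2 * (m:ZMod (p^2)) + 1 = (p:ZMod (p^2)) := by
      exact_mod_cast (congrArg (fun x : ℕ => (x:ZMod (p^2))) hm).symm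
    have hu1 : IsUnit (((i+1 : ℕ)) : ZMod (p^2)) :=
      aux_unit p hp (i+1) (by intro h; have := Nat.le_of_dvd (by omega) h; omega)
    have hu2 : IsUnit (((m-i : ℕ)) : ZMod (p^2)) :=
      aux_unit p hp (m-i) (by intro h; have := Nat.le_of_dvd (by omega) h; omega)
    have hu4 := aux_unit4 p m hp hm
    have e1 : ((m:ZMod (p^2)) + p + i + 1) * (Nat.choose (m + p + i) i : ZMod (p^2))
        = (Nat.choose (m + p + i + 1) (i+1) : ZMod (p^2)) * ((i:ZMod (p^2))+1) := by
      exact_mod_cast congrArg (fun x : ℕ => (x:ZMod (p^2))) (Nat.add_one_mul_choose_eq (m+p+i) i)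
    have e2 : ((m:ZMod (p^2)) + i + 1) * (Nat.choose (m + i) i : ZMod (p^2))
        = (Nat.choose (m + i + 1) (i+1) : ZMod (p^2)) * ((i:ZMod (p^2))+1) := by
      exact_mod_cast congrArg (fun x : ℕ => (x:ZMod (p^2))) (Nat.add_one_mul_choose_eq (m+i) i)
    have e3n : Nat.choose m ((m - (i+1)) + 1) * ((m - (i+1)) + 1)
        = Nat.choose m (m - (i+1)) * (m - (m - (i+1))) := Nat.choose_succ_right_eq _ _
    have hsub1 : (m - (i+1)) + 1 = m - i := by omega
    have hsub2 : m - (m - (i+1)) = i + 1 := by omega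
    rw [hsub1, hsub2] at e3n
    have hmi : ((m - i : ℕ) : ZMod (p^2)) = (m:ZMod (p^2)) - (i:ZMod (p^2)) := by
      have h' : (m - i) + i = m := by omega
      have := congrArg (fun x : ℕ => (x:ZMod (p^2))) h'
      push_cast at this
      linear_combination this
    have e3 : (Nat.choose m (m - i) : ZMod (p^2)) * ((m:ZMod (p^2)) - (i:ZMod (p^2)))
        = (Nat.choose m (m - (i+1)) : ZMod (p^2)) * ((i:ZMod (p^2))+1) := by
      rw [← hmi]
      exact_mod_cast congrArg (fun x : ℕ => (x:ZMod (p^2))) e3n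
    set A := (Nat.choose m (m - i) : ZMod (p^2))
    set A' := (Nat.choose m (m - (i+1)) : ZMod (p^2))
    set B := (Nat.choose (m + p + i) i : ZMod (p^2))
    set B' := (Nat.choose (m + p + i + 1) (i+1) : ZMod (p^2))
    set C := (Nat.choose (m + i) i : ZMod (p^2))
    set C' := (Nat.choose (m + i + 1) (i+1) : ZMod (p^2))
    set M := (m : ZMod (p^2))
    set P := (p : ZMod (p^2))
    set I := (i : ZMod (p^2))
    have hkey : 4*(M-I)*(M+P+I+1) + 4*(M+I+1)^2 = 0 := by
      linear_combination (4*(M+I+1)+4*P)*hmP + 4*hP2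
    have hcast : (4*(I+1)^2*(M-I) : ZMod (p^2))
        = ((4:ℕ):ZMod (p^2)) * (((i+1:ℕ)):ZMod (p^2))^2 * ((m-i:ℕ):ZMod (p^2)) := by
      rw [hmi]; push_cast; ring
    have hu : IsUnit (4*(I+1)^2*(M-I) : ZMod (p^2)) := by
      rw [hcast]; exact (hu4.mul (hu1.pow 2)).mul hu2
    have hmul : (4*(I+1)^2*(M-I)) * (A' * B')
        = (4*(I+1)^2*(M-I)) * ((-1)^(i+1) * C'^2) := by
      linear_combination (-4*(M-I)*(B'*(I+1)))*e3 + (-4*(M-I)^2*A)*e1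
        + (4*(M-I)^2*(M+P+I+1))*ih'
        + (-4*(M-I)*((-1:ZMod (p^2))^i)*(C'*(I+1)+(M+I+1)*C))*e2
        + ((-1:ZMod (p^2))^i*C^2*(M-I))*hkey
    exact hu.mul_left_cancel hmul

lemma aux_not_dvd_choose (p m j : ℕ) (hp : p.Prime) (hm : m < p) (hj : j ≤ m) :
    ¬ p ∣ Nat.choose m j := by
  intro h
  have h1 : Nat.choose m j * j.factorial * (m - j).factorial = m.factorial :=
    Nat.choose_mul_factorial_mul_factorial hj
  have h2 : p ∣ m.factorial := h1 ▸ (h.mul_right _).mul_right _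
  have := (Nat.Prime.dvd_factorial hp).mp h2
  omega

lemma congr_G (p m : ℕ) (hp : p.Prime) (hm : p = 2 * m + 1) :
    ∀ k, k ≤ m → (p:ℤ) ∣ (Nat.choose (m + p) k : ℤ) - (Nat.choose m k : ℤ) := by
  intro k
  induction k with
  | zero => intro _; simp
  | succ k ih =>
    intro hk
    have hk' : k ≤ m := by omega
    have ih' := ih hk'
    -- (k+1) * Δ(k+1) = Δ(k)*(m-k) + C(m+p,k)*p
    have e1 : Nat.choose (m+p) (k+1) * (k+1) = Nat.choose (m+p) k * (m + p - k) :=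
      Nat.choose_succ_right_eq _ _
    have e2 : Nat.choose m (k+1) * (k+1) = Nat.choose m k * (m - k) :=
      Nat.choose_succ_right_eq _ _
    have c1 : ((Nat.choose (m+p) (k+1) : ℤ)) * (k+1)
        = (Nat.choose (m+p) k : ℤ) * ((m:ℤ) - k + p) := by
      have := congrArg (fun x : ℕ => (x : ℤ)) e1
      push_cast at this
      rw [this]
      have : ((m + p - k : ℕ) : ℤ) = (m:ℤ) - k + p := by
        have : k ≤ m + p := by omega
        omega
      rw [this]
    have c2 : ((Nat.choose m (k+1) : ℤ)) * (k+1) = (Nat.choose m k : ℤ) * ((m:ℤ) - k) := by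
      have := congrArg (fun x : ℕ => (x : ℤ)) e2
      push_cast at this
      rw [this]
      congr 1
      omega
    have key : (p:ℤ) ∣ ((Nat.choose (m+p) (k+1) : ℤ) - Nat.choose m (k+1)) * (k+1) := by
      have : ((Nat.choose (m+p) (k+1) : ℤ) - Nat.choose m (k+1)) * (k+1)
          = ((Nat.choose (m+p) k : ℤ) - Nat.choose m k) * ((m:ℤ) - k)
            + (Nat.choose (m+p) k : ℤ) * p := by
        linear_combination c1 - c2
      rw [this]
      exact dvd_add (ih'.mul_right _) (Dvd.intro_left _ rfl)
    have hcop : IsCoprime (p:ℤ) ((k:ℤ)+1) := by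
      rw [Int.isCoprime_iff_gcd_eq_one]
      have : ¬ p ∣ (k+1) := by intro h; have := Nat.le_of_dvd (by omega) h; omega
      have hg := Nat.Coprime.gcd_eq_one ((Nat.Prime.coprime_iff_not_dvd hp).mpr this)
      simpa [Int.gcd, show ((k:ℤ)+1).natAbs = k+1 from Int.natAbs_natCast (k+1)] using hg
    exact (IsCoprime.dvd_of_dvd_mul_right hcop key)

lemma int_coprime_succ (p k : ℕ) (hp : p.Prime) (h : ¬ p ∣ (k+1)) : IsCoprime (p:ℤ) ((k:ℤ)+1) := by
  rw [Int.isCoprime_iff_gcd_eq_one]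
  have hg := Nat.Coprime.gcd_eq_one ((Nat.Prime.coprime_iff_not_dvd hp).mpr h)
  simpa [Int.gcd, show ((k:ℤ)+1).natAbs = k+1 from Int.natAbs_natCast (k+1)] using hg

lemma congr_D (p m : ℕ) (hp : p.Prime) (hm : p = 2 * m + 1) :
    ∀ i, i ≤ m → (p:ℤ) ∣ (Nat.choose (m + i) i : ℤ) - (-1)^i * (Nat.choose m (m - i) : ℤ) := by
  intro i
  induction i with
  | zero => intro _; simp
  | succ i ih =>
    intro hi
    have hi' : i ≤ m := by omega
    have ih' := ih hi'
    -- C(m+i+1, i+1)*(i+1) = (m+i+1)*C(m+i,i)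
    have e1 : (m + i + 1) * Nat.choose (m + i) i = Nat.choose (m + i + 1) (i+1) * (i+1) :=
      Nat.add_one_mul_choose_eq (m+i) i
    -- C(m, m-i)*(m-i) = C(m, m-i-1)*(i+1)
    have e2 : Nat.choose m ((m - (i+1)) + 1) * ((m - (i+1)) + 1)
        = Nat.choose m (m - (i+1)) * (m - (m - (i+1))) := Nat.choose_succ_right_eq _ _
    have hsub1 : (m - (i+1)) + 1 = m - i := by omega
    have hsub2 : m - (m - (i+1)) = i + 1 := by omega
    rw [hsub1, hsub2] at e2
    have c1 : ((Nat.choose (m+i+1) (i+1) : ℤ)) * ((i:ℤ)+1)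
        = ((m:ℤ) + i + 1) * (Nat.choose (m+i) i : ℤ) := by exact_mod_cast e1.symm
    have c2 : (Nat.choose m (m-i) : ℤ) * ((m:ℤ) - i)
        = (Nat.choose m (m - (i+1)) : ℤ) * ((i:ℤ)+1) := by
      have := congrArg (fun x : ℕ => (x : ℤ)) e2
      push_cast at this
      rw [← this]
      congr 1
      omega
    have key : (p:ℤ) ∣ ((Nat.choose (m+i+1) (i+1) : ℤ) - (-1)^(i+1) * Nat.choose m (m-(i+1))) * ((i:ℤ)+1) := by
      have hid : ((Nat.choose (m+i+1) (i+1) : ℤ) - (-1)^(i+1) * Nat.choose m (m-(i+1))) * ((i:ℤ)+1)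
          = ((m:ℤ)+i+1) * ((Nat.choose (m+i) i : ℤ) - (-1)^i * Nat.choose m (m-i))
            + (-1)^i * (Nat.choose m (m-i) : ℤ) * (2*(m:ℤ)+1) := by
        linear_combination c1 - (-1:ℤ)^i * c2
      rw [hid]
      refine dvd_add ((ih'.mul_left _)) ?_
      have : (2*(m:ℤ)+1) = (p:ℤ) := by exact_mod_cast congrArg (fun x : ℕ => (x:ℤ)) hm.symm
      rw [this]
      exact Dvd.intro_left _ rfl
    have h : ¬ p ∣ (i+1) := by intro h; have := Nat.le_of_dvd (by omega) h; omega
    exact (int_coprime_succ p i hp h).dvd_of_dvd_mul_right key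

lemma aux_unit16 (p m : ℕ) (hp : p.Prime) (hm : p = 2 * m + 1) : IsUnit ((16:ℕ) : ZMod (p^2)) := by
  refine aux_unit p hp 16 (fun h => ?_)
  have h2 : p ∣ 2^4 := by norm_num at h ⊢; exact h
  have h3 := Nat.Prime.dvd_of_dvd_pow hp h2
  have h4 := Nat.le_of_dvd (by norm_num) h3
  have := hp.two_le
  omega

lemma lemR1 (p m : ℕ) (hp : p.Prime) (hm : p = 2 * m + 1) :
    ∀ k, k ≤ m → ((Nat.choose (2*k) k : ZMod (p^2)))^2
      = 16^k * (2 * (Nat.choose m k : ZMod (p^2))^2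
          - (Nat.choose m k : ZMod (p^2)) * (Nat.choose (m + p) k : ZMod (p^2))) := by
  intro k
  induction k with
  | zero => intro _; norm_num
  | succ k ih =>
    intro hk
    have hk' : k ≤ m := by omega
    have ih' := ih hk'
    have hP2 : ((p:ZMod (p^2)))^2 = 0 := by
      have : ((p^2 : ℕ) : ZMod (p^2)) = 0 := ZMod.natCast_self _
      push_cast at this; exact this
    have hmP : 2 * (m:ZMod (p^2)) + 1 = (p:ZMod (p^2)) := by
      exact_mod_cast (congrArg (fun x : ℕ => (x:ZMod (p^2))) hm).symm
    -- lift of congr_G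
    obtain ⟨t, ht⟩ := congr_G p m hp hm k hk'
    have hd : (Nat.choose (m+p) k : ZMod (p^2))
        = (Nat.choose m k : ZMod (p^2)) + (p:ZMod (p^2)) * ((t:ℤ) : ZMod (p^2)) := by
      have := congrArg (fun x : ℤ => (x : ZMod (p^2))) ht
      push_cast at this
      linear_combination this
    -- recurrences
    have h1n : (k+1) * Nat.centralBinom (k+1) = 2 * (2*k+1) * Nat.centralBinom k :=
      Nat.succ_mul_centralBinom_succ k
    simp only [Nat.centralBinom] at h1n
    have h1 : ((k:ZMod (p^2))+1) * (Nat.choose (2*(k+1)) (k+1) : ZMod (p^2))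
        = 2 * (2*(k:ZMod (p^2))+1) * (Nat.choose (2*k) k : ZMod (p^2)) := by
      exact_mod_cast congrArg (fun x : ℕ => (x:ZMod (p^2))) h1n
    have hmk : ((m - k : ℕ) : ZMod (p^2)) = (m:ZMod (p^2)) - (k:ZMod (p^2)) := by
      have h' : (m - k) + k = m := by omega
      have := congrArg (fun x : ℕ => (x:ZMod (p^2))) h'
      push_cast at this
      linear_combination this
    have hmpk : ((m + p - k : ℕ) : ZMod (p^2)) = (m:ZMod (p^2)) + (p:ZMod (p^2)) - (k:ZMod (p^2)) := by
      have h' : (m + p - k) + k = m + p := by omega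
      have := congrArg (fun x : ℕ => (x:ZMod (p^2))) h'
      push_cast at this
      linear_combination this
    have e_c : (Nat.choose m (k+1) : ZMod (p^2)) * ((k:ZMod (p^2))+1)
        = (Nat.choose m k : ZMod (p^2)) * ((m - k : ℕ) : ZMod (p^2)) := by
      exact_mod_cast congrArg (fun x : ℕ => (x:ZMod (p^2))) (Nat.choose_succ_right_eq m k)
    have e_b : (Nat.choose (m+p) (k+1) : ZMod (p^2)) * ((k:ZMod (p^2))+1)
        = (Nat.choose (m+p) k : ZMod (p^2)) * ((m + p - k : ℕ) : ZMod (p^2)) := by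
      exact_mod_cast congrArg (fun x : ℕ => (x:ZMod (p^2))) (Nat.choose_succ_right_eq (m+p) k)
    set a := (Nat.choose (2*k) k : ZMod (p^2))
    set a' := (Nat.choose (2*(k+1)) (k+1) : ZMod (p^2))
    set c := (Nat.choose m k : ZMod (p^2))
    set c' := (Nat.choose m (k+1) : ZMod (p^2))
    set b := (Nat.choose (m+p) k : ZMod (p^2))
    set b' := (Nat.choose (m+p) (k+1) : ZMod (p^2))
    set K := (k : ZMod (p^2))
    set P := (p : ZMod (p^2))
    set d := ((t:ℤ) : ZMod (p^2))
    set S := ((16:ZMod (p^2)))^k with hS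
    have h2 : 2*(c'*(K+1)) = c*(P - 1 - 2*K) := by
      rw [hmk] at e_c
      linear_combination 2*e_c + c*hmP
    have h3 : 2*(b'*(K+1)) = b*(3*P - 1 - 2*K) := by
      rw [hmpk] at e_b
      linear_combination 2*e_b + b*hmP
    -- unit cancellation
    have hu1 : IsUnit (((k+1 : ℕ)) : ZMod (p^2)) :=
      aux_unit p hp (k+1) (by intro h; have := Nat.le_of_dvd (by omega) h; omega)
    have hu16 := aux_unit16 p m hp hm
    have hcast : (16*(K+1)^2 : ZMod (p^2)) = ((16:ℕ):ZMod (p^2)) * (((k+1:ℕ)):ZMod (p^2))^2 := by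
      push_cast; ring
    have hu : IsUnit (16*(K+1)^2 : ZMod (p^2)) := by
      rw [hcast]; exact hu16.mul (hu1.pow 2)
    refine hu.mul_left_cancel ?_
    show (16*(K+1)^2) * (a'^2) = (16*(K+1)^2) * (16^(k+1) * (2*c'^2 - c'*b'))
    have h16 : (16:ZMod (p^2))^(k+1) = 16 * S := by rw [hS, pow_succ]; ring
    rw [h16]
    linear_combination (16*a' + 16*a'*K + 32*a + 64*a*K) * h1
      + (64 + 256*K + 256*K^2) * ih'
      + (-256*c'*S - 256*c'*K*S + 128*c*S - 128*c*P*S + 256*c*K*S + 128*b'*S + 128*b'*K*S) * h2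
      + (-64*c*S + 64*c*P*S - 128*c*K*S) * h3
      + (-256*c*P*S + 192*c*P^2*S - 512*c*K*P*S) * hd
      + (-256*c*d*S + 192*c*P*d*S - 512*c*K*d*S + 64*c^2*S) * hP2

lemma vander (m N j : ℕ) (hj : j ≤ m) (hN : m ≤ N) :
    ∑ k ∈ range (m+1), Nat.choose m k * Nat.choose N k * Nat.choose k j
      = Nat.choose N j * Nat.choose (N + (m - j)) (m - j) := by
  have h1 : ∑ k ∈ range (m+1), Nat.choose m k * Nat.choose N k * Nat.choose k j
      = ∑ k ∈ Ico j (m+1), Nat.choose m k * Nat.choose N k * Nat.choose k j := by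
    rw [range_eq_Ico]
    refine (Finset.sum_subset (Ico_subset_Ico (Nat.zero_le j) le_rfl) ?_).symm
    intro k hk hk2
    simp only [mem_Ico] at hk hk2
    have : k < j := by omega
    rw [Nat.choose_eq_zero_of_lt this, Nat.mul_zero]
  rw [h1, Finset.sum_Ico_eq_sum_range]
  have h2 : m + 1 - j = (m - j) + 1 := by omega
  rw [h2]
  have h3 : ∀ i ∈ range ((m-j)+1),
      Nat.choose m (j+i) * Nat.choose N (j+i) * Nat.choose (j+i) j
        = Nat.choose N j * (Nat.choose m ((m-j)-i) * Nat.choose (N-j) i) := by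
    intro i hi
    simp only [mem_range] at hi
    have hij : j + i ≤ m := by omega
    have hmul : Nat.choose N (j+i) * Nat.choose (j+i) j
        = Nat.choose N j * Nat.choose (N-j) ((j+i)-j) := Nat.choose_mul (by omega)
    have hsub : (j+i) - j = i := by omega
    rw [hsub] at hmul
    have hsym : Nat.choose m ((m-j)-i) = Nat.choose m (j+i) := by
      have : (m-j)-i = m - (j+i) := by omega
      rw [this]
      exact Nat.choose_symm (by omega)
    calc Nat.choose m (j+i) * Nat.choose N (j+i) * Nat.choose (j+i) j
        = Nat.choose m (j+i) * (Nat.choose N (j+i) * Nat.choose (j+i) j) := by ring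
      _ = Nat.choose m (j+i) * (Nat.choose N j * Nat.choose (N-j) i) := by rw [hmul]
      _ = Nat.choose N j * (Nat.choose m ((m-j)-i) * Nat.choose (N-j) i) := by rw [hsym]; ring
  rw [Finset.sum_congr rfl h3, ← Finset.mul_sum]
  congr 1
  have hNm : N + (m-j) = m + (N-j) := by omega
  rw [hNm, Nat.add_choose_eq, Finset.Nat.sum_antidiagonal_eq_sum_range_succ_mk]
  refine Eq.trans ?_ (Finset.sum_range_reflect
    (fun i => Nat.choose m i * Nat.choose (N-j) ((m-j)-i)) ((m-j)+1))
  refine Finset.sum_congr rfl (fun i hi => ?_)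
  simp only [mem_range] at hi
  have e1 : (m-j)+1-1-i = (m-j)-i := by omega
  have e2 : (m-j)-((m-j)-i) = i := by omega
  rw [e1, e2]

lemma lemR2 (p m : ℕ) (hp : p.Prime) (hm : p = 2 * m + 1) :
    ∀ i, i ≤ m →
      2 * (Nat.choose m (m-i) : ZMod (p^2)) * (Nat.choose (m + i) i : ZMod (p^2))
        - (Nat.choose (m + p) (m-i) : ZMod (p^2)) * (Nat.choose (m + p + i) i : ZMod (p^2))
      = (-1)^i * (2 * (Nat.choose m (m-i) : ZMod (p^2))^2
          - (Nat.choose m (m-i) : ZMod (p^2)) * (Nat.choose (m + p) (m-i) : ZMod (p^2))) := by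
  intro i hi
  have hP2 : ((p:ZMod (p^2)))^2 = 0 := by
    have : ((p^2 : ℕ) : ZMod (p^2)) = 0 := ZMod.natCast_self _
    push_cast at this; exact this
  obtain ⟨t1, ht1⟩ := congr_D p m hp hm i hi
  obtain ⟨t2, ht2⟩ := congr_G p m hp hm (m-i) (by omega)
  have hL1' := lemL1 p m hp hm i hi
  have hD : (Nat.choose (m+i) i : ZMod (p^2))
      = (-1)^i * (Nat.choose m (m-i) : ZMod (p^2)) + (p:ZMod (p^2)) * ((t1:ℤ) : ZMod (p^2)) := by
    have := congrArg (fun x : ℤ => (x : ZMod (p^2))) ht1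
    push_cast at this
    linear_combination this
  have hG : (Nat.choose (m+p) (m-i) : ZMod (p^2))
      = (Nat.choose m (m-i) : ZMod (p^2)) + (p:ZMod (p^2)) * ((t2:ℤ) : ZMod (p^2)) := by
    have := congrArg (fun x : ℤ => (x : ZMod (p^2))) ht2
    push_cast at this
    linear_combination this
  have he : ((-1 : ZMod (p^2))^i)^2 = 1 := by
    rw [← pow_mul, mul_comm, pow_mul]
    norm_num
  set F := (Nat.choose m (m-i) : ZMod (p^2))
  set D := (Nat.choose (m+i) i : ZMod (p^2))
  set E := (Nat.choose (m+p+i) i : ZMod (p^2))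
  set G := (Nat.choose (m+p) (m-i) : ZMod (p^2))
  set P := (p : ZMod (p^2))
  set d := ((t1:ℤ) : ZMod (p^2))
  set g := ((t2:ℤ) : ZMod (p^2))
  set e := ((-1 : ZMod (p^2)))^i with hee
  have hFu : IsUnit F := aux_unit p hp _ (aux_not_dvd_choose p m (m-i) hp (by omega) (by omega))
  refine hFu.mul_left_cancel ?_
  show F * (2 * F * D - G * E) = F * (e * (2 * F^2 - F * G))
  linear_combination (-G)*hL1' + (-e*G*P*d - e*D*G - F*e^2*G + 2*F^2)*hD
    + (-e*P^2*d^2 - 2*F*e^2*P*d + F^2*e - F^2*e^3)*hG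
    + (-2*F*g*P^2*d - 2*F^2*P*d - F^2*e*g*P - F^3*e)*he
    + (-e*g*P*d^2 - 2*F*g*d - F*e*d^2)*hP2

lemma sq_zero_of_big (p m k : ℕ) (hp : p.Prime) (hm : p = 2 * m + 1)
    (h1 : m < k) (h2 : k < p) : ((Nat.choose (2*k) k : ZMod (p^2)))^2 = 0 := by
  have hdvd : p ∣ Nat.choose (2*k) k := by
    have := Nat.Prime.dvd_choose_add hp h2 h2 (by omega)
    rwa [← two_mul] at this
  obtain ⟨t, ht⟩ := hdvd
  have hP2 : ((p:ZMod (p^2)))^2 = 0 := by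
    have : ((p^2 : ℕ) : ZMod (p^2)) = 0 := ZMod.natCast_self _
    push_cast at this; exact this
  rw [ht]
  push_cast
  calc ((p:ZMod (p^2)) * (t:ZMod (p^2)))^2
      = ((p:ZMod (p^2)))^2 * (t:ZMod (p^2))^2 := by ring
    _ = 0 := by rw [hP2]; ring

lemma star (p m : ℕ) (hp : p.Prime) (hp5 : 5 < p) (hm : p = 2 * m + 1) (j : ℕ) (hj : j < p) :
    ∑ k ∈ range p, (Nat.choose (2*k) k : ZMod (p^2))^2 * ((16 : ZMod (p^2))^k)⁻¹
        * (Nat.choose k j : ZMod (p^2))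
      = (-1)^(m+j) * (Nat.choose (2*j) j : ZMod (p^2))^2 * ((16 : ZMod (p^2))^j)⁻¹ := by
  have hu16 : IsUnit ((16 : ZMod (p^2))) := by
    have := aux_unit16 p m hp hm
    have hc : ((16:ℕ) : ZMod (p^2)) = (16 : ZMod (p^2)) := by push_cast; ring
    rwa [hc] at this
  have hinv : ∀ k : ℕ, ((16 : ZMod (p^2))^k)⁻¹ * (16 : ZMod (p^2))^k = 1 := by
    intro k
    exact ZMod.inv_mul_of_unit _ (hu16.pow k)
  by_cases hjm : j ≤ m
  · -- main case
    have hsplit : range p = Ico 0 (m+1) ∪ Ico (m+1) p := by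
      rw [range_eq_Ico, Finset.Ico_union_Ico_eq_Ico (by omega) (by omega)]
    rw [hsplit, Finset.sum_union (Finset.Ico_disjoint_Ico_consecutive 0 (m+1) p)]
    have htail : ∑ k ∈ Ico (m+1) p, (Nat.choose (2*k) k : ZMod (p^2))^2 * ((16 : ZMod (p^2))^k)⁻¹
        * (Nat.choose k j : ZMod (p^2)) = 0 := by
      refine Finset.sum_eq_zero (fun k hk => ?_)
      simp only [mem_Ico] at hk
      rw [sq_zero_of_big p m k hp hm (by omega) (by omega)]
      ring
    rw [htail, add_zero]
    have hmain : ∀ k ∈ Ico 0 (m+1),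
        (Nat.choose (2*k) k : ZMod (p^2))^2 * ((16 : ZMod (p^2))^k)⁻¹ * (Nat.choose k j : ZMod (p^2))
        = (2 * (Nat.choose m k : ZMod (p^2))^2
            - (Nat.choose m k : ZMod (p^2)) * (Nat.choose (m+p) k : ZMod (p^2)))
          * (Nat.choose k j : ZMod (p^2)) := by
      intro k hk
      simp only [mem_Ico] at hk
      rw [lemR1 p m hp hm k (by omega)]
      calc (16:ZMod (p^2))^k * (2 * (Nat.choose m k : ZMod (p^2))^2
            - (Nat.choose m k : ZMod (p^2)) * (Nat.choose (m+p) k : ZMod (p^2)))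
          * ((16 : ZMod (p^2))^k)⁻¹ * (Nat.choose k j : ZMod (p^2))
          = (((16 : ZMod (p^2))^k)⁻¹ * (16:ZMod (p^2))^k) * ((2 * (Nat.choose m k : ZMod (p^2))^2
            - (Nat.choose m k : ZMod (p^2)) * (Nat.choose (m+p) k : ZMod (p^2)))
            * (Nat.choose k j : ZMod (p^2))) := by ring
        _ = (2 * (Nat.choose m k : ZMod (p^2))^2
            - (Nat.choose m k : ZMod (p^2)) * (Nat.choose (m+p) k : ZMod (p^2)))
            * (Nat.choose k j : ZMod (p^2)) := by rw [hinv, one_mul]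
    rw [Finset.sum_congr rfl hmain]
    rw [← Finset.range_eq_Ico]
    have e1 : (∑ k ∈ range (m+1), ((2 * ((Nat.choose m k : ZMod (p^2)))^2
          - (Nat.choose m k : ZMod (p^2)) * (Nat.choose (m+p) k : ZMod (p^2)))
          * (Nat.choose k j : ZMod (p^2))))
        = 2 * (∑ k ∈ range (m+1), ((Nat.choose m k : ZMod (p^2)) * (Nat.choose m k : ZMod (p^2)) * (Nat.choose k j : ZMod (p^2))))
          - ∑ k ∈ range (m+1), ((Nat.choose m k : ZMod (p^2)) * (Nat.choose (m+p) k : ZMod (p^2)) * (Nat.choose k j : ZMod (p^2))) := by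
      rw [Finset.mul_sum, ← Finset.sum_sub_distrib]
      exact Finset.sum_congr rfl (fun k _ => by ring)
    rw [e1]
    have hV1 := congrArg (fun x : ℕ => (x : ZMod (p^2))) (vander m m j hjm le_rfl)
    have hV2 := congrArg (fun x : ℕ => (x : ZMod (p^2))) (vander m (m+p) j hjm (by omega))
    push_cast at hV1 hV2
    rw [hV1, hV2]
    have hR2 := lemR2 p m hp hm (m-j) (by omega)
    have hi1 : m - (m - j) = j := by omega
    rw [hi1] at hR2
    have hsign : ((-1 : ZMod (p^2)))^(m+j) = ((-1 : ZMod (p^2)))^(m-j) := by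
      have hmj : m + j = (m-j) + 2*j := by omega
      rw [hmj, pow_add, pow_mul]
      norm_num
    have hassoc1 : m + (m - j) = m + (m-j) := rfl
    have hR1j := lemR1 p m hp hm j hjm
    rw [hsign, hR1j]
    have hEq : m + p + (m - j) = m + p + (m-j) := rfl
    linear_combination (2 * (Nat.choose (m+(m-j)) (m-j) : ZMod (p^2))
        - (Nat.choose (m+p+(m-j)) (m-j) : ZMod (p^2)) * 0) * (0 : ZMod (p^2)) + hR2
      + (-(((-1 : ZMod (p^2)))^(m-j)) * (2 * (Nat.choose m j : ZMod (p^2))^2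
          - (Nat.choose m j : ZMod (p^2)) * (Nat.choose (m+p) j : ZMod (p^2)))) * (hinv j)
  · -- j > m : both sides vanish

    have hrhs : ((Nat.choose (2*j) j : ZMod (p^2)))^2 = 0 :=
      sq_zero_of_big p m j hp hm (by omega) hj
    rw [hrhs]
    rw [show ((-1:ZMod (p^2))^(m+j) * 0 * ((16 : ZMod (p^2))^j)⁻¹ = 0) by ring]
    refine Finset.sum_eq_zero (fun k hk => ?_)
    simp only [mem_range] at hk
    by_cases hkm : k ≤ m
    · rw [Nat.choose_eq_zero_of_lt (by omega : k < j)]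
      push_cast
      ring
    · rw [sq_zero_of_big p m k hp hm (by omega) (by omega)]
      ring

lemma Tstep (x : ℕ → ℤ) (k : ℕ) :
    ∑ j ∈ range (k+2), (-1)^j * (Nat.choose (k+1) j : ℤ) * 3^(k+1-j) * x j
      = 3 * ∑ j ∈ range (k+1), (-1)^j * (Nat.choose k j : ℤ) * 3^(k-j) * x j
        - ∑ j ∈ range (k+1), (-1)^j * (Nat.choose k j : ℤ) * 3^(k-j) * x (j+1) := by
  rw [Finset.sum_range_succ' (fun j => (-1)^j * (Nat.choose (k+1) j : ℤ) * 3^(k+1-j) * x j) (k+1)]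
  have h0 : (-1:ℤ)^0 * (Nat.choose (k+1) 0 : ℤ) * 3^(k+1-0) * x 0 = 3^(k+1) * x 0 := by
    simp
  rw [h0]
  have hL : ∀ i ∈ range (k+1),
      (-1)^(i+1) * (Nat.choose (k+1) (i+1) : ℤ) * 3^(k+1-(i+1)) * x (i+1)
      = -((-1)^i * (Nat.choose k i : ℤ) * 3^(k-i) * x (i+1))
        - (-1)^i * (Nat.choose k (i+1) : ℤ) * 3^(k-i) * x (i+1) := by
    intro i hi
    simp only [mem_range] at hi
    have hc : (Nat.choose (k+1) (i+1) : ℤ) = (Nat.choose k i : ℤ) + (Nat.choose k (i+1) : ℤ) := by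
      exact_mod_cast congrArg (fun y : ℕ => (y:ℤ)) (Nat.choose_succ_succ k i)
    have he : k+1-(i+1) = k-i := by omega
    rw [hc, he, pow_succ]
    ring
  rw [Finset.sum_congr rfl hL, Finset.sum_sub_distrib]
  -- now handle 3 * sum via sum_range_succ'
  have h3 : 3 * ∑ j ∈ range (k+1), (-1)^j * (Nat.choose k j : ℤ) * 3^(k-j) * x j
      = ∑ j ∈ range (k+1), (-1)^j * (Nat.choose k j : ℤ) * 3^(k+1-j) * x j := by
    rw [Finset.mul_sum]
    refine Finset.sum_congr rfl (fun j hj => ?_)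
    simp only [mem_range] at hj
    have : k+1-j = (k-j)+1 := by omega
    rw [this, pow_succ]
    ring
  rw [h3, Finset.sum_range_succ' (fun j => (-1)^j * (Nat.choose k j : ℤ) * 3^(k+1-j) * x j) k]
  have h0' : (-1:ℤ)^0 * (Nat.choose k 0 : ℤ) * 3^(k+1-0) * x 0 = 3^(k+1) * x 0 := by simp
  rw [h0']
  have hext : ∑ i ∈ range (k+1), (-1)^i * (Nat.choose k (i+1) : ℤ) * 3^(k-i) * x (i+1)
      = ∑ i ∈ range k, (-1)^(i+1) * (Nat.choose k (i+1) : ℤ) * 3^(k+1-(i+1)) * x (i+1) * (-1) := by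
    rw [Finset.sum_range_succ]
    rw [Nat.choose_succ_self]
    push_cast
    rw [show ((-1:ℤ)^k * 0 * 3^(k-k) * x (k+1)) = 0 by ring, add_zero]
    refine Finset.sum_congr rfl (fun i hi => ?_)
    simp only [mem_range] at hi
    ring
  rw [hext]
  have e5 : ∑ j ∈ range (k+1), (-((-1)^j * (Nat.choose k j : ℤ) * 3^(k-j) * x (j+1)))
      = -∑ j ∈ range (k+1), (-1)^j * (Nat.choose k j : ℤ) * 3^(k-j) * x (j+1) := by
    rw [Finset.sum_neg_distrib]
  have e6 : ∑ i ∈ range k, ((-1)^(i+1) * (Nat.choose k (i+1) : ℤ) * 3^(k+1-(i+1)) * x (i+1) * (-1))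
      = -∑ i ∈ range k, (-1)^(i+1) * (Nat.choose k (i+1) : ℤ) * 3^(k+1-(i+1)) * x (i+1) := by
    rw [← Finset.sum_neg_distrib]
    exact Finset.sum_congr rfl (fun i _ => by ring)
  rw [e5, e6]
  ring

lemma fib_jump (n : ℕ) : (Nat.fib (n+4) : ℤ) = 3 * Nat.fib (n+2) - Nat.fib n := by
  have h1 := Nat.fib_add_two (n := n+2)
  have h2 := Nat.fib_add_two (n := n+1)
  have h3 := Nat.fib_add_two (n := n)
  rw [show n+2+2 = n+4 by omega, show n+2+1 = n+3 by omega] at h1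
  rw [show n+1+2 = n+3 by omega, show n+1+1 = n+2 by omega] at h2
  have c1 := congrArg (fun y : ℕ => (y:ℤ)) h1
  have c2 := congrArg (fun y : ℕ => (y:ℤ)) h2
  have c3 := congrArg (fun y : ℕ => (y:ℤ)) h3
  push_cast at c1 c2 c3
  linarith

lemma master : ∀ k : ℕ, ∀ a b : ℤ,
    ∑ j ∈ range (k+1), (-1)^j * (Nat.choose k j : ℤ) * 3^(k-j)
        * (a * (Nat.fib (2*j) : ℤ) + b * (Nat.fib (2*j+2) : ℤ))
      = -(a + 3*b) * (Nat.fib (2*k) : ℤ) + b * (Nat.fib (2*k+2) : ℤ) := by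
  intro k
  induction k with
  | zero => intro a b; simp
  | succ k ih =>
    intro a b
    have hT := Tstep (fun j => a * (Nat.fib (2*j) : ℤ) + b * (Nat.fib (2*j+2) : ℤ)) k
    rw [hT]
    have hshift : ∀ j ∈ range (k+1),
        (-1)^j * (Nat.choose k j : ℤ) * 3^(k-j)
          * (a * (Nat.fib (2*(j+1)) : ℤ) + b * (Nat.fib (2*(j+1)+2) : ℤ))
        = (-1)^j * (Nat.choose k j : ℤ) * 3^(k-j)
          * ((-b) * (Nat.fib (2*j) : ℤ) + (a + 3*b) * (Nat.fib (2*j+2) : ℤ)) := by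
      intro j hj
      have hf : (Nat.fib (2*j+4) : ℤ) = 3 * Nat.fib (2*j+2) - Nat.fib (2*j) := fib_jump (2*j)
      have e1 : 2*(j+1) = 2*j+2 := by ring
      have e2 : 2*(j+1)+2 = 2*j+4 := by ring
      rw [e2, e1, hf]
      ring
    rw [Finset.sum_congr rfl hshift, ih a b, ih (-b) (a+3*b)]
    have hf2 : (Nat.fib (2*(k+1)+2) : ℤ) = 3 * Nat.fib (2*(k+1)) - Nat.fib (2*k) := by
      have := fib_jump (2*k)
      have e : 2*(k+1)+2 = 2*k+4 := by ring
      have e' : 2*(k+1) = 2*k+2 := by ring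
      rw [e, e']
      exact this
    rw [hf2]
    have e' : 2*(k+1) = 2*k+2 := by ring
    rw [e']
    ring

lemma Lfib (L : ℕ → ℤ) (hL1 : L 1 = 1) (hL0 : L 0 = 2)
    (hLrec : ∀ n : ℕ, 1 ≤ n → L (n + 1) = L n + L (n - 1)) :
    ∀ n, L (n+1) = (Nat.fib (n+2) : ℤ) + Nat.fib n := by
  intro n
  induction n using Nat.strong_induction_on with
  | _ n ih =>
    match n with
    | 0 => simpa using hL1
    | 1 =>
      have h := hLrec 1 le_rfl
      simp at h
      rw [h, hL1, hL0]
      norm_num [Nat.fib]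
    | (n+2) =>
      have h := hLrec (n+2) (by omega)
      have e : (n+2) - 1 = n+1 := by omega
      rw [e] at h
      rw [h, ih (n+1) (by omega), ih n (by omega)]
      have f1 := Nat.fib_add_two (n := n+2)
      have f2 := Nat.fib_add_two (n := n)
      rw [show n+2+2 = n+4 by omega, show n+2+1 = n+3 by omega] at f1
      have c1 := congrArg (fun y : ℕ => (y:ℤ)) f1
      have c2 := congrArg (fun y : ℕ => (y:ℤ)) f2
      push_cast at c1 c2
      push_cast
      linarith

lemma Lval (L : ℕ → ℤ) (hL0 : L 0 = 2) (hL1 : L 1 = 1)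
    (hLrec : ∀ n : ℕ, 1 ≤ n → L (n + 1) = L n + L (n - 1)) :
    ∀ j, L (2*j) = 2 * (Nat.fib (2*j+2) : ℤ) - 3 * (Nat.fib (2*j) : ℤ) := by
  intro j
  match j with
  | 0 => simpa using hL0
  | (j+1) =>
    have h := Lfib L hL1 hL0 hLrec (2*j+1)
    have e : 2*(j+1) = (2*j+1)+1 := by ring
    rw [e, h]
    have f1' := Nat.fib_add_two (n := 2*j+2)
    have f2' := Nat.fib_add_two (n := 2*j+1)
    rw [show 2*j+2+2 = 2*j+4 by omega, show 2*j+2+1 = 2*j+3 by omega] at f1'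
    rw [show 2*j+1+2 = 2*j+3 by omega, show 2*j+1+1 = 2*j+2 by omega] at f2'
    have f1 := congrArg (fun y : ℕ => (y:ℤ)) f1'
    have f2 := congrArg (fun y : ℕ => (y:ℤ)) f2'
    push_cast at f1 f2
    have e2 : (2*j+1)+2 = 2*j+3 := by ring
    have e3 : ((2*j+1)+1)+2 = 2*j+4 := by ring
    rw [e2]
    rw [show (2*j+1)+1 = 2*j+2 by ring]
    linarith

lemma zmod_inv_eq (n : ℕ) (a b : ZMod n) (h : IsUnit a) (hab : a * b = 1) : a⁻¹ = b := by
  have h1 := ZMod.inv_mul_of_unit a h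
  calc a⁻¹ = a⁻¹ * (a*b) := by rw [hab, mul_one]
    _ = (a⁻¹*a)*b := by ring
    _ = b := by rw [h1, one_mul]

theorem stmt9 (p : ℕ) (hp : p.Prime) (hp5 : 5 < p)
    (L : ℕ → ℤ) (hL0 : L 0 = 2) (hL1 : L 1 = 1)
    (hLrec : ∀ n : ℕ, 1 ≤ n → L (n + 1) = L n + L (n - 1)) :
    (p % 4 = 1 →
      (∑ k ∈ Finset.range p,
        (Nat.fib (2 * k) : ZMod (p ^ 2)) * (Nat.choose (2 * k) k : ZMod (p ^ 2)) ^ 2 *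
          ((48 : ZMod (p ^ 2)) ^ k)⁻¹) = 0) ∧
    (p % 4 = 3 →
      (∑ k ∈ Finset.range p,
        (L (2 * k) : ZMod (p ^ 2)) * (Nat.choose (2 * k) k : ZMod (p ^ 2)) ^ 2 *
          ((48 : ZMod (p ^ 2)) ^ k)⁻¹) = 0) := by
  obtain ⟨m, hm⟩ : ∃ m, p = 2*m+1 := by
    obtain ⟨m, hm⟩ := hp.odd_of_ne_two (by omega)
    exact ⟨m, hm⟩
  -- units
  have hnd16 : ¬ p ∣ 16 := by
    intro h
    have h2 : p ∣ 2^4 := (show (16:ℕ) = 2^4 by norm_num) ▸ h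
    have h3 := Nat.le_of_dvd (by norm_num) (hp.dvd_of_dvd_pow h2)
    omega
  have hu16 : IsUnit (16 : ZMod (p^2)) := by
    have := aux_unit p hp 16 hnd16
    rwa [show (((16:ℕ)) : ZMod (p^2)) = 16 by push_cast; ring] at this
  have hu3 : IsUnit (3 : ZMod (p^2)) := by
    have := aux_unit p hp 3 (fun h => by have := Nat.le_of_dvd (by norm_num) h; omega)
    rwa [show (((3:ℕ)) : ZMod (p^2)) = 3 by push_cast; ring] at this
  have hu48 : IsUnit (48 : ZMod (p^2)) := by
    have hnd : ¬ p ∣ 48 := by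
      intro h
      have h' : p ∣ 16*3 := (show (48:ℕ) = 16*3 by norm_num) ▸ h
      rcases (Nat.Prime.dvd_mul hp).mp h' with h16 | h3
      · exact hnd16 h16
      · have := Nat.le_of_dvd (by norm_num) h3; omega
    have := aux_unit p hp 48 hnd
    rwa [show (((48:ℕ)) : ZMod (p^2)) = 48 by push_cast; ring] at this
  have hu2 : IsUnit (2 : ZMod (p^2)) := by
    have := aux_unit p hp 2 (fun h => by have := Nat.le_of_dvd (by norm_num) h; omega)
    rwa [show (((2:ℕ)) : ZMod (p^2)) = 2 by push_cast; ring] at this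
  have hsplit48 : ∀ k : ℕ, ((48 : ZMod (p^2))^k)⁻¹ = ((16:ZMod (p^2))^k)⁻¹ * ((3:ZMod (p^2))^k)⁻¹ := by
    intro k
    refine zmod_inv_eq _ _ _ (hu48.pow k) ?_
    have h16 : (16:ZMod (p^2))^k * ((16:ZMod (p^2))^k)⁻¹ = 1 := ZMod.mul_inv_of_unit _ (hu16.pow k)
    have h3 : (3:ZMod (p^2))^k * ((3:ZMod (p^2))^k)⁻¹ = 1 := ZMod.mul_inv_of_unit _ (hu3.pow k)
    calc (48:ZMod (p^2))^k * (((16:ZMod (p^2))^k)⁻¹ * ((3:ZMod (p^2))^k)⁻¹)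
        = ((16:ZMod (p^2))^k * ((16:ZMod (p^2))^k)⁻¹) * ((3:ZMod (p^2))^k * ((3:ZMod (p^2))^k)⁻¹) := by
          rw [show (48:ZMod (p^2)) = 16*3 by norm_num, mul_pow]; ring
      _ = 1 := by rw [h16, h3, one_mul]
  have hpow3 : ∀ k j : ℕ, j ≤ k → (3:ZMod (p^2))^(k-j) * ((3:ZMod (p^2))^k)⁻¹ = ((3:ZMod (p^2))^j)⁻¹ := by
    intro k j hj
    refine (zmod_inv_eq _ _ _ (hu3.pow j) ?_).symm
    have h3 : (3:ZMod (p^2))^k * ((3:ZMod (p^2))^k)⁻¹ = 1 := ZMod.mul_inv_of_unit _ (hu3.pow k)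
    calc (3:ZMod (p^2))^j * ((3:ZMod (p^2))^(k-j) * ((3:ZMod (p^2))^k)⁻¹)
        = (3:ZMod (p^2))^(j+(k-j)) * ((3:ZMod (p^2))^k)⁻¹ := by rw [pow_add]; ring
      _ = 1 := by rw [show j+(k-j) = k by omega]; exact h3
  -- duality machinery
  have dual : ∀ t : ℕ → ZMod (p^2),
      ∑ k ∈ range p, (Nat.choose (2*k) k : ZMod (p^2))^2 * ((16 : ZMod (p^2))^k)⁻¹
          * (∑ j ∈ range p, (-1)^j * (Nat.choose k j : ZMod (p^2)) * t j)
        = (-1)^m * ∑ j ∈ range p, (Nat.choose (2*j) j : ZMod (p^2))^2 * ((16 : ZMod (p^2))^j)⁻¹ * t j := by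
    intro t
    have e1 : ∀ k ∈ range p,
        (Nat.choose (2*k) k : ZMod (p^2))^2 * ((16 : ZMod (p^2))^k)⁻¹
          * (∑ j ∈ range p, (-1)^j * (Nat.choose k j : ZMod (p^2)) * t j)
        = ∑ j ∈ range p, ((Nat.choose (2*k) k : ZMod (p^2))^2 * ((16 : ZMod (p^2))^k)⁻¹
            * (Nat.choose k j : ZMod (p^2))) * ((-1)^j * t j) := by
      intro k _
      rw [Finset.mul_sum]
      exact Finset.sum_congr rfl (fun j _ => by ring)
    rw [Finset.sum_congr rfl e1, Finset.sum_comm]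
    have e2 : ∀ j ∈ range p,
        ∑ k ∈ range p, ((Nat.choose (2*k) k : ZMod (p^2))^2 * ((16 : ZMod (p^2))^k)⁻¹
            * (Nat.choose k j : ZMod (p^2))) * ((-1)^j * t j)
        = ((-1)^(m+j) * (Nat.choose (2*j) j : ZMod (p^2))^2 * ((16 : ZMod (p^2))^j)⁻¹) * ((-1)^j * t j) := by
      intro j hj
      simp only [mem_range] at hj
      rw [← Finset.sum_mul, star p m hp hp5 hm j hj]
    rw [Finset.sum_congr rfl e2, Finset.mul_sum]
    refine Finset.sum_congr rfl (fun j _ => ?_)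
    have hj2 : ((-1 : ZMod (p^2))^j) * ((-1 : ZMod (p^2))^j) = 1 := by
      rw [← pow_add, ← two_mul, pow_mul]
      norm_num
    rw [pow_add]
    linear_combination ((-1:ZMod (p^2))^m * (Nat.choose (2*j) j : ZMod (p^2))^2
      * ((16 : ZMod (p^2))^j)⁻¹ * t j) * hj2
  -- transform of a sequence given the integer identity
  have transform : ∀ (w : ℕ → ℤ) (ε : ℤ),
      (∀ k : ℕ, ∑ j ∈ range (k+1), (-1)^j * (Nat.choose k j : ℤ) * 3^(k-j) * w j = ε * w k) →
      ∀ k ∈ range p,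
        ∑ j ∈ range p, (-1)^j * (Nat.choose k j : ZMod (p^2))
            * (((w j : ℤ) : ZMod (p^2)) * ((3:ZMod (p^2))^j)⁻¹)
        = ((ε:ℤ) : ZMod (p^2)) * (((w k : ℤ) : ZMod (p^2)) * ((3:ZMod (p^2))^k)⁻¹) := by
    intro w ε hw k hk
    simp only [mem_range] at hk
    have hI := congrArg (fun z : ℤ => (z : ZMod (p^2))) (hw k)
    push_cast at hI
    -- multiply by (3^k)⁻¹
    have hI2 := congrArg (fun z : ZMod (p^2) => z * ((3:ZMod (p^2))^k)⁻¹) hI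
    rw [Finset.sum_mul] at hI2
    have e3 : ∀ j ∈ range (k+1),
        (-1)^j * (Nat.choose k j : ZMod (p^2)) * (3:ZMod (p^2))^(k-j) * ((w j : ℤ) : ZMod (p^2))
          * ((3:ZMod (p^2))^k)⁻¹
        = (-1)^j * (Nat.choose k j : ZMod (p^2))
            * (((w j : ℤ) : ZMod (p^2)) * ((3:ZMod (p^2))^j)⁻¹) := by
      intro j hj
      simp only [mem_range] at hj
      rw [← hpow3 k j (by omega)]
      ring
    rw [Finset.sum_congr rfl e3] at hI2
    -- extend the sum to range p
    have e4 : ∑ j ∈ range p, (-1)^j * (Nat.choose k j : ZMod (p^2))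
          * (((w j : ℤ) : ZMod (p^2)) * ((3:ZMod (p^2))^j)⁻¹)
        = ∑ j ∈ range (k+1), (-1)^j * (Nat.choose k j : ZMod (p^2))
          * (((w j : ℤ) : ZMod (p^2)) * ((3:ZMod (p^2))^j)⁻¹) := by
      refine (Finset.sum_subset (by intro x hx; simp only [mem_range] at *; omega) ?_).symm
      intro j hj hj2
      simp only [mem_range] at hj hj2
      rw [Nat.choose_eq_zero_of_lt (by omega)]
      push_cast
      ring
    rw [e4, hI2]
    ring
  constructor
  · -- p ≡ 1 (mod 4) : Fibonacci case
    intro hmod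
    have hmeven : Even m := ⟨m/2, by omega⟩
    have hm1 : (-1 : ZMod (p^2))^m = 1 := hmeven.neg_one_pow
    -- the integer transform identity for fib(2j)
    have hwF : ∀ k : ℕ, ∑ j ∈ range (k+1), (-1)^j * (Nat.choose k j : ℤ) * 3^(k-j)
        * ((Nat.fib (2*j) : ℤ)) = (-1) * (Nat.fib (2*k) : ℤ) := by
      intro k
      have h := master k 1 0
      have e : ∀ j ∈ range (k+1), (-1)^j * (Nat.choose k j : ℤ) * 3^(k-j) * ((Nat.fib (2*j) : ℤ))
          = (-1)^j * (Nat.choose k j : ℤ) * 3^(k-j)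
            * (1 * (Nat.fib (2*j) : ℤ) + 0 * (Nat.fib (2*j+2) : ℤ)) := fun j _ => by ring
      rw [Finset.sum_congr rfl e, h]
      ring
    have hBt := transform (fun j => (Nat.fib (2*j) : ℤ)) (-1) hwF
    have hd := dual (fun j => ((Nat.fib (2*j) : ℤ) : ZMod (p^2)) * ((3:ZMod (p^2))^j)⁻¹)
    have eL : ∑ k ∈ range p, (Nat.choose (2*k) k : ZMod (p^2))^2 * ((16 : ZMod (p^2))^k)⁻¹
          * (∑ j ∈ range p, (-1)^j * (Nat.choose k j : ZMod (p^2))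
              * (((Nat.fib (2*j) : ℤ) : ZMod (p^2)) * ((3:ZMod (p^2))^j)⁻¹))
        = -∑ k ∈ range p, (Nat.choose (2*k) k : ZMod (p^2))^2 * ((16 : ZMod (p^2))^k)⁻¹
              * (((Nat.fib (2*k) : ℤ) : ZMod (p^2)) * ((3:ZMod (p^2))^k)⁻¹) := by
      rw [← Finset.sum_neg_distrib]
      refine Finset.sum_congr rfl (fun k hk => ?_)
      rw [hBt k hk]
      push_cast
      ring
    rw [eL, hm1, one_mul] at hd
    set S := ∑ k ∈ range p, (Nat.choose (2*k) k : ZMod (p^2))^2 * ((16 : ZMod (p^2))^k)⁻¹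
              * (((Nat.fib (2*k) : ℤ) : ZMod (p^2)) * ((3:ZMod (p^2))^k)⁻¹) with hS
    have h2S : 2 * S = 2 * 0 := by linear_combination -hd
    have hS0 : S = 0 := hu2.mul_left_cancel h2S
    have efin : ∑ k ∈ Finset.range p,
        (Nat.fib (2 * k) : ZMod (p ^ 2)) * (Nat.choose (2 * k) k : ZMod (p ^ 2)) ^ 2 *
          ((48 : ZMod (p ^ 2)) ^ k)⁻¹ = S := by
      rw [hS]
      refine Finset.sum_congr rfl (fun k _ => ?_)
      rw [hsplit48 k]
      push_cast
      ring
    rw [efin, hS0]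
  · -- p ≡ 3 (mod 4) : Lucas case
    intro hmod
    have hmodd : Odd m := ⟨m/2, by omega⟩
    have hm1 : (-1 : ZMod (p^2))^m = -1 := hmodd.neg_one_pow
    have hwL : ∀ k : ℕ, ∑ j ∈ range (k+1), (-1)^j * (Nat.choose k j : ℤ) * 3^(k-j)
        * (L (2*j)) = 1 * L (2*k) := by
      intro k
      have hM := master k (-3) 2
      have e5 : ∀ j ∈ range (k+1),
          (-1)^j * (Nat.choose k j : ℤ) * 3^(k-j) * (L (2*j))
          = (-1)^j * (Nat.choose k j : ℤ) * 3^(k-j)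
            * ((-3) * (Nat.fib (2*j) : ℤ) + 2 * (Nat.fib (2*j+2) : ℤ)) := by
        intro j _
        rw [Lval L hL0 hL1 hLrec j]
        ring
      rw [Finset.sum_congr rfl e5, hM, Lval L hL0 hL1 hLrec k]
      ring
    have hBt := transform (fun j => L (2*j)) 1 hwL
    have hd := dual (fun j => ((L (2*j) : ℤ) : ZMod (p^2)) * ((3:ZMod (p^2))^j)⁻¹)
    have eL : ∑ k ∈ range p, (Nat.choose (2*k) k : ZMod (p^2))^2 * ((16 : ZMod (p^2))^k)⁻¹
          * (∑ j ∈ range p, (-1)^j * (Nat.choose k j : ZMod (p^2))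
              * (((L (2*j) : ℤ) : ZMod (p^2)) * ((3:ZMod (p^2))^j)⁻¹))
        = ∑ k ∈ range p, (Nat.choose (2*k) k : ZMod (p^2))^2 * ((16 : ZMod (p^2))^k)⁻¹
              * (((L (2*k) : ℤ) : ZMod (p^2)) * ((3:ZMod (p^2))^k)⁻¹) := by
      refine Finset.sum_congr rfl (fun k hk => ?_)
      rw [hBt k hk]
      push_cast
      ring
    rw [eL, hm1] at hd
    set S := ∑ k ∈ range p, (Nat.choose (2*k) k : ZMod (p^2))^2 * ((16 : ZMod (p^2))^k)⁻¹
              * (((L (2*k) : ℤ) : ZMod (p^2)) * ((3:ZMod (p^2))^k)⁻¹) with hS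
    have h2S : 2 * S = 2 * 0 := by linear_combination hd
    have hS0 : S = 0 := hu2.mul_left_cancel h2S
    have efin : ∑ k ∈ Finset.range p,
        (L (2 * k) : ZMod (p ^ 2)) * (Nat.choose (2 * k) k : ZMod (p ^ 2)) ^ 2 *
          ((48 : ZMod (p ^ 2)) ^ k)⁻¹ = S := by
      rw [hS]
      refine Finset.sum_congr rfl (fun k _ => ?_)
      rw [hsplit48 k]
      push_cast
      ring
    rw [efin, hS0]
end

section
/- Let p be an odd prime with p ≡ ±1 (mod 8). Then Σ_{k=0}^{p-1} P_k · C(2k,k)² / (-8)^k ≡ 0 (mod p), where P_k is the Pell sequence. -/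
open Finset

/-- Power sum over a finite prime field. -/
lemma aux_powsum (p : ℕ) [Fact p.Prime] (m : ℕ) (hm : m ≠ 0) :
    ∑ t : ZMod p, t ^ m = if p - 1 ∣ m then -1 else 0 := by
  classical
  have h0 : (∑ x : (ZMod p)ˣ, ((x : ZMod p)) ^ m)
      = if Fintype.card (ZMod p) - 1 ∣ m then -1 else 0 :=
    FiniteField.sum_pow_units (ZMod p) m
  rw [ZMod.card] at h0
  rw [← h0]
  let φ : (ZMod p)ˣ ↪ ZMod p := ⟨fun x ↦ x, Units.val_injective⟩
  have hmap : Finset.univ.map φ = Finset.univ \ {0} := by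
    ext x
    simpa only [Finset.mem_map, Finset.mem_univ, Function.Embedding.coeFn_mk, true_and,
      Finset.mem_sdiff, Finset.mem_singleton, φ] using
        (show (∃ u : (ZMod p)ˣ, (u : ZMod p) = x) ↔ x ≠ 0 from isUnit_iff_ne_zero)
  have h1 : (∑ x : (ZMod p)ˣ, ((x : ZMod p)) ^ m) = ∑ t ∈ Finset.univ \ {0}, t ^ m := by
    rw [← hmap, Finset.sum_map]
    rfl
  rw [h1]
  have h2 : (∑ t : ZMod p, t ^ m)
      = ∑ t ∈ Finset.univ \ {0}, t ^ m + ∑ t ∈ ({0} : Finset (ZMod p)), t ^ m := by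
    rw [Finset.sum_sdiff (Finset.singleton_subset_iff.mpr (Finset.mem_univ 0))]
  rw [h2, Finset.sum_singleton, zero_pow hm, add_zero]

/-- Coefficient extraction: the "G = -f" identity. -/
lemma auxG (p : ℕ) [Fact p.Prime] (n : ℕ) (hn : 0 < n) (h2n : 2 * n = p - 1) (x : ZMod p) :
    ∑ t : ZMod p, (t * (1 + t) * (1 + x * t)) ^ n
      = -∑ k ∈ Finset.range (n + 1), ((n.choose k : ZMod p)) ^ 2 * x ^ k := by
  classical
  have step1 : ∑ t : ZMod p, (t * (1 + t) * (1 + x * t)) ^ n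
      = ∑ t : ZMod p, ∑ i ∈ range (n + 1), ∑ j ∈ range (n + 1),
          t ^ (n + i + j) * (x ^ j * (n.choose i : ZMod p) * (n.choose j : ZMod p)) := by
    refine Finset.sum_congr rfl fun t _ => ?_
    rw [mul_pow, mul_pow, show (1 + t : ZMod p) = t + 1 from add_comm _ _,
      show (1 + x * t : ZMod p) = x * t + 1 from add_comm _ _, add_pow, add_pow]
    simp only [one_pow, mul_one]
    rw [mul_assoc, Finset.sum_mul_sum, Finset.mul_sum]
    refine Finset.sum_congr rfl fun i _ => ?_
    rw [Finset.mul_sum]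
    refine Finset.sum_congr rfl fun j _ => ?_
    rw [mul_pow]
    ring
  rw [step1, Finset.sum_comm]
  have step2 : ∀ i ∈ range (n + 1),
      (∑ t : ZMod p, ∑ j ∈ range (n + 1),
          t ^ (n + i + j) * (x ^ j * (n.choose i : ZMod p) * (n.choose j : ZMod p)))
      = -(x ^ (n - i) * (n.choose i : ZMod p) * (n.choose (n - i) : ZMod p)) := by
    intro i hi
    have hi' : i ≤ n := by simpa using Nat.lt_succ_iff.mp (Finset.mem_range.mp hi)
    rw [Finset.sum_comm]
    have inner : ∀ j ∈ range (n + 1),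
        (∑ t : ZMod p, t ^ (n + i + j) * (x ^ j * (n.choose i : ZMod p) * (n.choose j : ZMod p)))
        = (if p - 1 ∣ n + i + j then -1 else 0)
            * (x ^ j * (n.choose i : ZMod p) * (n.choose j : ZMod p)) := by
      intro j _
      rw [← Finset.sum_mul, aux_powsum p _ (by omega)]
    rw [Finset.sum_congr rfl inner]
    rw [Finset.sum_eq_single (n - i)]
    · have hd : p - 1 ∣ n + i + (n - i) := by
        rw [show n + i + (n - i) = 2 * n by omega, h2n]
      rw [if_pos hd]
      ring
    · intro j hj hji
      have hj' : j ≤ n := by simpa using Nat.lt_succ_iff.mp (Finset.mem_range.mp hj)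
      have hnd : ¬ p - 1 ∣ n + i + j := by
        intro hdvd
        rw [← h2n] at hdvd
        obtain ⟨q, hq⟩ := hdvd
        have hq2 : q < 2 := by
          by_contra hq2
          push_neg at hq2
          have : 2 * n * 2 ≤ 2 * n * q := Nat.mul_le_mul_left _ hq2
          omega
        interval_cases q <;> omega
      rw [if_neg hnd, zero_mul]
    · intro h
      exact absurd (Finset.mem_range.mpr (by omega)) h
  rw [Finset.sum_congr rfl step2]
  have reflect : (∑ i ∈ range (n + 1),
      -(x ^ (n - i) * (n.choose i : ZMod p) * (n.choose (n - i) : ZMod p)))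
      = ∑ k ∈ range (n + 1),
        -(x ^ k * (n.choose (n - k) : ZMod p) * (n.choose k : ZMod p)) := by
    have := Finset.sum_range_reflect
      (fun k => -(x ^ k * (n.choose (n - k) : ZMod p) * (n.choose k : ZMod p))) (n + 1)
    rw [← this]
    refine Finset.sum_congr rfl fun i hi => ?_
    have hi' : i ≤ n := by simpa using Nat.lt_succ_iff.mp (Finset.mem_range.mp hi)
    have h1 : n + 1 - 1 - i = n - i := by omega
    have h2 : n - (n - i) = i := by omega
    rw [h1, h2]
  rw [reflect]
  have last : ∀ k ∈ range (n + 1),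
      -(x ^ k * (n.choose (n - k) : ZMod p) * (n.choose k : ZMod p))
      = -((n.choose k : ZMod p) ^ 2 * x ^ k) := by
    intro k hk
    have hk' : k ≤ n := by simpa using Nat.lt_succ_iff.mp (Finset.mem_range.mp hk)
    rw [Nat.choose_symm hk']
    ring
  rw [Finset.sum_congr rfl last, Finset.sum_neg_distrib]

theorem stmt11 (p : ℕ) (hp : p.Prime) (hodd : p ≠ 2) (h8 : p % 8 = 1 ∨ p % 8 = 7)
    (P : ℕ → ℤ) (hP0 : P 0 = 0) (hP1 : P 1 = 1)
    (hPrec : ∀ n : ℕ, 1 ≤ n → P (n + 1) = 2 * P n + P (n - 1)) :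
    (∑ k ∈ Finset.range p,
      (P k : ZMod p) * (Nat.choose (2 * k) k : ZMod p) ^ 2 *
        (((-8 : ZMod p)) ^ k)⁻¹) = 0 := by
  classical
  haveI : Fact p.Prime := ⟨hp⟩
  have hp2 : 2 ≤ p := hp.two_le
  have hp3 : 3 ≤ p := by rcases hp2.lt_or_eq with h | h; omega; omega
  -- square root of 2
  obtain ⟨r, hr⟩ : IsSquare (2 : ZMod p) := (ZMod.exists_sq_eq_two_iff hodd).mpr h8
  have hr2 : r ^ 2 = 2 := by rw [sq]; exact hr.symm
  set n := (p - 1) / 2 with hn_def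

  have hpodd : p % 2 = 1 := (Nat.Prime.eq_two_or_odd hp).resolve_left hodd
  have h2n : 2 * n = p - 1 := by omega
  have hn1 : 1 ≤ n := by omega
  -- basic nonvanishing facts
  have h8ne : (-8 : ZMod p) ≠ 0 := by
    intro h
    have : ((8 : ℕ) : ZMod p) = 0 := by
      push_cast
      linear_combination -h
    rw [ZMod.natCast_eq_zero_iff] at this
    have := (Nat.Prime.dvd_of_dvd_pow hp (show p ∣ 2 ^ 3 by norm_num [this]))
    have := Nat.le_of_dvd (by norm_num) this
    omega
  have hcast2 : ((2 : ℕ) : ZMod p) = 2 := by push_cast; ring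
  have h2ne : (2 : ZMod p) ≠ 0 := by
    intro h
    rw [← hcast2, ZMod.natCast_eq_zero_iff] at h
    have := Nat.le_of_dvd (by norm_num) h
    omega
  have hrne : r ≠ 0 := by
    intro h
    rw [h] at hr2
    simp at hr2
    exact h2ne hr2.symm
  have h2rne : 2 * r ≠ 0 := mul_ne_zero h2ne hrne
  set a : ZMod p := 1 + r with ha_def
  set b : ZMod p := 1 - r with hb_def
  have hane : a ≠ 0 := by
    intro h
    have : r = -1 := by rw [ha_def] at h; linear_combination h
    rw [this] at hr2
    have : (1 : ZMod p) = 2 := by linear_combination hr2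
    have : ((1 : ℕ) : ZMod p) = ((2 : ℕ) : ZMod p) := by push_cast; linear_combination this
    rw [ZMod.natCast_eq_natCast_iff] at this
    have := (Nat.modEq_iff_dvd' (by norm_num)).mp this
    have := Nat.le_of_dvd (by norm_num) this
    omega
  have hbne : b ≠ 0 := by
    intro h
    have : r = 1 := by rw [hb_def] at h; linear_combination -h
    rw [this] at hr2
    have : (1 : ZMod p) = 2 := by linear_combination hr2
    have : ((1 : ℕ) : ZMod p) = ((2 : ℕ) : ZMod p) := by push_cast; linear_combination this
    rw [ZMod.natCast_eq_natCast_iff] at this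
    have := (Nat.modEq_iff_dvd' (by norm_num)).mp this
    have := Nat.le_of_dvd (by norm_num) this
    omega
  -- Pell closed form
  have hpell : ∀ k : ℕ, (P k : ZMod p) * (2 * r) = a ^ k - b ^ k := by
    have key : ∀ k : ℕ, (P k : ZMod p) * (2 * r) = a ^ k - b ^ k ∧
        (P (k + 1) : ZMod p) * (2 * r) = a ^ (k + 1) - b ^ (k + 1) := by
      intro k
      induction k with
      | zero =>
        constructor
        · rw [hP0]; push_cast; ring
        · rw [hP1]; push_cast; rw [ha_def, hb_def]; ring
      | succ k ih =>
        refine ⟨ih.2, ?_⟩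
        have hrec := hPrec (k + 1) (by omega)
        have h1 : (P (k + 1 + 1) : ZMod p) = 2 * (P (k + 1) : ZMod p) + (P k : ZMod p) := by
          rw [hrec]; push_cast; ring
        have ha2 : a ^ 2 = 2 * a + 1 := by rw [ha_def]; linear_combination hr2
        have hb2 : b ^ 2 = 2 * b + 1 := by rw [hb_def]; linear_combination hr2
        have hak : a ^ (k + 2) = 2 * a ^ (k + 1) + a ^ k := by
          have : a ^ (k + 2) = a ^ k * a ^ 2 := by ring
          rw [this, ha2]; ring
        have hbk : b ^ (k + 2) = 2 * b ^ (k + 1) + b ^ k := by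
          have : b ^ (k + 2) = b ^ k * b ^ 2 := by ring
          rw [this, hb2]; ring
        rw [h1, show k + 1 + 1 = k + 2 from rfl, hak, hbk]
        linear_combination 2 * ih.2 + ih.1
    exact fun k => (key k).1
  -- cast fact : 2 * n = -1 in ZMod p
  have hncast : 2 * ((n : ℕ) : ZMod p) = -1 := by
    have h1 : ((2 * n + 1 : ℕ) : ZMod p) = ((p : ℕ) : ZMod p) := by
      congr 1
      omega
    rw [ZMod.natCast_self] at h1
    push_cast at h1
    linear_combination h1
  -- binomial transform
  have hbin : ∀ k : ℕ, k ≤ n → (((2 * k).choose k : ℕ) : ZMod p)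
      = (-4) ^ k * ((n.choose k : ℕ) : ZMod p) := by
    intro k
    induction k with
    | zero => intro _; simp
    | succ k ih =>
      intro hk
      have hk' : k ≤ n := by omega
      have ihk := ih hk'
      have h1 : (k + 1) * (2 * (k + 1)).choose (k + 1) = 2 * (2 * k + 1) * ((2 * k).choose k) := by
        have := Nat.succ_mul_centralBinom_succ k
        simpa [Nat.centralBinom] using this
      have h2 : n.choose (k + 1) * (k + 1) = n.choose k * (n - k) := Nat.choose_succ_right_eq n k
      have hk1ne : ((k + 1 : ℕ) : ZMod p) ≠ 0 := by
        rw [Ne, ZMod.natCast_eq_zero_iff]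
        intro hdvd
        have := Nat.le_of_dvd (by omega) hdvd
        omega
      apply mul_right_cancel₀ hk1ne
      have H1 : (((2 * (k + 1)).choose (k + 1) : ℕ) : ZMod p) * ((k + 1 : ℕ) : ZMod p)
          = 2 * (2 * (k : ZMod p) + 1) * (((2 * k).choose k : ℕ) : ZMod p) := by
        have := congrArg (Nat.cast : ℕ → ZMod p) h1
        push_cast at this
        push_cast
        linear_combination this
      have H2 : ((n.choose (k + 1) : ℕ) : ZMod p) * ((k + 1 : ℕ) : ZMod p)
          = ((n.choose k : ℕ) : ZMod p) * (((n : ℕ) : ZMod p) - (k : ZMod p)) := by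
        have := congrArg (Nat.cast : ℕ → ZMod p) h2
        push_cast [Nat.cast_sub hk'] at this
        push_cast
        linear_combination this
      rw [H1, ihk]
      push_cast
      push_cast at H2
      linear_combination (-(-4 : ZMod p) ^ (k + 1)) * H2
        + 2 * ((-4 : ZMod p)) ^ k * ((n.choose k : ℕ) : ZMod p) * hncast
  -- Step A : truncate the sum
  have hAsub : Finset.range (n + 1) ⊆ Finset.range p := by
    intro k hk
    rw [Finset.mem_range] at *
    omega
  have hA : (∑ k ∈ Finset.range p,
        (P k : ZMod p) * (Nat.choose (2 * k) k : ZMod p) ^ 2 * (((-8 : ZMod p)) ^ k)⁻¹)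
      = ∑ k ∈ Finset.range (n + 1),
        (P k : ZMod p) * (Nat.choose (2 * k) k : ZMod p) ^ 2 * (((-8 : ZMod p)) ^ k)⁻¹ := by
    refine (Finset.sum_subset hAsub ?_).symm
    intro k hk hk'
    rw [Finset.mem_range] at hk hk'
    have hkn : n < k := by omega
    have hch : ((Nat.choose (2 * k) k : ℕ) : ZMod p) = 0 := by
      rw [ZMod.natCast_eq_zero_iff]
      have h2k : k ≤ 2 * k := by omega
      have hfac : (2 * k).choose k * k.factorial * (2 * k - k).factorial = (2 * k).factorial :=
        Nat.choose_mul_factorial_mul_factorial h2k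
      have hpd : p ∣ (2 * k).factorial := by
        rw [Nat.Prime.dvd_factorial hp]
        omega
      rw [← hfac] at hpd
      have hpk : ¬ p ∣ k.factorial := by
        rw [Nat.Prime.dvd_factorial hp]
        omega
      rcases (Nat.Prime.dvd_mul hp).mp hpd with h | h
      · rcases (Nat.Prime.dvd_mul hp).mp h with h | h
        · exact h
        · exact absurd h hpk
      · rw [show 2 * k - k = k by omega] at h
        exact absurd h hpk
    rw [hch]
    ring
  rw [hA]
  -- Step B : rewrite terms
  have hinv : (16 : ZMod p) * (-8 : ZMod p)⁻¹ = -2 := by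
    have h8' : (8 : ZMod p) ≠ 0 := fun h => h8ne (by rw [h, neg_zero])
    rw [inv_neg, mul_neg, neg_inj, show (16 : ZMod p) = 2 * 8 by norm_num, mul_assoc,
      mul_inv_cancel₀ h8', mul_one]
  have hB : ∀ k ∈ Finset.range (n + 1),
      (P k : ZMod p) * (Nat.choose (2 * k) k : ZMod p) ^ 2 * (((-8 : ZMod p)) ^ k)⁻¹
      = (P k : ZMod p) * ((n.choose k : ℕ) : ZMod p) ^ 2 * (-2 : ZMod p) ^ k := by
    intro k hk
    have hk' : k ≤ n := by simpa using Nat.lt_succ_iff.mp (Finset.mem_range.mp hk)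
    rw [hbin k hk']
    rw [← inv_pow]
    have : ((-4 : ZMod p) ^ k * ((n.choose k : ℕ) : ZMod p)) ^ 2
        = (16 : ZMod p) ^ k * ((n.choose k : ℕ) : ZMod p) ^ 2 := by
      rw [mul_pow, ← pow_mul, mul_comm k 2, pow_mul]
      norm_num
    rw [this]
    have h16 : (16 : ZMod p) ^ k * ((-8 : ZMod p)⁻¹) ^ k = (-2 : ZMod p) ^ k := by
      rw [← mul_pow, hinv]
    calc (P k : ZMod p) * ((16 : ZMod p) ^ k * ((n.choose k : ℕ) : ZMod p) ^ 2)
            * ((-8 : ZMod p)⁻¹) ^ k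
        = (P k : ZMod p) * ((n.choose k : ℕ) : ZMod p) ^ 2
            * ((16 : ZMod p) ^ k * ((-8 : ZMod p)⁻¹) ^ k) := by ring
      _ = _ := by rw [h16]
  rw [Finset.sum_congr rfl hB]
  -- Step C : multiply by 2r and use Pell closed form
  have hmain : (∑ k ∈ Finset.range (n + 1),
      (P k : ZMod p) * ((n.choose k : ℕ) : ZMod p) ^ 2 * (-2 : ZMod p) ^ k) * (2 * r) = 0 := by
    rw [Finset.sum_mul]
    have hterm : ∀ k ∈ Finset.range (n + 1),
        (P k : ZMod p) * ((n.choose k : ℕ) : ZMod p) ^ 2 * (-2 : ZMod p) ^ k * (2 * r)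
        = ((n.choose k : ℕ) : ZMod p) ^ 2 * (-2 * a) ^ k
          - ((n.choose k : ℕ) : ZMod p) ^ 2 * (-2 * b) ^ k := by
      intro k _
      have := hpell k
      calc (P k : ZMod p) * ((n.choose k : ℕ) : ZMod p) ^ 2 * (-2 : ZMod p) ^ k * (2 * r)
          = ((P k : ZMod p) * (2 * r)) * ((n.choose k : ℕ) : ZMod p) ^ 2
              * (-2 : ZMod p) ^ k := by ring
        _ = (a ^ k - b ^ k) * ((n.choose k : ℕ) : ZMod p) ^ 2 * (-2 : ZMod p) ^ k := by
              rw [this]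
        _ = ((n.choose k : ℕ) : ZMod p) ^ 2 * ((-2 : ZMod p) ^ k * a ^ k)
              - ((n.choose k : ℕ) : ZMod p) ^ 2 * ((-2 : ZMod p) ^ k * b ^ k) := by ring
        _ = _ := by rw [← mul_pow, ← mul_pow]
    rw [Finset.sum_congr rfl hterm, Finset.sum_sub_distrib]
    -- use auxG
    have hGa := auxG p n hn1 h2n (-2 * a)
    have hGb := auxG p n hn1 h2n (-2 * b)
    have hswap : (∑ t : ZMod p, (t * (1 + t) * (1 + (-2 * a) * t)) ^ n)
        = ∑ t : ZMod p, (t * (1 + t) * (1 + (-2 * b) * t)) ^ n := by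
      let e : ZMod p ≃ ZMod p :=
        Function.Involutive.toPerm (fun s => -1 - s) (fun s => by ring)
      refine (Fintype.sum_equiv e _ _ fun s => ?_).symm
      have he : e s = -1 - s := rfl
      rw [he]
      have hid : (-1 - s) * (1 + (-1 - s)) * (1 + (-2 * a) * (-1 - s))
          = a ^ 2 * (s * (1 + s) * (1 + (-2 * b) * s)) := by
        rw [ha_def, hb_def]
        linear_combination (-2*r*s^2 - 2*r*s^3 - 3*s^2 - 2*s^3 - s) * hr2
      calc (s * (1 + s) * (1 + (-2 * b) * s)) ^ n
          = (a ^ 2) ^ n * (s * (1 + s) * (1 + (-2 * b) * s)) ^ n := by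
            rw [← pow_mul, show 2 * n = p - 1 from h2n, ZMod.pow_card_sub_one_eq_one hane,
              one_mul]
        _ = (a ^ 2 * (s * (1 + s) * (1 + (-2 * b) * s))) ^ n := (mul_pow _ _ n).symm
        _ = ((-1 - s) * (1 + (-1 - s)) * (1 + (-2 * a) * (-1 - s))) ^ n := by rw [hid]
    have : (∑ k ∈ Finset.range (n + 1), ((n.choose k : ℕ) : ZMod p) ^ 2 * (-2 * a) ^ k)
        = ∑ k ∈ Finset.range (n + 1), ((n.choose k : ℕ) : ZMod p) ^ 2 * (-2 * b) ^ k := by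
      have := hGa.symm.trans (hswap.trans hGb)
      exact neg_injective this
    rw [this, sub_self]
  rcases mul_eq_zero.mp hmain with h | h
  · exact h
  · exact absurd h h2rne
end
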